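/- arXiv:1409.1676 — 7 statements merged into one kernel-verified Lean document; each statement's English description precedes it below -/
import Mathlib

section
/- Let G be a finite simple graph and D ⊆ V a subset of its vertices. Then D is an efficient dominating set of G if and only if D is an independent set in the square G² and the sum over all v ∈ D of (deg_G(v) + 1) equals |V|. -/
/-- The square of a graph `G`: two distinct vertices are adjacent in `G²` iff
their distance in `G` is 1 or 2. -/
def SimpleGraph.square {V : Type*} (G : SimpleGraph V) : SimpleGraph V where
  Adj u v := u ≠ v ∧ G.edist u v ≤ 2
  symm := ⟨fun u v ⟨h, hd⟩ => ⟨h.symm, by rwa [SimpleGraph.edist_comm]⟩⟩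
  loopless := ⟨fun u ⟨h, _⟩ => h rfl⟩

/-- `D` is an efficient dominating set of `G`: `D` is an independent set and
every vertex outside `D` has exactly one neighbor in `D`. -/
def SimpleGraph.IsEfficientDominatingSet {V : Type*} (G : SimpleGraph V) (D : Set V) : Prop :=
  (∀ u ∈ D, ∀ v ∈ D, ¬ G.Adj u v) ∧ ∀ v ∉ D, ∃! u, u ∈ D ∧ G.Adj v u

/-- The banner: a chordless 4-cycle 0-1-2-3-0 together with the vertex 4
adjacent to exactly one vertex (namely 0) of the cycle. -/
def banner : SimpleGraph (Fin 5) :=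
  SimpleGraph.fromEdgeSet {s(0, 1), s(1, 2), s(2, 3), s(3, 0), s(0, 4)}

/-- `G` is `H`-free: no induced subgraph of `G` is isomorphic to `H`. -/
def IsInducedFree {W V : Type*} (H : SimpleGraph W) (G : SimpleGraph V) : Prop :=
  IsEmpty (H ↪g G)

section Helpers
set_option linter.unusedSectionVars false
open Finset SimpleGraph

variable {V : Type*} [Fintype V] [DecidableEq V] (G : SimpleGraph V) [DecidableRel G.Adj]

/-- closed neighborhood finset -/
private def Ncl (v : V) : Finset V := insert v (G.neighborFinset v)

lemma mem_Ncl {v x : V} : x ∈ Ncl G v ↔ x = v ∨ G.Adj v x := by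
  simp [Ncl, SimpleGraph.mem_neighborFinset]

lemma card_Ncl (v : V) : (Ncl G v).card = G.degree v + 1 := by
  rw [Ncl, Finset.card_insert_of_notMem (by simp), SimpleGraph.card_neighborFinset_eq_degree]

lemma edist_le_one_of_mem_Ncl {v x : V} (h : x ∈ Ncl G v) : G.edist v x ≤ 1 := by
  rw [mem_Ncl] at h
  rcases h with rfl | h
  · simp [SimpleGraph.edist_self]
  · exact le_of_eq (SimpleGraph.edist_eq_one_iff_adj.mpr h)

lemma edist_le_two_iff {u v : V} :
    G.edist u v ≤ 2 ↔ u = v ∨ G.Adj u v ∨ ∃ w, G.Adj u w ∧ G.Adj w v := by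
  constructor
  · intro h
    obtain ⟨p, hp⟩ := SimpleGraph.exists_walk_of_edist_ne_top (by
      intro ht; rw [ht] at h; exact absurd h (by simp))
    have hl : p.length ≤ 2 := by
      have := hp ▸ h
      exact_mod_cast this
    match p with
    | .nil => exact Or.inl rfl
    | .cons h1 .nil => exact Or.inr (Or.inl h1)
    | .cons h1 (.cons h2 .nil) => exact Or.inr (Or.inr ⟨_, h1, h2⟩)
    | .cons _ (.cons _ (.cons _ q)) => simp [SimpleGraph.Walk.length_cons] at hl
  · rintro (rfl | h | ⟨w, h1, h2⟩)
    · simp [SimpleGraph.edist_self]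
    · calc G.edist u v ≤ 1 := le_of_eq (SimpleGraph.edist_eq_one_iff_adj.mpr h)
        _ ≤ 2 := by norm_num
    · calc G.edist u v ≤ G.edist u w + G.edist w v := SimpleGraph.edist_triangle
        _ ≤ 1 + 1 := add_le_add (le_of_eq (SimpleGraph.edist_eq_one_iff_adj.mpr h1)) (le_of_eq (SimpleGraph.edist_eq_one_iff_adj.mpr h2))
        _ = 2 := by norm_num

end Helpers

theorem eds_iff_square_indep_weight {V : Type*} [Fintype V] [DecidableEq V]
    (G : SimpleGraph V) [DecidableRel G.Adj] (D : Finset V) :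
    G.IsEfficientDominatingSet ↑D ↔
      ((∀ u ∈ D, ∀ v ∈ D, ¬ G.square.Adj u v) ∧
        ∑ v ∈ D, (G.degree v + 1) = Fintype.card V) := by
  have hdisj : (∀ u ∈ D, ∀ v ∈ D, ¬ G.square.Adj u v) →
      ∀ u ∈ D, ∀ v ∈ D, u ≠ v → Disjoint (Ncl G u) (Ncl G v) := by
    intro hsq u hu v hv hne
    rw [Finset.disjoint_left]
    intro x hxu hxv
    exact hsq u hu v hv ⟨hne, le_trans SimpleGraph.edist_triangle
      (le_trans (add_le_add (edist_le_one_of_mem_Ncl G hxu)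
        ((SimpleGraph.edist_comm ▸ edist_le_one_of_mem_Ncl G hxv : G.edist x v ≤ 1)))
        (by norm_num))⟩
  constructor
  · rintro ⟨hind, huniq⟩
    have hsq : ∀ u ∈ D, ∀ v ∈ D, ¬ G.square.Adj u v := by
      rintro u hu v hv ⟨hne, hd⟩
      rcases (edist_le_two_iff G).1 hd with rfl | hadj | ⟨w, h1, h2⟩
      · exact hne rfl
      · exact hind u hu v hv hadj
      · have hwD : w ∉ (↑D : Set V) := fun hw => hind u hu w hw h1
        obtain ⟨x, _, hx_uniq⟩ := huniq w hwD
        exact hne ((hx_uniq u ⟨hu, h1.symm⟩).trans (hx_uniq v ⟨hv, h2⟩).symm)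
    refine ⟨hsq, ?_⟩
    have hcover : D.biUnion (Ncl G) = Finset.univ := by
      ext x; simp only [Finset.mem_biUnion, Finset.mem_univ, iff_true]
      by_cases hx : x ∈ D
      · exact ⟨x, hx, by simp [mem_Ncl]⟩
      · obtain ⟨u, ⟨hu, hadj⟩, -⟩ := huniq x hx
        exact ⟨u, hu, (mem_Ncl G).2 (Or.inr hadj.symm)⟩
    calc ∑ v ∈ D, (G.degree v + 1) = ∑ v ∈ D, (Ncl G v).card := by simp [card_Ncl]
      _ = (D.biUnion (Ncl G)).card := (Finset.card_biUnion (hdisj hsq)).symm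
      _ = Fintype.card V := by rw [hcover, Finset.card_univ]
  · rintro ⟨hsq, hsum⟩
    have hd := hdisj hsq
    have hcard : (D.biUnion (Ncl G)).card = Fintype.card V := by
      rw [Finset.card_biUnion hd]; simpa [card_Ncl] using hsum
    have hcover : D.biUnion (Ncl G) = Finset.univ := Finset.eq_univ_of_card _ hcard
    constructor
    · intro u hu v hv hadj
      exact hsq u hu v hv ⟨hadj.ne, (edist_le_two_iff G).2 (Or.inr (Or.inl hadj))⟩
    · intro v hv
      have hvmem : v ∈ D.biUnion (Ncl G) := hcover ▸ Finset.mem_univ v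
      obtain ⟨u, hu, hvu⟩ := Finset.mem_biUnion.1 hvmem
      rcases (mem_Ncl G).1 hvu with rfl | hadj
      · exact absurd hu hv
      refine ⟨u, ⟨hu, hadj.symm⟩, ?_⟩
      rintro x ⟨hx, hvx⟩
      by_contra hne
      exact Finset.disjoint_left.1 (hd x hx u hu hne) ((mem_Ncl G).2 (Or.inr hvx.symm)) hvu
end

section
/- Under the Case 1 configuration of the path-in-square setting (v5v6 ∈ E, dist_G(v3,v4) = 2, and vertices d, c, b, a with dv4, dv5, cv3, cv4, cd, bv2, bv3, bc, bd, av1, av2, ab, ad all edges of G), none of the vertices a, v2, b belongs to D. -/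
section Helpers
variable {V : Type*} {G : SimpleGraph V}

private lemma far1 {x y : V} (h3 : 3 ≤ G.edist x y) (h : G.Adj x y) : False := by
  rw [← SimpleGraph.edist_eq_one_iff_adj] at h
  rw [h] at h3
  norm_num at h3

private lemma far2 {x y z : V} (h3 : 3 ≤ G.edist x y) (h1 : G.Adj x z) (h2 : G.Adj z y) :
    False := by
  rw [← SimpleGraph.edist_eq_one_iff_adj] at h1 h2
  have t := G.edist_triangle (u := x) (v := z) (w := y)
  rw [h1, h2] at t
  have := h3.trans t
  norm_num at this

private lemma farne {x y : V} (h3 : 3 ≤ G.edist x y) : x ≠ y := by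
  rintro rfl
  rw [G.edist_self] at h3
  norm_num at h3

private lemma uniq_dom {D : Set V} (hD : G.IsEfficientDominatingSet D) {v x y : V}
    (hv : v ∉ D) (hx : x ∈ D) (hax : G.Adj v x) (hy : y ∈ D) (hay : G.Adj v y) : x = y := by
  obtain ⟨w, -, hU⟩ := hD.2 v hv
  exact (hU x ⟨hx, hax⟩).trans (hU y ⟨hy, hay⟩).symm

set_option maxRecDepth 8000 in
set_option maxHeartbeats 1000000 in
private lemma no_P6 (hP6 : IsInducedFree (SimpleGraph.pathGraph 6) G)
    (x0 x1 x2 x3 x4 x5 : V)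
    (a01 : G.Adj x0 x1) (a12 : G.Adj x1 x2) (a23 : G.Adj x2 x3)
    (a34 : G.Adj x3 x4) (a45 : G.Adj x4 x5)
    (n02 : ¬G.Adj x0 x2) (n03 : ¬G.Adj x0 x3) (n04 : ¬G.Adj x0 x4) (n05 : ¬G.Adj x0 x5)
    (n13 : ¬G.Adj x1 x3) (n14 : ¬G.Adj x1 x4) (n15 : ¬G.Adj x1 x5)
    (n24 : ¬G.Adj x2 x4) (n25 : ¬G.Adj x2 x5) (n35 : ¬G.Adj x3 x5)
    (d02 : x0 ≠ x2) (d03 : x0 ≠ x3) (d04 : x0 ≠ x4) (d05 : x0 ≠ x5)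
    (d13 : x1 ≠ x3) (d14 : x1 ≠ x4) (d15 : x1 ≠ x5)
    (d24 : x2 ≠ x4) (d25 : x2 ≠ x5) (d35 : x3 ≠ x5) : False := by
  have d01 := a01.ne; have d12 := a12.ne; have d23 := a23.ne
  have d34 := a34.ne; have d45 := a45.ne
  have s01 := a01.symm; have s12 := a12.symm; have s23 := a23.symm
  have s34 := a34.symm; have s45 := a45.symm
  have e01 := d01.symm; have e12 := d12.symm; have e23 := d23.symm
  have e34 := d34.symm; have e45 := d45.symm
  have e02 := d02.symm; have e03 := d03.symm; have e04 := d04.symm; have e05 := d05.symm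
  have e13 := d13.symm; have e14 := d14.symm; have e15 := d15.symm
  have e24 := d24.symm; have e25 := d25.symm; have e35 := d35.symm
  have n20 : ¬G.Adj x2 x0 := fun h => n02 h.symm
  have n30 : ¬G.Adj x3 x0 := fun h => n03 h.symm
  have n40 : ¬G.Adj x4 x0 := fun h => n04 h.symm
  have n50 : ¬G.Adj x5 x0 := fun h => n05 h.symm
  have n31 : ¬G.Adj x3 x1 := fun h => n13 h.symm
  have n41 : ¬G.Adj x4 x1 := fun h => n14 h.symm
  have n51 : ¬G.Adj x5 x1 := fun h => n15 h.symm
  have n42 : ¬G.Adj x4 x2 := fun h => n24 h.symm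
  have n52 : ¬G.Adj x5 x2 := fun h => n25 h.symm
  have n53 : ¬G.Adj x5 x3 := fun h => n35 h.symm
  apply hP6.false
  let f : Fin 6 → V := fun i => match i with
    | 0 => x0 | 1 => x1 | 2 => x2 | 3 => x3 | 4 => x4 | 5 => x5
  refine ⟨⟨f, ?_⟩, ?_⟩
  · intro u v huv
    fin_cases u <;> fin_cases v <;>
      first
        | rfl
        | exact absurd huv (by assumption)
  · intro u v
    fin_cases u <;> fin_cases v <;> rw [SimpleGraph.pathGraph_adj] <;>
      first
        | exact iff_of_true (by assumption) (by decide)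
        | exact iff_of_false (by assumption) (by decide)
        | exact iff_of_false (G.irrefl) (by decide)

set_option maxRecDepth 8000 in
set_option maxHeartbeats 1000000 in
private lemma no_banner (hB : IsInducedFree banner G)
    (y0 y1 y2 y3 y4 : V)
    (a01 : G.Adj y0 y1) (a12 : G.Adj y1 y2) (a23 : G.Adj y2 y3)
    (a30 : G.Adj y3 y0) (a04 : G.Adj y0 y4)
    (n02 : ¬G.Adj y0 y2) (n13 : ¬G.Adj y1 y3) (n14 : ¬G.Adj y1 y4)
    (n24 : ¬G.Adj y2 y4) (n34 : ¬G.Adj y3 y4)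
    (d02 : y0 ≠ y2) (d13 : y1 ≠ y3) (d14 : y1 ≠ y4)
    (d24 : y2 ≠ y4) (d34 : y3 ≠ y4) : False := by
  have d01 := a01.ne; have d12 := a12.ne; have d23 := a23.ne
  have d30 := a30.ne; have d04 := a04.ne
  have s01 := a01.symm; have s12 := a12.symm; have s23 := a23.symm
  have s30 := a30.symm; have s04 := a04.symm
  have e01 := d01.symm; have e12 := d12.symm; have e23 := d23.symm
  have e30 := d30.symm; have e04 := d04.symm
  have e02 := d02.symm; have e13 := d13.symm; have e14 := d14.symm
  have e24 := d24.symm; have e34 := d34.symm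
  have n20 : ¬G.Adj y2 y0 := fun h => n02 h.symm
  have n31 : ¬G.Adj y3 y1 := fun h => n13 h.symm
  have n41 : ¬G.Adj y4 y1 := fun h => n14 h.symm
  have n42 : ¬G.Adj y4 y2 := fun h => n24 h.symm
  have n43 : ¬G.Adj y4 y3 := fun h => n34 h.symm
  apply hB.false
  let f : Fin 5 → V := fun i => match i with
    | 0 => y0 | 1 => y1 | 2 => y2 | 3 => y3 | 4 => y4
  refine ⟨⟨f, ?_⟩, ?_⟩
  · intro u v huv
    fin_cases u <;> fin_cases v <;>
      first
        | rfl
        | exact absurd huv (by assumption)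
  · intro u v
    fin_cases u <;> fin_cases v <;>
      simp only [banner, SimpleGraph.fromEdgeSet_adj, Set.mem_insert_iff,
        Set.mem_singleton_iff] <;>
      first
        | exact iff_of_true (by assumption) (by decide)
        | exact iff_of_false (by assumption) (by decide)
        | exact iff_of_false (G.irrefl) (by decide)

end Helpers

theorem path_case1_a_v2_b_notin_D {V : Type*} [Fintype V] (G : SimpleGraph V)
    (hP6 : IsInducedFree (SimpleGraph.pathGraph 6) G)
    (hBanner : IsInducedFree banner G)
    (D : Set V) (hD : G.IsEfficientDominatingSet D)
    (v1 v2 v3 v4 v5 v6 : V)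
    (h12 : G.edist v1 v2 ≤ 2) (h23 : G.edist v2 v3 ≤ 2) (h34 : G.edist v3 v4 ≤ 2)
    (h45 : G.edist v4 v5 ≤ 2) (h56 : G.edist v5 v6 ≤ 2)
    (h13 : 3 ≤ G.edist v1 v3) (h14 : 3 ≤ G.edist v1 v4) (h15 : 3 ≤ G.edist v1 v5)
    (h16 : 3 ≤ G.edist v1 v6) (h24 : 3 ≤ G.edist v2 v4) (h25 : 3 ≤ G.edist v2 v5)
    (h26 : 3 ≤ G.edist v2 v6) (h35 : 3 ≤ G.edist v3 v5) (h36 : 3 ≤ G.edist v3 v6)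
    (h46 : 3 ≤ G.edist v4 v6)
    (hv5v6 : G.Adj v5 v6) (hdist34 : G.edist v3 v4 = 2)
    (d c b a : V)
    (hdv4 : G.Adj d v4) (hdv5 : G.Adj d v5) (hcv3 : G.Adj c v3) (hcv4 : G.Adj c v4)
    (hcd : G.Adj c d) (hbv2 : G.Adj b v2) (hbv3 : G.Adj b v3) (hbc : G.Adj b c)
    (hbd : G.Adj b d) (hav1 : G.Adj a v1) (hav2 : G.Adj a v2) (hab : G.Adj a b)
    (had : G.Adj a d)
    : a ∉ D ∧ v2 ∉ D ∧ b ∉ D := by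
  -- basic non-adjacency facts forced by the distance hypotheses
  have nv1v3 : ¬G.Adj v1 v3 := fun h => far1 h13 h
  have nv1v4 : ¬G.Adj v1 v4 := fun h => far1 h14 h
  have nv1v5 : ¬G.Adj v1 v5 := fun h => far1 h15 h
  have nv1v6 : ¬G.Adj v1 v6 := fun h => far1 h16 h
  have nv2v4 : ¬G.Adj v2 v4 := fun h => far1 h24 h
  have nv2v5 : ¬G.Adj v2 v5 := fun h => far1 h25 h
  have nv2v6 : ¬G.Adj v2 v6 := fun h => far1 h26 h
  have nv3v5 : ¬G.Adj v3 v5 := fun h => far1 h35 h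
  have nv3v6 : ¬G.Adj v3 v6 := fun h => far1 h36 h
  have nv4v6 : ¬G.Adj v4 v6 := fun h => far1 h46 h
  have nv3v4 : ¬G.Adj v3 v4 := by
    intro h
    rw [← SimpleGraph.edist_eq_one_iff_adj] at h
    rw [h] at hdist34
    norm_num at hdist34
  have nav3 : ¬G.Adj a v3 := fun h => far2 h13 hav1.symm h
  have nav4 : ¬G.Adj a v4 := fun h => far2 h14 hav1.symm h
  have nav5 : ¬G.Adj a v5 := fun h => far2 h15 hav1.symm h
  have nav6 : ¬G.Adj a v6 := fun h => far2 h16 hav1.symm h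
  have nbv1 : ¬G.Adj b v1 := fun h => far2 h13 h.symm hbv3
  have nbv4 : ¬G.Adj b v4 := fun h => far2 h24 hbv2.symm h
  have nbv5 : ¬G.Adj b v5 := fun h => far2 h25 hbv2.symm h
  have nbv6 : ¬G.Adj b v6 := fun h => far2 h26 hbv2.symm h
  have ncv1 : ¬G.Adj c v1 := fun h => far2 h13 h.symm hcv3
  have ncv2 : ¬G.Adj c v2 := fun h => far2 h24 h.symm hcv4
  have ncv5 : ¬G.Adj c v5 := fun h => far2 h35 hcv3.symm h
  have ncv6 : ¬G.Adj c v6 := fun h => far2 h36 hcv3.symm h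
  have ndv1 : ¬G.Adj d v1 := fun h => far2 h14 h.symm hdv4
  have ndv2 : ¬G.Adj d v2 := fun h => far2 h24 h.symm hdv4
  have ndv3 : ¬G.Adj d v3 := fun h => far2 h35 h.symm hdv5
  have ndv6 : ¬G.Adj d v6 := fun h => far2 h46 hdv4.symm h
  -- distinctness facts
  have dv1v3 : v1 ≠ v3 := farne h13
  have dv1v4 : v1 ≠ v4 := farne h14
  have dv1v5 : v1 ≠ v5 := farne h15
  have dv1v6 : v1 ≠ v6 := farne h16
  have dv2v4 : v2 ≠ v4 := farne h24
  have dv2v5 : v2 ≠ v5 := farne h25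
  have dv2v6 : v2 ≠ v6 := farne h26
  have dv3v5 : v3 ≠ v5 := farne h35
  have dv3v6 : v3 ≠ v6 := farne h36
  have dv4v6 : v4 ≠ v6 := farne h46
  have dv3v4 : v3 ≠ v4 := by
    intro h
    rw [h, G.edist_self] at hdist34
    norm_num at hdist34
  have dv1v2 : v1 ≠ v2 := by
    intro h
    rw [h] at h13
    exact absurd (h13.trans h23) (by norm_num)
  have dv1b : v1 ≠ b := by
    intro h; exact far1 h13 (by rw [h]; exact hbv3)
  have dv1c : v1 ≠ c := by
    intro h; exact far1 h13 (by rw [h]; exact hcv3)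
  have dv1d : v1 ≠ d := by
    intro h; exact far1 h14 (by rw [h]; exact hdv4)
  have dv2d : v2 ≠ d := by
    intro h; exact far1 h24 (by rw [h]; exact hdv4)
  have dbv4 : b ≠ v4 := by
    intro h; exact far1 h24 (by rw [← h]; exact hbv2.symm)
  have dbv5 : b ≠ v5 := by
    intro h; exact far1 h25 (by rw [← h]; exact hbv2.symm)
  have dbv6 : b ≠ v6 := by
    intro h; exact far1 h26 (by rw [← h]; exact hbv2.symm)
  have dcv5 : c ≠ v5 := by
    intro h; exact far1 h35 (by rw [← h]; exact hcv3.symm)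
  have dcv6 : c ≠ v6 := by
    intro h; exact far1 h36 (by rw [← h]; exact hcv3.symm)
  have ddv6 : d ≠ v6 := by
    intro h; exact far1 h46 (by rw [← h]; exact hdv4.symm)
  have dav3 : a ≠ v3 := by
    intro h; exact far1 h13 (by rw [← h]; exact hav1.symm)
  have dav4 : a ≠ v4 := by
    intro h; exact far1 h14 (by rw [← h]; exact hav1.symm)
  have dav5 : a ≠ v5 := by
    intro h; exact far1 h15 (by rw [← h]; exact hav1.symm)
  have dav6 : a ≠ v6 := by
    intro h; exact far1 h16 (by rw [← h]; exact hav1.symm)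
  have dv3d : v3 ≠ d := by
    intro h; exact far1 h35 (by rw [h]; exact hdv5)
  -- v1 and v2 are non-adjacent, else v1-v2-b-d-v5-v6 is an induced P6
  have nv1v2 : ¬G.Adj v1 v2 := by
    intro h
    exact no_P6 hP6 v1 v2 b d v5 v6 h hbv2.symm hbd hdv5 hv5v6
      (fun hh => nbv1 hh.symm) (fun hh => ndv1 hh.symm) nv1v5 nv1v6
      (fun hh => ndv2 hh.symm) nv2v5 nv2v6 nbv5 nbv6 ndv6
      dv1b dv1d dv1v5 dv1v6 dv2d dv2v5 dv2v6 dbv5 dbv6 ddv6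
  constructor
  · -- a ∉ D
    intro haD
    have hbD : b ∉ D := fun h => hD.1 a haD b h hab
    have hdD : d ∉ D := fun h => hD.1 a haD d h had
    have hv2D : v2 ∉ D := fun h => hD.1 a haD v2 h hav2
    have hv1D : v1 ∉ D := fun h => hD.1 a haD v1 h hav1
    have hcD : c ∉ D := by
      intro h
      have hca : c = a := uniq_dom hD hdD h hcd.symm haD had.symm
      exact nav3 (by rw [← hca]; exact hcv3)
    have hv3D : v3 ∉ D := by
      intro h
      have h3a : v3 = a := uniq_dom hD hbD h hbv3 haD hab.symm
      exact far1 h13 (by rw [h3a]; exact hav1.symm)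
    have hv4D : v4 ∉ D := by
      intro h
      have h4a : v4 = a := uniq_dom hD hdD h hdv4 haD had.symm
      exact far1 h14 (by rw [h4a]; exact hav1.symm)
    obtain ⟨z, ⟨hzD, hzadj⟩, -⟩ := hD.2 v3 hv3D
    have hza : z ≠ a := by
      intro h; rw [h] at hzadj; exact nav3 hzadj.symm
    have hzb : ¬G.Adj z b := fun h => hza (uniq_dom hD hbD hzD h.symm haD hab.symm)
    have hzd : ¬G.Adj z d := fun h => hza (uniq_dom hD hdD hzD h.symm haD had.symm)
    have hzv1 : ¬G.Adj z v1 := fun h => far2 h13 h.symm hzadj.symm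
    have hzv5 : ¬G.Adj z v5 := fun h => far2 h35 hzadj h
    have hzv6 : ¬G.Adj z v6 := fun h => far2 h36 hzadj h
    have dzc : z ≠ c := fun h => hcD (by rw [← h]; exact hzD)
    have dzd : z ≠ d := fun h => hdD (by rw [← h]; exact hzD)
    have dzv5 : z ≠ v5 := by
      intro h; rw [h] at hzadj; exact far1 h35 hzadj
    have dzv6 : z ≠ v6 := by
      intro h; rw [h] at hzadj; exact far1 h36 hzadj
    have hzc : G.Adj z c := by
      by_contra hzc
      exact no_P6 hP6 z v3 c d v5 v6 hzadj.symm hcv3.symm hcd hdv5 hv5v6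
        hzc hzd hzv5 hzv6 (fun h => ndv3 h.symm) nv3v5 nv3v6 ncv5 ncv6 ndv6
        dzc dzd dzv5 dzv6 dv3d dv3v5 dv3v6 dcv5 dcv6 ddv6
    have hzv4 : ¬G.Adj z v4 := by
      intro h
      have dv1z : v1 ≠ z := fun hh => hv1D (by rw [hh]; exact hzD)
      have dbz : b ≠ z := fun hh => hbD (by rw [hh]; exact hzD)
      exact no_P6 hP6 v1 a b v3 z v4 hav1.symm hab hbv3 hzadj h
        (fun hh => nbv1 hh.symm) nv1v3 (fun hh => hzv1 hh.symm) nv1v4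
        nav3 (hD.1 a haD z hzD) nav4
        (fun hh => hzb hh.symm) nbv4 nv3v4
        dv1b dv1v3 dv1z dv1v4 dav3 hza.symm dav4 dbz dbv4 dv3v4
    obtain ⟨t, ⟨htD, htadj⟩, -⟩ := hD.2 v4 hv4D
    have hta : t ≠ a := by
      intro h; rw [h] at htadj; exact nav4 htadj.symm
    have htb : ¬G.Adj t b := fun h => hta (uniq_dom hD hbD htD h.symm haD hab.symm)
    have htc : ¬G.Adj t c := by
      intro h
      have htz : t = z := uniq_dom hD hcD htD h.symm hzD hzc.symm
      rw [htz] at htadj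
      exact hzv4 htadj.symm
    have htv1 : ¬G.Adj t v1 := fun h => far2 h14 h.symm htadj.symm
    have dtc : t ≠ c := fun h => hcD (by rw [← h]; exact htD)
    have dtb : t ≠ b := fun h => hbD (by rw [← h]; exact htD)
    have dtv1 : t ≠ v1 := fun h => hv1D (by rw [← h]; exact htD)
    have dca : c ≠ a := fun h => hcD (by rw [h]; exact haD)
    have hac : G.Adj a c := by
      by_contra hac
      exact no_P6 hP6 t v4 c b a v1 htadj.symm hcv4.symm hbc.symm hab.symm hav1
        htc htb (fun h => hD.1 a haD t htD h.symm) htv1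
        (fun h => nbv4 h.symm) (fun h => nav4 h.symm) (fun h => nv1v4 h.symm)
        (fun h => hac h.symm) ncv1 nbv1
        dtc dtb hta dtv1 dbv4.symm dav4.symm dv1v4.symm dca dv1c.symm dv1b.symm
    have haz : a = z := uniq_dom hD hcD haD hac.symm hzD hzc.symm
    exact hza haz.symm
  constructor
  · -- v2 ∉ D
    intro hv2D
    have haD : a ∉ D := fun h => hD.1 v2 hv2D a h hav2.symm
    have hbD : b ∉ D := fun h => hD.1 v2 hv2D b h hbv2.symm
    have hdD : d ∉ D := by
      intro h
      have hd2 : d = v2 := uniq_dom hD haD h had hv2D hav2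
      exact far1 h24 (by rw [← hd2]; exact hdv4)
    have hv1D : v1 ∉ D := by
      intro h
      have h12' : v1 = v2 := uniq_dom hD haD h hav1 hv2D hav2
      exact dv1v2 h12'
    obtain ⟨p, ⟨hpD, hpadj⟩, -⟩ := hD.2 v1 hv1D
    have hpv2 : p ≠ v2 := by
      intro h; rw [h] at hpadj; exact nv1v2 hpadj
    have hpa : ¬G.Adj p a := fun h => hpv2 (uniq_dom hD haD hpD h.symm hv2D hav2)
    have hpv5 : ¬G.Adj p v5 := fun h => far2 h15 hpadj h
    have hpv6 : ¬G.Adj p v6 := fun h => far2 h16 hpadj h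
    have dpa : p ≠ a := fun h => haD (by rw [← h]; exact hpD)
    have dpd : p ≠ d := fun h => hdD (by rw [← h]; exact hpD)
    have dpv5 : p ≠ v5 := by
      intro h; rw [h] at hpadj; exact far1 h15 hpadj
    have dpv6 : p ≠ v6 := by
      intro h; rw [h] at hpadj; exact far1 h16 hpadj
    have hpd : ¬G.Adj p d := by
      intro hpd
      exact no_banner hBanner a v1 p d v2 hav1 hpadj hpd had.symm hav2
        (fun h => hpa h.symm) (fun h => ndv1 h.symm) nv1v2
        (hD.1 p hpD v2 hv2D) ndv2
        dpa.symm dv1d dv1v2 hpv2 dv2d.symm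
    exact no_P6 hP6 p v1 a d v5 v6 hpadj.symm hav1.symm had hdv5 hv5v6
      hpa hpd hpv5 hpv6 (fun h => ndv1 h.symm) nv1v5 nv1v6 nav5 nav6 ndv6
      dpa dpd dpv5 dpv6 dv1d dv1v5 dv1v6 dav5 dav6 ddv6
  · -- b ∉ D
    intro hbD
    have haD : a ∉ D := fun h => hD.1 b hbD a h hab.symm
    have hdD : d ∉ D := fun h => hD.1 b hbD d h hbd
    have hv1D : v1 ∉ D := by
      intro h
      have h1b : v1 = b := uniq_dom hD haD h hav1 hbD hab
      exact far1 h13 (by rw [h1b]; exact hbv3)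
    obtain ⟨p, ⟨hpD, hpadj⟩, -⟩ := hD.2 v1 hv1D
    have hpb : p ≠ b := by
      intro h; rw [h] at hpadj; exact nbv1 hpadj.symm
    have hpa : ¬G.Adj p a := fun h => hpb (uniq_dom hD haD hpD h.symm hbD hab)
    have hpd : ¬G.Adj p d := fun h => hpb (uniq_dom hD hdD hpD h.symm hbD hbd.symm)
    have hpv5 : ¬G.Adj p v5 := fun h => far2 h15 hpadj h
    have hpv6 : ¬G.Adj p v6 := fun h => far2 h16 hpadj h
    have dpa : p ≠ a := fun h => haD (by rw [← h]; exact hpD)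
    have dpd : p ≠ d := fun h => hdD (by rw [← h]; exact hpD)
    have dpv5 : p ≠ v5 := by
      intro h; rw [h] at hpadj; exact far1 h15 hpadj
    have dpv6 : p ≠ v6 := by
      intro h; rw [h] at hpadj; exact far1 h16 hpadj
    exact no_P6 hP6 p v1 a d v5 v6 hpadj.symm hav1.symm had hdv5 hv5v6
      hpa hpd hpv5 hpv6 (fun h => ndv1 h.symm) nv1v5 nv1v6 nav5 nav6 ndv6
      dpa dpd dpv5 dpv6 dv1d dv1v5 dv1v6 dav5 dav6 ddv6
end

section
/- Under the Case 1 configuration of the path-in-square setting (v5v6 ∈ E, dist_G(v3,v4) = 2, and vertices d, c, b, a with dv4, dv5, cv3, cv4, cd, bv2, bv3, bc, bd, av1, av2, ab, ad all edges of G), if v2' ∈ D is adjacent to v2, a and b, and v1' ∈ D is adjacent to v1, then v1' ≠ v2' (equivalently, v2' is not adjacent to v1). -/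
section Aux
variable {V : Type*} {G : SimpleGraph V}

private lemma far_aux {u v z : V} (h3 : 3 ≤ G.edist u v) (h1 : G.Adj u z) (h2 : G.Adj z v) :
    False := by
  have := G.edist_triangle (v := z) (u := u) (w := v)
  rw [SimpleGraph.edist_eq_one_iff_adj.mpr h1, SimpleGraph.edist_eq_one_iff_adj.mpr h2] at this
  have h2' : G.edist u v ≤ 2 := le_trans this (by norm_num)
  have := le_trans h3 h2'
  norm_num at this

private lemma far_not_adj {u v : V} (h3 : 3 ≤ G.edist u v) : ¬ G.Adj u v := fun h => by
  rw [SimpleGraph.edist_eq_one_iff_adj.mpr h] at h3; norm_num at h3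

private lemma dist2_not_adj {u v : V} (h : G.edist u v = 2) : ¬ G.Adj u v := fun hadj => by
  rw [SimpleGraph.edist_eq_one_iff_adj.mpr hadj] at h; norm_num at h

private lemma dom_unique {D : Set V} (hD : G.IsEfficientDominatingSet D) {p w : V}
    (hp : p ∈ D) (hpw : G.Adj p w) :
    w ∉ D ∧ ∀ q ∈ D, G.Adj q w → q = p := by
  have hwD : w ∉ D := fun hw => hD.1 p hp w hw hpw
  obtain ⟨u, _, huniq⟩ := hD.2 w hwD
  exact ⟨hwD, fun q hq hqw => (huniq q ⟨hq, hqw.symm⟩).trans (huniq p ⟨hp, hpw.symm⟩).symm⟩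

private lemma no_P6_s5 (hP6 : IsInducedFree (SimpleGraph.pathGraph 6) G)
    (u0 u1 u2 u3 u4 u5 : V)
    (e01 : G.Adj u0 u1) (e12 : G.Adj u1 u2) (e23 : G.Adj u2 u3)
    (e34 : G.Adj u3 u4) (e45 : G.Adj u4 u5)
    (n02 : ¬ G.Adj u0 u2) (n03 : ¬ G.Adj u0 u3) (n04 : ¬ G.Adj u0 u4)
    (n05 : ¬ G.Adj u0 u5) (n13 : ¬ G.Adj u1 u3) (n14 : ¬ G.Adj u1 u4)
    (n15 : ¬ G.Adj u1 u5) (n24 : ¬ G.Adj u2 u4) (n25 : ¬ G.Adj u2 u5)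
    (n35 : ¬ G.Adj u3 u5) : False := by
  have d01 : u0 ≠ u1 := e01.ne
  have d12 : u1 ≠ u2 := e12.ne
  have d23 : u2 ≠ u3 := e23.ne
  have d34 : u3 ≠ u4 := e34.ne
  have d45 : u4 ≠ u5 := e45.ne
  have d02 : u0 ≠ u2 := fun h => n03 (h ▸ e23)
  have d13 : u1 ≠ u3 := fun h => n14 (h ▸ e34)
  have d24 : u2 ≠ u4 := fun h => n25 (h ▸ e45)
  have d35 : u3 ≠ u5 := fun h => n25 (h.symm ▸ e23)
  have d03 : u0 ≠ u3 := fun h => n04 (h ▸ e34)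
  have d04 : u0 ≠ u4 := fun h => n05 (h ▸ e45)
  have d05 : u0 ≠ u5 := fun h => n15 (h ▸ e01).symm
  have d14 : u1 ≠ u4 := fun h => n15 (h ▸ e45)
  have d15 : u1 ≠ u5 := fun h => n05 (h ▸ e01)
  have d25 : u2 ≠ u5 := fun h => n15 (h ▸ e12)
  let f : Fin 6 → V := fun i => match i with
    | ⟨0,_⟩ => u0 | ⟨1,_⟩ => u1 | ⟨2,_⟩ => u2 | ⟨3,_⟩ => u3 | ⟨4,_⟩ => u4 | ⟨5,_⟩ => u5
  have hinj : Function.Injective f := by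
    intro i j hij
    fin_cases i <;> fin_cases j <;>
      first
        | rfl
        | exact absurd hij (by first
            | exact d01 | exact d12 | exact d23 | exact d34 | exact d45
            | exact d02 | exact d13 | exact d24 | exact d35 | exact d03
            | exact d04 | exact d05 | exact d14 | exact d15 | exact d25
            | exact d01.symm | exact d12.symm | exact d23.symm | exact d34.symm
            | exact d45.symm | exact d02.symm | exact d13.symm | exact d24.symm
            | exact d35.symm | exact d03.symm | exact d04.symm | exact d05.symm
            | exact d14.symm | exact d15.symm | exact d25.symm)
  refine hP6.false ⟨⟨f, hinj⟩, ?_⟩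
  intro i j
  fin_cases i <;> fin_cases j <;> rw [SimpleGraph.pathGraph_adj] <;>
    first
      | exact iff_of_true e01 (by decide) | exact iff_of_true e12 (by decide)
      | exact iff_of_true e23 (by decide) | exact iff_of_true e34 (by decide)
      | exact iff_of_true e45 (by decide)
      | exact iff_of_true e01.symm (by decide) | exact iff_of_true e12.symm (by decide)
      | exact iff_of_true e23.symm (by decide) | exact iff_of_true e34.symm (by decide)
      | exact iff_of_true e45.symm (by decide)
      | exact iff_of_false n02 (by decide) | exact iff_of_false n03 (by decide)
      | exact iff_of_false n04 (by decide) | exact iff_of_false n05 (by decide)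
      | exact iff_of_false n13 (by decide) | exact iff_of_false n14 (by decide)
      | exact iff_of_false n15 (by decide) | exact iff_of_false n24 (by decide)
      | exact iff_of_false n25 (by decide) | exact iff_of_false n35 (by decide)
      | exact iff_of_false (fun h => n02 h.symm) (by decide)
      | exact iff_of_false (fun h => n03 h.symm) (by decide)
      | exact iff_of_false (fun h => n04 h.symm) (by decide)
      | exact iff_of_false (fun h => n05 h.symm) (by decide)
      | exact iff_of_false (fun h => n13 h.symm) (by decide)
      | exact iff_of_false (fun h => n14 h.symm) (by decide)
      | exact iff_of_false (fun h => n15 h.symm) (by decide)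
      | exact iff_of_false (fun h => n24 h.symm) (by decide)
      | exact iff_of_false (fun h => n25 h.symm) (by decide)
      | exact iff_of_false (fun h => n35 h.symm) (by decide)
      | exact iff_of_false (G.loopless.irrefl _) (by decide)

private lemma no_banner_s5 (hB : IsInducedFree banner G)
    (u0 u1 u2 u3 u4 : V)
    (e01 : G.Adj u0 u1) (e12 : G.Adj u1 u2) (e23 : G.Adj u2 u3)
    (e30 : G.Adj u3 u0) (e04 : G.Adj u0 u4)
    (n02 : ¬ G.Adj u0 u2) (n13 : ¬ G.Adj u1 u3) (n14 : ¬ G.Adj u1 u4)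
    (n24 : ¬ G.Adj u2 u4) (n34 : ¬ G.Adj u3 u4)
    (d13 : u1 ≠ u3) : False := by
  have d01 : u0 ≠ u1 := e01.ne
  have d12 : u1 ≠ u2 := e12.ne
  have d23 : u2 ≠ u3 := e23.ne
  have d30 : u3 ≠ u0 := e30.ne
  have d04 : u0 ≠ u4 := e04.ne
  have d02 : u0 ≠ u2 := fun h => n24 (h ▸ e04)
  have d14 : u1 ≠ u4 := fun h => n24 (h ▸ e12).symm
  have d24 : u2 ≠ u4 := fun h => n14 (h.symm ▸ e12)
  have d34 : u3 ≠ u4 := fun h => n24 (h.symm ▸ e23)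
  let f : Fin 5 → V := fun i => match i with
    | ⟨0,_⟩ => u0 | ⟨1,_⟩ => u1 | ⟨2,_⟩ => u2 | ⟨3,_⟩ => u3 | ⟨4,_⟩ => u4
  have hinj : Function.Injective f := by
    intro i j hij
    fin_cases i <;> fin_cases j <;>
      first
        | rfl
        | exact absurd hij (by first
            | exact d01 | exact d12 | exact d23 | exact d30 | exact d04
            | exact d02 | exact d13 | exact d14 | exact d24 | exact d34
            | exact d01.symm | exact d12.symm | exact d23.symm | exact d30.symm
            | exact d04.symm | exact d02.symm | exact d13.symm | exact d14.symm
            | exact d24.symm | exact d34.symm)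
  refine hB.false ⟨⟨f, hinj⟩, ?_⟩
  intro i j
  fin_cases i <;> fin_cases j <;>
    first
      | exact iff_of_true e01 (by simp [banner]) | exact iff_of_true e12 (by simp [banner])
      | exact iff_of_true e23 (by simp [banner]) | exact iff_of_true e30 (by simp [banner])
      | exact iff_of_true e04 (by simp [banner])
      | exact iff_of_true e01.symm (by simp [banner]) | exact iff_of_true e12.symm (by simp [banner])
      | exact iff_of_true e23.symm (by simp [banner]) | exact iff_of_true e30.symm (by simp [banner])
      | exact iff_of_true e04.symm (by simp [banner])
      | exact iff_of_false n02 (by simp [banner]) | exact iff_of_false n13 (by simp [banner])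
      | exact iff_of_false n14 (by simp [banner]) | exact iff_of_false n24 (by simp [banner])
      | exact iff_of_false n34 (by simp [banner])
      | exact iff_of_false (fun h => n02 h.symm) (by simp [banner])
      | exact iff_of_false (fun h => n13 h.symm) (by simp [banner])
      | exact iff_of_false (fun h => n14 h.symm) (by simp [banner])
      | exact iff_of_false (fun h => n24 h.symm) (by simp [banner])
      | exact iff_of_false (fun h => n34 h.symm) (by simp [banner])
      | exact iff_of_false (G.loopless.irrefl _) (by simp [banner])

end Aux

theorem path_case1_v1p_ne_v2p {V : Type*} [Fintype V] (G : SimpleGraph V)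
    (hP6 : IsInducedFree (SimpleGraph.pathGraph 6) G)
    (hBanner : IsInducedFree banner G)
    (D : Set V) (hD : G.IsEfficientDominatingSet D)
    (v1 v2 v3 v4 v5 v6 : V)
    (h12 : G.edist v1 v2 ≤ 2) (h23 : G.edist v2 v3 ≤ 2) (h34 : G.edist v3 v4 ≤ 2)
    (h45 : G.edist v4 v5 ≤ 2) (h56 : G.edist v5 v6 ≤ 2)
    (h13 : 3 ≤ G.edist v1 v3) (h14 : 3 ≤ G.edist v1 v4) (h15 : 3 ≤ G.edist v1 v5)
    (h16 : 3 ≤ G.edist v1 v6) (h24 : 3 ≤ G.edist v2 v4) (h25 : 3 ≤ G.edist v2 v5)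
    (h26 : 3 ≤ G.edist v2 v6) (h35 : 3 ≤ G.edist v3 v5) (h36 : 3 ≤ G.edist v3 v6)
    (h46 : 3 ≤ G.edist v4 v6)
    (hv5v6 : G.Adj v5 v6) (hdist34 : G.edist v3 v4 = 2)
    (d c b a : V)
    (hdv4 : G.Adj d v4) (hdv5 : G.Adj d v5) (hcv3 : G.Adj c v3) (hcv4 : G.Adj c v4)
    (hcd : G.Adj c d) (hbv2 : G.Adj b v2) (hbv3 : G.Adj b v3) (hbc : G.Adj b c)
    (hbd : G.Adj b d) (hav1 : G.Adj a v1) (hav2 : G.Adj a v2) (hab : G.Adj a b)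
    (had : G.Adj a d)
    (v2' v1' : V) (hv2'D : v2' ∈ D) (hv2'v2 : G.Adj v2' v2) (hv2'a : G.Adj v2' a)
    (hv2'b : G.Adj v2' b) (hv1'D : v1' ∈ D) (hv1'v1 : G.Adj v1' v1)
    : v1' ≠ v2' := by
  intro heq
  rw [heq] at hv1'v1
  -- now hv1'v1 : G.Adj v2' v1
  have npv3 : ¬ G.Adj v2' v3 := fun h => far_aux h13 hv1'v1.symm h
  have npv4 : ¬ G.Adj v2' v4 := fun h => far_aux h14 hv1'v1.symm h
  have npv5 : ¬ G.Adj v2' v5 := fun h => far_aux h25 hv2'v2.symm h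
  have npv6 : ¬ G.Adj v2' v6 := fun h => far_aux h26 hv2'v2.symm h
  have nv1b : ¬ G.Adj v1 b := fun h => far_aux h13 h hbv3
  have nv1c : ¬ G.Adj v1 c := fun h => far_aux h13 h hcv3
  have nv1d : ¬ G.Adj v1 d := fun h => far_aux h14 h hdv4
  have nav3 : ¬ G.Adj a v3 := fun h => far_aux h13 hav1.symm h
  have nav4 : ¬ G.Adj a v4 := fun h => far_aux h24 hav2.symm h
  have nav5 : ¬ G.Adj a v5 := fun h => far_aux h25 hav2.symm h
  have nav6 : ¬ G.Adj a v6 := fun h => far_aux h26 hav2.symm h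
  have nbv4 : ¬ G.Adj b v4 := fun h => far_aux h24 hbv2.symm h
  have nbv5 : ¬ G.Adj b v5 := fun h => far_aux h25 hbv2.symm h
  have nbv6 : ¬ G.Adj b v6 := fun h => far_aux h26 hbv2.symm h
  have ncv5 : ¬ G.Adj c v5 := fun h => far_aux h35 hcv3.symm h
  have ncv6 : ¬ G.Adj c v6 := fun h => far_aux h36 hcv3.symm h
  have ndv6 : ¬ G.Adj d v6 := fun h => far_aux h46 hdv4.symm h
  have nv3d : ¬ G.Adj v3 d := fun h => far_aux h35 h hdv5
  by_cases hpd : G.Adj v2' d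
  case neg =>
    -- P6 : v1 - v2' - b - d - v5 - v6
    exact no_P6_s5 hP6 v1 v2' b d v5 v6
      hv1'v1.symm hv2'b hbd hdv5 hv5v6
      nv1b nv1d (far_not_adj h15) (far_not_adj h16)
      hpd npv5 npv6 nbv5 nbv6 ndv6
  case pos =>
  obtain ⟨hdD, huniq_d⟩ := dom_unique hD hv2'D hpd
  obtain ⟨hv1D, huniq_v1⟩ := dom_unique hD hv2'D hv1'v1
  obtain ⟨haD, huniq_a⟩ := dom_unique hD hv2'D hv2'a
  obtain ⟨hbD, huniq_b⟩ := dom_unique hD hv2'D hv2'b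
  by_cases h45a : G.Adj v4 v5
  case pos =>
    by_cases hac : G.Adj a c
    case pos =>
      -- P6 : v1 - a - c - v4 - v5 - v6
      exact no_P6_s5 hP6 v1 a c v4 v5 v6
        hav1.symm hac hcv4 h45a hv5v6
        nv1c (far_not_adj h14) (far_not_adj h15) (far_not_adj h16)
        nav4 nav5 nav6 ncv5 ncv6 (far_not_adj h46)
    case neg =>
      -- P6 : v1 - a - b - c - v4 - v5
      exact no_P6_s5 hP6 v1 a b c v4 v5
        hav1.symm hab hbc hcv4 h45a
        nv1b nv1c (far_not_adj h14) (far_not_adj h15)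
        hac nav4 nav5 nbv4 nbv5 ncv5
  case neg =>
  -- v4 ∉ D
  have hv4D : v4 ∉ D := by
    intro hm
    have h4 : v4 = v2' := huniq_d v4 hm hdv4.symm
    rw [← h4] at hv1'v1
    exact far_not_adj h14 hv1'v1.symm
  obtain ⟨x, ⟨hxD, hxv4⟩, _⟩ := hD.2 v4 hv4D
  have hxp : x ≠ v2' := fun h => npv4 (by rw [← h]; exact hxv4.symm)
  have nxd : ¬ G.Adj x d := fun h => hxp (huniq_d x hxD h)
  have nxv1 : ¬ G.Adj x v1 := fun h => hxp (huniq_v1 x hxD h)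
  have nxa : ¬ G.Adj x a := fun h => hxp (huniq_a x hxD h)
  have nxb : ¬ G.Adj x b := fun h => hxp (huniq_b x hxD h)
  have nxv6 : ¬ G.Adj x v6 := fun h => far_aux h46 hxv4 h
  have npx : ¬ G.Adj v2' x := hD.1 v2' hv2'D x hxD
  by_cases hxv3 : G.Adj x v3
  case pos =>
    -- P6 : v1 - a - b - v3 - x - v4
    exact no_P6_s5 hP6 v1 a b v3 x v4
      hav1.symm hab hbv3 hxv3.symm hxv4.symm
      nv1b (far_not_adj h13) (fun h => nxv1 h.symm) (far_not_adj h14)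
      nav3 (fun h => nxa h.symm) nav4
      (fun h => nxb h.symm) nbv4
      (dist2_not_adj hdist34)
  case neg =>
  by_cases hxv5 : G.Adj x v5
  case pos =>
    -- banner : cycle v5 - d - v4 - x - v5 with pendant v6 at v5
    exact no_banner_s5 hBanner v5 d v4 x v6
      hdv5.symm hdv4 hxv4 hxv5 hv5v6
      (fun h => h45a h.symm) (fun h => nxd h.symm) ndv6 (far_not_adj h46) nxv6
      (fun h => hdD (by rw [h]; exact hxD))
  case neg =>
  -- v3 ∉ D
  have hv3D : v3 ∉ D := by
    intro hm
    have h3 : v3 = v2' := huniq_b v3 hm hbv3.symm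
    rw [← h3] at hv1'v1
    exact far_not_adj h13 hv1'v1.symm
  obtain ⟨y, ⟨hyD, hyv3⟩, _⟩ := hD.2 v3 hv3D
  have hyp : y ≠ v2' := fun h => npv3 (by rw [← h]; exact hyv3.symm)
  have nyd : ¬ G.Adj y d := fun h => hyp (huniq_d y hyD h)
  have nyv5 : ¬ G.Adj y v5 := fun h => far_aux h35 hyv3 h
  have nyv6 : ¬ G.Adj y v6 := fun h => far_aux h36 hyv3 h
  by_cases hyc : G.Adj y c
  case neg =>
    -- P6 : y - v3 - c - d - v5 - v6
    exact no_P6_s5 hP6 y v3 c d v5 v6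
      hyv3.symm hcv3.symm hcd hdv5 hv5v6
      hyc nyd nyv5 nyv6
      nv3d (far_not_adj h35) (far_not_adj h36)
      ncv5 ncv6 ndv6
  case pos =>
  -- c ∉ D, c uniquely dominated by y
  have hcD : c ∉ D := by
    intro hm
    have hc : c = v2' := huniq_d c hm hcd
    exact npv4 (by rw [← hc]; exact hcv4)
  obtain ⟨u, _, huu⟩ := hD.2 c hcD
  have u_eq : ∀ q ∈ D, G.Adj q c → q = y :=
    fun q hq hqc => (huu q ⟨hq, hqc.symm⟩).trans (huu y ⟨hyD, hyc.symm⟩).symm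
  have npc : ¬ G.Adj v2' c := fun h => hyp (u_eq v2' hv2'D h).symm
  have nxc : ¬ G.Adj x c := fun h => hxv3 (by rw [u_eq x hxD h]; exact hyv3.symm)
  -- P6 : v1 - v2' - b - c - v4 - x
  exact no_P6_s5 hP6 v1 v2' b c v4 x
    hv1'v1.symm hv2'b hbc hcv4 hxv4
    nv1b nv1c (far_not_adj h14) (fun h => nxv1 h.symm)
    npc npv4 npx
    nbv4 (fun h => nxb h.symm)
    (fun h => nxc h.symm)
end

section
/- Under the Case 2 configuration of the path-in-square setting, if additionally ab, bc, cd, de are edges of G and bd is not an edge of G, then ac and ce are edges of G. -/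
lemma adj_adj_edist_le_two {V : Type*} {G : SimpleGraph V} {u w z : V}
    (h1 : G.Adj u w) (h2 : G.Adj w z) : G.edist u z ≤ 2 := by
  calc G.edist u z ≤ G.edist u w + G.edist w z := G.edist_triangle
    _ ≤ 1 + 1 := by
        rw [SimpleGraph.edist_eq_one_iff_adj.mpr h1, SimpleGraph.edist_eq_one_iff_adj.mpr h2]
    _ = 2 := by norm_num

lemma adj_edist_le_two {V : Type*} {G : SimpleGraph V} {u z : V}
    (h1 : G.Adj u z) : G.edist u z ≤ 2 := by
  rw [SimpleGraph.edist_eq_one_iff_adj.mpr h1]; norm_num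

lemma not_le_of_three_le {V : Type*} {G : SimpleGraph V} {u z : V}
    (h : 3 ≤ G.edist u z) (h2 : G.edist u z ≤ 2) : False := by
  have := le_trans h h2
  norm_num at this

lemma no_p6 {V : Type*} {G : SimpleGraph V} (hP6 : IsInducedFree (SimpleGraph.pathGraph 6) G)
    (x0 x1 x2 x3 x4 x5 : V)
    (h01 : G.Adj x0 x1) (h12 : G.Adj x1 x2) (h23 : G.Adj x2 x3)
    (h34 : G.Adj x3 x4) (h45 : G.Adj x4 x5)
    (n02 : ¬G.Adj x0 x2) (n03 : ¬G.Adj x0 x3) (n04 : ¬G.Adj x0 x4) (n05 : ¬G.Adj x0 x5)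
    (n13 : ¬G.Adj x1 x3) (n14 : ¬G.Adj x1 x4) (n15 : ¬G.Adj x1 x5)
    (n24 : ¬G.Adj x2 x4) (n25 : ¬G.Adj x2 x5) (n35 : ¬G.Adj x3 x5) : False := by
  have s01 := h01.symm; have s12 := h12.symm; have s23 := h23.symm
  have s34 := h34.symm; have s45 := h45.symm
  have m02 : ¬G.Adj x2 x0 := fun h => n02 h.symm
  have m03 : ¬G.Adj x3 x0 := fun h => n03 h.symm
  have m04 : ¬G.Adj x4 x0 := fun h => n04 h.symm
  have m05 : ¬G.Adj x5 x0 := fun h => n05 h.symm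
  have m13 : ¬G.Adj x3 x1 := fun h => n13 h.symm
  have m14 : ¬G.Adj x4 x1 := fun h => n14 h.symm
  have m15 : ¬G.Adj x5 x1 := fun h => n15 h.symm
  have m24 : ¬G.Adj x4 x2 := fun h => n24 h.symm
  have m25 : ¬G.Adj x5 x2 := fun h => n25 h.symm
  have m35 : ¬G.Adj x5 x3 := fun h => n35 h.symm
  have e0 : ![x0,x1,x2,x3,x4,x5] 0 = x0 := rfl
  have e1 : ![x0,x1,x2,x3,x4,x5] 1 = x1 := rfl
  have e2 : ![x0,x1,x2,x3,x4,x5] 2 = x2 := rfl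
  have e3 : ![x0,x1,x2,x3,x4,x5] 3 = x3 := rfl
  have e4 : ![x0,x1,x2,x3,x4,x5] 4 = x4 := rfl
  have e5 : ![x0,x1,x2,x3,x4,x5] 5 = x5 := rfl
  apply hP6.false
  refine ⟨⟨![x0,x1,x2,x3,x4,x5], ?_⟩, ?_⟩
  · intro i j h
    fin_cases i <;> fin_cases j <;>
      simp only [e0,e1,e2,e3,e4,e5] at h <;> simp_all
  · intro i j
    change G.Adj (![x0,x1,x2,x3,x4,x5] i) (![x0,x1,x2,x3,x4,x5] j) ↔ _
    fin_cases i <;> fin_cases j <;>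
      simp [e0,e1,e2,e3,e4,e5, SimpleGraph.pathGraph_adj,
        h01, h12, h23, h34, h45, s01, s12, s23, s34, s45,
        n02, n03, n04, n05, n13, n14, n15, n24, n25, n35,
        m02, m03, m04, m05, m13, m14, m15, m24, m25, m35] <;> decide

set_option linter.unreachableTactic false in
set_option linter.unusedTactic false in
/-- cycle x0-x1-x2-x3-x0 with pendant x4 attached at x0 gives a banner. -/
lemma no_banner_s8 {V : Type*} {G : SimpleGraph V} (hB : IsInducedFree banner G)
    (x0 x1 x2 x3 x4 : V)
    (h01 : G.Adj x0 x1) (h12 : G.Adj x1 x2) (h23 : G.Adj x2 x3)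
    (h30 : G.Adj x3 x0) (h04 : G.Adj x0 x4)
    (n02 : ¬G.Adj x0 x2) (n13 : ¬G.Adj x1 x3)
    (n14 : ¬G.Adj x1 x4) (n24 : ¬G.Adj x2 x4) (n34 : ¬G.Adj x3 x4)
    (hne13 : x1 ≠ x3) : False := by
  have s01 := h01.symm; have s12 := h12.symm; have s23 := h23.symm
  have s30 := h30.symm; have s04 := h04.symm
  have m02 : ¬G.Adj x2 x0 := fun h => n02 h.symm
  have m13 : ¬G.Adj x3 x1 := fun h => n13 h.symm
  have m14 : ¬G.Adj x4 x1 := fun h => n14 h.symm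
  have m24 : ¬G.Adj x4 x2 := fun h => n24 h.symm
  have m34 : ¬G.Adj x4 x3 := fun h => n34 h.symm
  have hne31 : x3 ≠ x1 := fun h => hne13 h.symm
  have e0 : ![x0,x1,x2,x3,x4] 0 = x0 := rfl
  have e1 : ![x0,x1,x2,x3,x4] 1 = x1 := rfl
  have e2 : ![x0,x1,x2,x3,x4] 2 = x2 := rfl
  have e3 : ![x0,x1,x2,x3,x4] 3 = x3 := rfl
  have e4 : ![x0,x1,x2,x3,x4] 4 = x4 := rfl
  apply hB.false
  refine ⟨⟨![x0,x1,x2,x3,x4], ?_⟩, ?_⟩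
  · intro i j h
    fin_cases i <;> fin_cases j <;>
      simp only [e0,e1,e2,e3,e4] at h <;> simp_all
  · intro i j
    change G.Adj (![x0,x1,x2,x3,x4] i) (![x0,x1,x2,x3,x4] j) ↔ _
    fin_cases i <;> fin_cases j <;>
      simp [e0,e1,e2,e3,e4, banner, SimpleGraph.fromEdgeSet_adj, Sym2.eq_iff,
        h01, h12, h23, h30, h04, s01, s12, s23, s30, s04,
        n02, n13, n14, n24, n34, m02, m13, m14, m24, m34] <;> decide

theorem path_case21_ac_ce {V : Type*} [Fintype V] (G : SimpleGraph V)
    (hP6 : IsInducedFree (SimpleGraph.pathGraph 6) G)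
    (hBanner : IsInducedFree banner G)
    (D : Set V) (hD : G.IsEfficientDominatingSet D)
    (v1 v2 v3 v4 v5 v6 : V)
    (h12 : G.edist v1 v2 ≤ 2) (h23 : G.edist v2 v3 ≤ 2) (h34 : G.edist v3 v4 ≤ 2)
    (h45 : G.edist v4 v5 ≤ 2) (h56 : G.edist v5 v6 ≤ 2)
    (h13 : 3 ≤ G.edist v1 v3) (h14 : 3 ≤ G.edist v1 v4) (h15 : 3 ≤ G.edist v1 v5)
    (h16 : 3 ≤ G.edist v1 v6) (h24 : 3 ≤ G.edist v2 v4) (h25 : 3 ≤ G.edist v2 v5)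
    (h26 : 3 ≤ G.edist v2 v6) (h35 : 3 ≤ G.edist v3 v5) (h36 : 3 ≤ G.edist v3 v6)
    (h46 : 3 ≤ G.edist v4 v6)
    (hdist12 : G.edist v1 v2 = 2) (hdist56 : G.edist v5 v6 = 2)
    (a e b d c : V)
    (hav1 : G.Adj a v1) (hav2 : G.Adj a v2) (hev5 : G.Adj e v5) (hev6 : G.Adj e v6)
    (hbv2 : G.Adj b v2) (hbv3 : G.Adj b v3) (hdv4 : G.Adj d v4) (hdv5 : G.Adj d v5)
    (hcv3 : G.Adj c v3) (hcv4 : G.Adj c v4)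
    (hab : G.Adj a b) (hbc : G.Adj b c) (hcd : G.Adj c d) (hde : G.Adj d e)
    (hbd : ¬ G.Adj b d)
    : G.Adj a c ∧ G.Adj c e := by
  -- vertex v1 is not adjacent to b, c, d, v5
  have nv1b : ¬G.Adj v1 b := fun h => not_le_of_three_le h13 (adj_adj_edist_le_two h hbv3)
  have nv1c : ¬G.Adj v1 c := fun h => not_le_of_three_le h13 (adj_adj_edist_le_two h hcv3)
  have nv1d : ¬G.Adj v1 d := fun h => not_le_of_three_le h14 (adj_adj_edist_le_two h hdv4)
  have nv1v5 : ¬G.Adj v1 v5 := fun h => not_le_of_three_le h15 (adj_edist_le_two h)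
  have nav5 : ¬G.Adj a v5 := fun h => not_le_of_three_le h15 (adj_adj_edist_le_two hav1.symm h)
  have nbv5 : ¬G.Adj b v5 := fun h => not_le_of_three_le h25 (adj_adj_edist_le_two hbv2.symm h)
  have ncv5 : ¬G.Adj c v5 := fun h => not_le_of_three_le h35 (adj_adj_edist_le_two hcv3.symm h)
  have ndv2 : ¬G.Adj d v2 := fun h => not_le_of_three_le h24 (adj_adj_edist_le_two h.symm hdv4)
  have hne_bd : b ≠ d := fun h => ndv2 (h ▸ hbv2)
  -- vertex v6 facts
  have nbv6 : ¬G.Adj b v6 := fun h => not_le_of_three_le h26 (adj_adj_edist_le_two hbv2.symm h)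
  have ncv6 : ¬G.Adj c v6 := fun h => not_le_of_three_le h36 (adj_adj_edist_le_two hcv3.symm h)
  have ndv6 : ¬G.Adj d v6 := fun h => not_le_of_three_le h46 (adj_adj_edist_le_two hdv4.symm h)
  have nv2c : ¬G.Adj v2 c := fun h => not_le_of_three_le h24 (adj_adj_edist_le_two h hcv4)
  have nv2d : ¬G.Adj v2 d := fun h => not_le_of_three_le h24 (adj_adj_edist_le_two h hdv4)
  have nv2e : ¬G.Adj v2 e := fun h => not_le_of_three_le h25 (adj_adj_edist_le_two h hev5)
  have nv2v6 : ¬G.Adj v2 v6 := fun h => not_le_of_three_le h26 (adj_edist_le_two h)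
  constructor
  · -- G.Adj a c
    by_contra hac
    have nad : ¬G.Adj a d := fun had =>
      no_banner_s8 hBanner a b c d v1 hab hbc hcd had.symm hav1 hac hbd
        (fun h => nv1b h.symm) (fun h => nv1c h.symm) (fun h => nv1d h.symm) hne_bd
    exact no_p6 hP6 v1 a b c d v5 hav1.symm hab hbc hcd hdv5
      nv1b nv1c nv1d nv1v5 hac nad nav5 hbd nbv5 ncv5
  · -- G.Adj c e
    by_contra hce
    have nbe : ¬G.Adj b e := fun hbe =>
      no_banner_s8 hBanner e d c b v6 hde.symm hcd.symm hbc.symm hbe hev6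
        (fun h => hce h.symm) (fun h => hbd h.symm) ndv6 ncv6 nbv6
        (fun h => hne_bd h.symm)
    exact no_p6 hP6 v2 b c d e v6 hbv2.symm hbc hcd hde hev6
      nv2c nv2d nv2e nv2v6 hbd nbe nbv6 hce ncv6 ndv6
end

section
/- Under the Case 2 configuration of the path-in-square setting, if additionally ab, bc, cd, de, ac, ce are edges of G and bd is not an edge of G, then neither a nor e belongs to D. -/
namespace Case2Aux

variable {V : Type*} {G : SimpleGraph V} {u v w : V}

lemma adj_far2 (h : G.Adj u v) (h2 : 2 ≤ G.edist u v) : False := by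
  rw [SimpleGraph.edist_eq_one_iff_adj.mpr h] at h2
  norm_num at h2

lemma adj_far3 (h : G.Adj u v) (h3 : 3 ≤ G.edist u v) : False :=
  adj_far2 h (le_trans (by norm_num) h3)

lemma adj_adj_far3 (h1 : G.Adj u v) (h2 : G.Adj v w) (h3 : 3 ≤ G.edist u w) : False := by
  have hle : G.edist u w ≤ 2 := by
    have := SimpleGraph.edist_triangle (G := G) (u := u) (v := v) (w := w)
    rw [SimpleGraph.edist_eq_one_iff_adj.mpr h1, SimpleGraph.edist_eq_one_iff_adj.mpr h2] at this
    exact le_trans this (by norm_num)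
  exact absurd (le_trans h3 hle) (by norm_num)

lemma ne_far3 (h3 : 3 ≤ G.edist u v) : u ≠ v := by
  intro h
  rw [h, SimpleGraph.edist_self] at h3
  norm_num at h3

@[simp]
lemma cons_val_five {α : Type*} {m : ℕ} (x : α) (s : Fin m.succ.succ.succ.succ.succ → α) :
    Matrix.vecCons x s 5 =
      Matrix.vecHead (Matrix.vecTail (Matrix.vecTail (Matrix.vecTail (Matrix.vecTail s)))) :=
  rfl

set_option maxHeartbeats 2000000 in
lemma noP6 (hP6 : IsInducedFree (SimpleGraph.pathGraph 6) G)
    (x0 x1 x2 x3 x4 x5 : V)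
    (a01 : G.Adj x0 x1) (a12 : G.Adj x1 x2) (a23 : G.Adj x2 x3)
    (a34 : G.Adj x3 x4) (a45 : G.Adj x4 x5)
    (n02 : ¬ G.Adj x0 x2) (n03 : ¬ G.Adj x0 x3) (n04 : ¬ G.Adj x0 x4) (n05 : ¬ G.Adj x0 x5)
    (n13 : ¬ G.Adj x1 x3) (n14 : ¬ G.Adj x1 x4) (n15 : ¬ G.Adj x1 x5)
    (n24 : ¬ G.Adj x2 x4) (n25 : ¬ G.Adj x2 x5) (n35 : ¬ G.Adj x3 x5)
    (e02 : x0 ≠ x2) (e03 : x0 ≠ x3) (e04 : x0 ≠ x4) (e05 : x0 ≠ x5)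
    (e13 : x1 ≠ x3) (e14 : x1 ≠ x4) (e15 : x1 ≠ x5)
    (e24 : x2 ≠ x4) (e25 : x2 ≠ x5) (e35 : x3 ≠ x5) : False := by
  have e01 := a01.ne; have e12 := a12.ne; have e23 := a23.ne
  have e34 := a34.ne; have e45 := a45.ne
  apply hP6.false
  refine ⟨⟨![x0,x1,x2,x3,x4,x5], ?_⟩, ?_⟩
  · intro i j hij
    fin_cases i <;> fin_cases j <;> simp_all
  · intro i j
    fin_cases i <;> fin_cases j <;>
      simp only [SimpleGraph.pathGraph_adj, Matrix.cons_val_zero, Matrix.cons_val_one,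
        Matrix.head_cons, Matrix.cons_val_two, Matrix.tail_cons, Matrix.cons_val_three,
        Matrix.cons_val_four, cons_val_five, Matrix.vecHead, Matrix.vecTail, Fin.isValue,
          Function.Embedding.coeFn_mk] <;>
      norm_num <;>
      first
        | exact a01 | exact a01.symm | exact a12 | exact a12.symm
        | exact a23 | exact a23.symm | exact a34 | exact a34.symm
        | exact a45 | exact a45.symm
        | exact G.irrefl
        | exact n02 | exact fun h => n02 h.symm
        | exact n03 | exact fun h => n03 h.symm
        | exact n04 | exact fun h => n04 h.symm
        | exact n05 | exact fun h => n05 h.symm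
        | exact n13 | exact fun h => n13 h.symm
        | exact n14 | exact fun h => n14 h.symm
        | exact n15 | exact fun h => n15 h.symm
        | exact n24 | exact fun h => n24 h.symm
        | exact n25 | exact fun h => n25 h.symm
        | exact n35 | exact fun h => n35 h.symm

lemma banner_adj (i j : Fin 5) : banner.Adj i j ↔
    ((i,j) = (0,1) ∨ (i,j) = (1,0) ∨ (i,j) = (1,2) ∨ (i,j) = (2,1) ∨ (i,j) = (2,3) ∨
     (i,j) = (3,2) ∨ (i,j) = (3,0) ∨ (i,j) = (0,3) ∨ (i,j) = (0,4) ∨ (i,j) = (4,0)) := by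
  simp only [banner, SimpleGraph.fromEdgeSet_adj, Set.mem_insert_iff, Set.mem_singleton_iff,
    Sym2.eq_iff]
  fin_cases i <;> fin_cases j <;> decide

lemma noBanner (hB : IsInducedFree banner G)
    (y0 y1 y2 y3 y4 : V)
    (a01 : G.Adj y0 y1) (a12 : G.Adj y1 y2) (a23 : G.Adj y2 y3)
    (a30 : G.Adj y3 y0) (a04 : G.Adj y0 y4)
    (n02 : ¬ G.Adj y0 y2) (n13 : ¬ G.Adj y1 y3) (n14 : ¬ G.Adj y1 y4)
    (n24 : ¬ G.Adj y2 y4) (n34 : ¬ G.Adj y3 y4)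
    (e02 : y0 ≠ y2) (e13 : y1 ≠ y3) (e14 : y1 ≠ y4)
    (e24 : y2 ≠ y4) (e34 : y3 ≠ y4) : False := by
  have e01 := a01.ne; have e12 := a12.ne; have e23 := a23.ne
  have e30 := a30.ne; have e04 := a04.ne
  apply hB.false
  refine ⟨⟨![y0,y1,y2,y3,y4], ?_⟩, ?_⟩
  · intro i j hij
    fin_cases i <;> fin_cases j <;> simp_all
  · intro i j
    fin_cases i <;> fin_cases j <;>
      simp only [banner_adj, Matrix.cons_val_zero, Matrix.cons_val_one,
        Matrix.head_cons, Matrix.cons_val_two, Matrix.tail_cons, Matrix.cons_val_three,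
        Matrix.cons_val_four, Matrix.vecHead, Matrix.vecTail, Fin.isValue,
          Function.Embedding.coeFn_mk] <;>
      first
        | (refine iff_of_true ?_ (by decide); first
            | exact a01 | exact a01.symm | exact a12 | exact a12.symm
            | exact a23 | exact a23.symm | exact a30 | exact a30.symm
            | exact a04 | exact a04.symm)
        | (refine iff_of_false ?_ (by decide); first
            | exact G.irrefl
            | exact n02 | exact fun h => n02 h.symm
            | exact n13 | exact fun h => n13 h.symm
            | exact n14 | exact fun h => n14 h.symm
            | exact n24 | exact fun h => n24 h.symm
            | exact n34 | exact fun h => n34 h.symm)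

/-- The core argument: under the Case 2 configuration (restricted to one side),
the vertex `a` cannot belong to the efficient dominating set. -/
lemma core {V : Type*} (G : SimpleGraph V)
    (hP6 : IsInducedFree (SimpleGraph.pathGraph 6) G)
    (hBanner : IsInducedFree banner G)
    (D : Set V) (hD : G.IsEfficientDominatingSet D)
    (v1 v3 v4 v5 v6 : V)
    (h13 : 3 ≤ G.edist v1 v3) (h14 : 3 ≤ G.edist v1 v4) (h15 : 3 ≤ G.edist v1 v5)
    (h16 : 3 ≤ G.edist v1 v6) (h35 : 3 ≤ G.edist v3 v5) (h36 : 3 ≤ G.edist v3 v6)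
    (h46 : 3 ≤ G.edist v4 v6)
    (hdist56 : G.edist v5 v6 = 2)
    (a e d c : V)
    (hav1 : G.Adj a v1) (hev5 : G.Adj e v5) (hev6 : G.Adj e v6)
    (hdv4 : G.Adj d v4) (hdv5 : G.Adj d v5)
    (hcv3 : G.Adj c v3) (hcv4 : G.Adj c v4)
    (hcd : G.Adj c d) (hde : G.Adj d e) (hac : G.Adj a c) (hce : G.Adj c e)
    (haD : a ∈ D) : False := by
  have dd : ∀ v, v ∉ D → ∀ p, p ∈ D → G.Adj v p → ∀ q, q ∈ D → G.Adj v q → p = q := by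
    intro v hv p hp hvp q hq hvq
    obtain ⟨u, -, hu⟩ := hD.2 v hv
    rw [hu p ⟨hp, hvp⟩, hu q ⟨hq, hvq⟩]
  -- basic exclusions
  have hcD : c ∉ D := fun h => hD.1 a haD c h hac
  have hv1D : v1 ∉ D := fun h => hD.1 a haD v1 h hav1
  have nav3 : ¬ G.Adj a v3 := fun h => adj_adj_far3 hav1.symm h h13
  have nav4 : ¬ G.Adj a v4 := fun h => adj_adj_far3 hav1.symm h h14
  have nav5 : ¬ G.Adj a v5 := fun h => adj_adj_far3 hav1.symm h h15
  have nav6 : ¬ G.Adj a v6 := fun h => adj_adj_far3 hav1.symm h h16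
  have nea3 : a ≠ v3 := fun h => adj_far3 (show G.Adj v1 v3 by rw [← h]; exact hav1.symm) h13
  have nea4 : a ≠ v4 := fun h => adj_far3 (show G.Adj v1 v4 by rw [← h]; exact hav1.symm) h14
  have nea5 : a ≠ v5 := fun h => adj_far3 (show G.Adj v1 v5 by rw [← h]; exact hav1.symm) h15
  have nea6 : a ≠ v6 := fun h => adj_far3 (show G.Adj v1 v6 by rw [← h]; exact hav1.symm) h16
  have nead : a ≠ d := fun h => nav4 (show G.Adj a v4 by rw [h]; exact hdv4)
  have neae : a ≠ e := fun h => nav5 (show G.Adj a v5 by rw [h]; exact hev5)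
  have domc : ∀ p, p ∈ D → G.Adj c p → p = a := fun p hp h => dd c hcD p hp h a haD hac.symm
  have domv1 : ∀ p, p ∈ D → G.Adj v1 p → p = a := fun p hp h => dd v1 hv1D p hp h a haD hav1.symm
  have hv3D : v3 ∉ D := fun h => nea3 (domc v3 h hcv3).symm
  have hv4D : v4 ∉ D := fun h => nea4 (domc v4 h hcv4).symm
  have hdD : d ∉ D := fun h => nead (domc d h hcd).symm
  have heD : e ∉ D := fun h => neae (domc e h hce).symm
  -- the dominator x of v3
  obtain ⟨x, ⟨hxD, hv3x⟩, -⟩ := hD.2 v3 hv3D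
  have hxa : x ≠ a := fun h => nav3 (show G.Adj a v3 by rw [← h]; exact hv3x.symm)
  have domv3 : ∀ p, p ∈ D → G.Adj v3 p → p = x := fun p hp h => dd v3 hv3D p hp h x hxD hv3x
  have nxa : ¬ G.Adj x a := fun h => hD.1 a haD x hxD h.symm
  have nxc : ¬ G.Adj x c := fun h => hxa (domc x hxD h.symm)
  have nxv5 : ¬ G.Adj x v5 := fun h => adj_adj_far3 hv3x h h35
  have nxd : ¬ G.Adj x d := by
    intro hxd
    have nad : ¬ G.Adj a d := fun h => hxa (dd d hdD x hxD hxd.symm a haD h.symm)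
    exact noBanner hBanner c v3 x d a hcv3 hv3x hxd hcd.symm hac.symm
      (fun h => nxc h.symm)
      (fun h => adj_adj_far3 h hdv5 h35)
      (fun h => nav3 h.symm)
      nxa
      (fun h => nad h.symm)
      (fun h => hcD (by rw [h]; exact hxD))
      (fun h => adj_far3 (show G.Adj v3 v5 by rw [h]; exact hdv5) h35)
      (fun h => nea3 h.symm)
      hxa
      (fun h => nead h.symm)
  have nxe : ¬ G.Adj x e := by
    intro hxe
    have nae : ¬ G.Adj a e := fun h => hxa (dd e heD x hxD hxe.symm a haD h.symm)
    exact noBanner hBanner c v3 x e a hcv3 hv3x hxe hce.symm hac.symm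
      (fun h => nxc h.symm)
      (fun h => adj_adj_far3 h hev5 h35)
      (fun h => nav3 h.symm)
      nxa
      (fun h => nae h.symm)
      (fun h => hcD (by rw [h]; exact hxD))
      (fun h => adj_far3 (show G.Adj v3 v5 by rw [h]; exact hev5) h35)
      (fun h => nea3 h.symm)
      hxa
      (fun h => neae h.symm)
  -- facts about v5, v6
  have nev56 : v5 ≠ v6 := by
    intro h
    rw [h, SimpleGraph.edist_self] at hdist56
    norm_num at hdist56
  have nadj56 : ¬ G.Adj v5 v6 := by
    intro h
    have h1 := SimpleGraph.edist_eq_one_iff_adj.mpr h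
    rw [hdist56] at h1
    norm_num at h1
  by_cases hv5D : v5 ∈ D
  · -- Case I : v5 ∈ D
    have dome : ∀ p, p ∈ D → G.Adj e p → p = v5 := fun p hp h => dd e heD p hp h v5 hv5D hev5
    have hv6D : v6 ∉ D := fun h => nev56 (dome v6 h hev6).symm
    obtain ⟨y, ⟨hyD, hv6y⟩, -⟩ := hD.2 v6 hv6D
    have hya : y ≠ a := fun h => nav6 (show G.Adj a v6 by rw [← h]; exact hv6y.symm)
    have hyv5 : y ≠ v5 := fun h => nadj56 (show G.Adj v5 v6 by rw [← h]; exact hv6y.symm)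
    exact noP6 hP6 v1 a c e v6 y hav1.symm hac hce hev6 hv6y
      (fun h => adj_adj_far3 h hcv3 h13)
      (fun h => adj_adj_far3 h hev5 h15)
      (fun h => adj_far3 h h16)
      (fun h => hya (domv1 y hyD h))
      (fun h => nea5 (dome a haD h.symm))
      nav6
      (fun h => hD.1 a haD y hyD h)
      (fun h => adj_adj_far3 hcv3.symm h h36)
      (fun h => hya (domc y hyD h))
      (fun h => hyv5 (dome y hyD h))
      (fun h => adj_far3 (show G.Adj v1 v3 by rw [h]; exact hcv3) h13)
      (fun h => adj_far3 (show G.Adj v1 v5 by rw [h]; exact hev5) h15)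
      (ne_far3 h16)
      (fun h => adj_far3 (show G.Adj v1 v6 by rw [h]; exact hv6y.symm) h16)
      neae
      nea6
      (fun h => nav6 (show G.Adj a v6 by rw [h]; exact hv6y.symm))
      (fun h => adj_far3 (show G.Adj v3 v6 by rw [← h]; exact hcv3.symm) h36)
      (fun h => hcD (by rw [h]; exact hyD))
      (fun h => heD (by rw [h]; exact hyD))
  · -- Case II : v5 ∉ D, with dominator z
    obtain ⟨z, ⟨hzD, hv5z⟩, -⟩ := hD.2 v5 hv5D
    have hza : z ≠ a := fun h => nav5 (show G.Adj a v5 by rw [← h]; exact hv5z.symm)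
    have hzx : z ≠ x := fun h => nxv5 (show G.Adj x v5 by rw [← h]; exact hv5z.symm)
    have nza : ¬ G.Adj z a := fun h => hD.1 a haD z hzD h.symm
    have nzc : ¬ G.Adj z c := fun h => hza (domc z hzD h.symm)
    have nzv3 : ¬ G.Adj z v3 := fun h => hzx (domv3 z hzD h.symm)
    have nzv1 : ¬ G.Adj z v1 := fun h => hza (domv1 z hzD h.symm)
    by_cases hze : G.Adj z e
    · by_cases hzd : G.Adj z d
      · -- Case II.3 : z adjacent to both d and e
        have dome : ∀ p, p ∈ D → G.Adj e p → p = z := fun p hp h => dd e heD p hp h z hzD hze.symm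
        have domd : ∀ p, p ∈ D → G.Adj d p → p = z := fun p hp h => dd d hdD p hp h z hzD hzd.symm
        have domv5 : ∀ p, p ∈ D → G.Adj v5 p → p = z :=
          fun p hp h => dd v5 hv5D p hp h z hzD hv5z
        have nae : ¬ G.Adj a e := fun h => hza (dome a haD h.symm).symm
        have nad : ¬ G.Adj a d := fun h => hza (domd a haD h.symm).symm
        have nzv4 : ¬ G.Adj z v4 := by
          intro h
          exact noBanner hBanner c v4 z e a hcv4 h.symm hze hce.symm hac.symm
            (fun h' => nzc h'.symm)
            (fun h' => adj_adj_far3 h' hev6 h46)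
            (fun h' => nav4 h'.symm)
            nza
            (fun h' => nae h'.symm)
            (fun h' => hcD (by rw [h']; exact hzD))
            (fun h' => adj_far3 (show G.Adj v4 v6 by rw [h']; exact hev6) h46)
            (fun h' => nea4 h'.symm)
            hza
            (fun h' => neae h'.symm)
        obtain ⟨w, ⟨hwD, hv4w⟩, -⟩ := hD.2 v4 hv4D
        have hwa : w ≠ a := fun h => nav4 (show G.Adj a v4 by rw [← h]; exact hv4w.symm)
        have hwz : w ≠ z := fun h => nzv4 (show G.Adj z v4 by rw [← h]; exact hv4w.symm)
        have nwc : ¬ G.Adj w c := fun h => hwa (domc w hwD h.symm)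
        have nwd : ¬ G.Adj w d := fun h => hwz (domd w hwD h.symm)
        have nwe : ¬ G.Adj w e := fun h => hwz (dome w hwD h.symm)
        have nwv5 : ¬ G.Adj w v5 := fun h => hwz (domv5 w hwD h.symm)
        have nwv6 : ¬ G.Adj w v6 := fun h => adj_adj_far3 hv4w h h46
        by_cases hzv6 : G.Adj z v6
        · -- induced P6 : v1 - a - c - d - z - v6
          exact noP6 hP6 v1 a c d z v6 hav1.symm hac hcd hzd.symm hzv6
            (fun h => adj_adj_far3 h hcv3 h13)
            (fun h => adj_adj_far3 h hdv5 h15)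
            (fun h => nzv1 h.symm)
            (fun h => adj_far3 h h16)
            nad
            (fun h => hD.1 a haD z hzD h)
            nav6
            (fun h => nzc h.symm)
            (fun h => adj_adj_far3 hcv3.symm h h36)
            (fun h => adj_adj_far3 hdv4.symm h h46)
            (fun h => adj_far3 (show G.Adj v1 v3 by rw [h]; exact hcv3) h13)
            (fun h => adj_far3 (show G.Adj v1 v5 by rw [h]; exact hdv5) h15)
            (fun h => adj_far3 (show G.Adj v1 v5 by rw [h]; exact hv5z.symm) h15)
            (ne_far3 h16)
            nead
            (fun h => hza h.symm)
            nea6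
            (fun h => hcD (by rw [h]; exact hzD))
            (fun h => adj_far3 (show G.Adj v3 v6 by rw [← h]; exact hcv3.symm) h36)
            (fun h => adj_far3 (show G.Adj v4 v6 by rw [← h]; exact hdv4.symm) h46)
        · -- induced P6 : w - v4 - c - e - v6 - u
          have hv6D : v6 ∉ D := fun h =>
            nadj56 (show G.Adj v5 v6 by rw [dome v6 h hev6]; exact hv5z)
          obtain ⟨u, ⟨huD, hv6u⟩, -⟩ := hD.2 v6 hv6D
          have hua : u ≠ a := fun h => nav6 (show G.Adj a v6 by rw [← h]; exact hv6u.symm)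
          have huz : u ≠ z := fun h => hzv6 (show G.Adj z v6 by rw [← h]; exact hv6u.symm)
          have huw : u ≠ w := fun h => nwv6 (show G.Adj w v6 by rw [← h]; exact hv6u.symm)
          exact noP6 hP6 w v4 c e v6 u hv4w.symm hcv4.symm hce hev6 hv6u
            nwc
            nwe
            nwv6
            (fun h => hD.1 w hwD u huD h)
            (fun h => adj_adj_far3 h hev6 h46)
            (fun h => adj_far3 h h46)
            (fun h => huw (dd v4 hv4D u huD h w hwD hv4w))
            (fun h => adj_adj_far3 hcv3.symm h h36)
            (fun h => hua (domc u huD h))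
            (fun h => huz (dome u huD h))
            (fun h => hcD (by rw [← h]; exact hwD))
            (fun h => heD (by rw [← h]; exact hwD))
            (fun h => adj_far3 (show G.Adj v4 v6 by rw [← h]; exact hv4w) h46)
            (fun h => huw h.symm)
            (fun h => adj_far3 (show G.Adj v4 v6 by rw [h]; exact hev6) h46)
            (ne_far3 h46)
            (fun h => adj_far3 (show G.Adj v4 v6 by rw [h]; exact hv6u.symm) h46)
            (fun h => adj_far3 (show G.Adj v3 v6 by rw [← h]; exact hcv3.symm) h36)
            (fun h => hcD (by rw [h]; exact huD))
            (fun h => heD (by rw [h]; exact huD))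
      · -- Case II.2 : induced P6 : x - v3 - c - d - v5 - z
        exact noP6 hP6 x v3 c d v5 z hv3x.symm hcv3.symm hcd hdv5 hv5z
          nxc
          nxd
          nxv5
          (fun h => hD.1 x hxD z hzD h)
          (fun h => adj_adj_far3 h hdv5 h35)
          (fun h => adj_far3 h h35)
          (fun h => nzv3 h.symm)
          (fun h => adj_adj_far3 hcv3.symm h h35)
          (fun h => nzc h.symm)
          (fun h => hzd h.symm)
          (fun h => hcD (by rw [← h]; exact hxD))
          (fun h => hdD (by rw [← h]; exact hxD))
          (fun h => hv5D (by rw [← h]; exact hxD))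
          (fun h => hzx h.symm)
          (fun h => adj_far3 (show G.Adj v3 v5 by rw [h]; exact hdv5) h35)
          (ne_far3 h35)
          (fun h => adj_far3 (show G.Adj v3 v5 by rw [h]; exact hv5z.symm) h35)
          (fun h => adj_far3 (show G.Adj v3 v5 by rw [← h]; exact hcv3.symm) h35)
          (fun h => hcD (by rw [h]; exact hzD))
          (fun h => hdD (by rw [h]; exact hzD))
    · -- Case II.1 : induced P6 : x - v3 - c - e - v5 - z
      exact noP6 hP6 x v3 c e v5 z hv3x.symm hcv3.symm hce hev5 hv5z
        nxc
        nxe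
        nxv5
        (fun h => hD.1 x hxD z hzD h)
        (fun h => adj_adj_far3 h hev5 h35)
        (fun h => adj_far3 h h35)
        (fun h => nzv3 h.symm)
        (fun h => adj_adj_far3 hcv3.symm h h35)
        (fun h => nzc h.symm)
        (fun h => hze h.symm)
        (fun h => hcD (by rw [← h]; exact hxD))
        (fun h => heD (by rw [← h]; exact hxD))
        (fun h => hv5D (by rw [← h]; exact hxD))
        (fun h => hzx h.symm)
        (fun h => adj_far3 (show G.Adj v3 v5 by rw [h]; exact hev5) h35)
        (ne_far3 h35)
        (fun h => adj_far3 (show G.Adj v3 v5 by rw [h]; exact hv5z.symm) h35)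
        (fun h => adj_far3 (show G.Adj v3 v5 by rw [← h]; exact hcv3.symm) h35)
        (fun h => hcD (by rw [h]; exact hzD))
        (fun h => heD (by rw [h]; exact hzD))

end Case2Aux

theorem path_case21_a_e_notin_D {V : Type*} [Fintype V] (G : SimpleGraph V)
    (hP6 : IsInducedFree (SimpleGraph.pathGraph 6) G)
    (hBanner : IsInducedFree banner G)
    (D : Set V) (hD : G.IsEfficientDominatingSet D)
    (v1 v2 v3 v4 v5 v6 : V)
    (h12 : G.edist v1 v2 ≤ 2) (h23 : G.edist v2 v3 ≤ 2) (h34 : G.edist v3 v4 ≤ 2)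
    (h45 : G.edist v4 v5 ≤ 2) (h56 : G.edist v5 v6 ≤ 2)
    (h13 : 3 ≤ G.edist v1 v3) (h14 : 3 ≤ G.edist v1 v4) (h15 : 3 ≤ G.edist v1 v5)
    (h16 : 3 ≤ G.edist v1 v6) (h24 : 3 ≤ G.edist v2 v4) (h25 : 3 ≤ G.edist v2 v5)
    (h26 : 3 ≤ G.edist v2 v6) (h35 : 3 ≤ G.edist v3 v5) (h36 : 3 ≤ G.edist v3 v6)
    (h46 : 3 ≤ G.edist v4 v6)
    (hdist12 : G.edist v1 v2 = 2) (hdist56 : G.edist v5 v6 = 2)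
    (a e b d c : V)
    (hav1 : G.Adj a v1) (hav2 : G.Adj a v2) (hev5 : G.Adj e v5) (hev6 : G.Adj e v6)
    (hbv2 : G.Adj b v2) (hbv3 : G.Adj b v3) (hdv4 : G.Adj d v4) (hdv5 : G.Adj d v5)
    (hcv3 : G.Adj c v3) (hcv4 : G.Adj c v4)
    (hab : G.Adj a b) (hbc : G.Adj b c) (hcd : G.Adj c d) (hde : G.Adj d e)
    (hac : G.Adj a c) (hce : G.Adj c e) (hbd : ¬ G.Adj b d)
    : a ∉ D ∧ e ∉ D := by
  constructor
  · exact fun haD => Case2Aux.core G hP6 hBanner D hD v1 v3 v4 v5 v6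
      h13 h14 h15 h16 h35 h36 h46 hdist56 a e d c
      hav1 hev5 hev6 hdv4 hdv5 hcv3 hcv4 hcd hde hac hce haD
  · -- by symmetry : reverse the path
    have h64 : 3 ≤ G.edist v6 v4 := by rwa [SimpleGraph.edist_comm]
    have h63 : 3 ≤ G.edist v6 v3 := by rwa [SimpleGraph.edist_comm]
    have h62 : 3 ≤ G.edist v6 v2 := by rwa [SimpleGraph.edist_comm]
    have h61 : 3 ≤ G.edist v6 v1 := by rwa [SimpleGraph.edist_comm]
    have h42 : 3 ≤ G.edist v4 v2 := by rwa [SimpleGraph.edist_comm]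
    have h41 : 3 ≤ G.edist v4 v1 := by rwa [SimpleGraph.edist_comm]
    have h31 : 3 ≤ G.edist v3 v1 := by rwa [SimpleGraph.edist_comm]
    have hdist21 : G.edist v2 v1 = 2 := by rwa [SimpleGraph.edist_comm]
    exact fun heD => Case2Aux.core G hP6 hBanner D hD v6 v4 v3 v2 v1
      h64 h63 h62 h61 h42 h41 h31 hdist21 e a b c
      hev6 hav2 hav1 hbv3 hbv2 hcv4 hcv3 hbc.symm hab.symm hce.symm hac.symm heD
end

section
/- Under the Case 2 configuration of the path-in-square setting, if additionally ab, bc, cd, de, ac, ce are edges of G, bd is not an edge of G, and v2', v5' are distinct vertices of D with v2'v2 and v5'v5 edges of G, then v2'b and v5'd are edges of G. -/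
section Helpers
variable {V : Type*} {G : SimpleGraph V} {D : Set V} {u v x y z : V}

lemma edist_false (h3 : 3 ≤ G.edist u v) (h : G.Adj u v) : False := by
  have := SimpleGraph.edist_eq_one_iff_adj.mpr h
  rw [this] at h3; exact absurd h3 (by decide)

lemma edist2_nadj (h2 : G.edist u v = 2) : ¬ G.Adj u v := by
  intro h
  have := SimpleGraph.edist_eq_one_iff_adj.mpr h
  rw [this] at h2; exact absurd h2 (by decide)

lemma common_false (h3 : 3 ≤ G.edist u v) (h1 : G.Adj x u) (h2 : G.Adj x v) : False := by
  have t : G.edist u v ≤ G.edist u x + G.edist x v := G.edist_triangle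
  rw [SimpleGraph.edist_eq_one_iff_adj.mpr h1.symm, SimpleGraph.edist_eq_one_iff_adj.mpr h2] at t
  have := le_trans h3 t
  exact absurd this (by decide)

lemma uniq_false (hD : G.IsEfficientDominatingSet D) (hyD : y ∈ D) (hzD : z ∈ D)
    (hyz : y ≠ z) (hxy : G.Adj x y) (hxz : G.Adj x z) : False := by
  have hxD : x ∉ D := fun h => hD.1 x h y hyD hxy
  obtain ⟨u, -, hu⟩ := hD.2 x hxD
  exact hyz ((hu y ⟨hyD, hxy⟩).trans (hu z ⟨hzD, hxz⟩).symm)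

lemma p6_false (hP6 : IsInducedFree (SimpleGraph.pathGraph 6) G)
    (x0 x1 x2 x3 x4 x5 : V)
    (a01 : G.Adj x0 x1) (a12 : G.Adj x1 x2) (a23 : G.Adj x2 x3)
    (a34 : G.Adj x3 x4) (a45 : G.Adj x4 x5)
    (n02 : ¬G.Adj x0 x2) (n03 : ¬G.Adj x0 x3) (n04 : ¬G.Adj x0 x4) (n05 : ¬G.Adj x0 x5)
    (n13 : ¬G.Adj x1 x3) (n14 : ¬G.Adj x1 x4) (n15 : ¬G.Adj x1 x5)
    (n24 : ¬G.Adj x2 x4) (n25 : ¬G.Adj x2 x5) (n35 : ¬G.Adj x3 x5) : False := by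
  have d01 : x0 ≠ x1 := a01.ne
  have d12 : x1 ≠ x2 := a12.ne
  have d23 : x2 ≠ x3 := a23.ne
  have d34 : x3 ≠ x4 := a34.ne
  have d45 : x4 ≠ x5 := a45.ne
  have d02 : x0 ≠ x2 := by rintro rfl; exact n03 a23
  have d03 : x0 ≠ x3 := by rintro rfl; exact n04 a34
  have d04 : x0 ≠ x4 := by rintro rfl; exact n05 a45
  have d05 : x0 ≠ x5 := by rintro rfl; exact n04 a45.symm
  have d13 : x1 ≠ x3 := by rintro rfl; exact n14 a34
  have d14 : x1 ≠ x4 := by rintro rfl; exact n15 a45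
  have d15 : x1 ≠ x5 := by rintro rfl; exact n14 a45.symm
  have d24 : x2 ≠ x4 := by rintro rfl; exact n25 a45
  have d25 : x2 ≠ x5 := by rintro rfl; exact n24 a45.symm
  have d35 : x3 ≠ x5 := by rintro rfl; exact n25 a23
  have a10 := a01.symm; have a21 := a12.symm; have a32 := a23.symm
  have a43 := a34.symm; have a54 := a45.symm
  have n20 : ¬G.Adj x2 x0 := fun h => n02 h.symm
  have n30 : ¬G.Adj x3 x0 := fun h => n03 h.symm
  have n40 : ¬G.Adj x4 x0 := fun h => n04 h.symm
  have n50 : ¬G.Adj x5 x0 := fun h => n05 h.symm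
  have n31 : ¬G.Adj x3 x1 := fun h => n13 h.symm
  have n41 : ¬G.Adj x4 x1 := fun h => n14 h.symm
  have n51 : ¬G.Adj x5 x1 := fun h => n15 h.symm
  have n42 : ¬G.Adj x4 x2 := fun h => n24 h.symm
  have n52 : ¬G.Adj x5 x2 := fun h => n25 h.symm
  have n53 : ¬G.Adj x5 x3 := fun h => n35 h.symm
  let f : Fin 6 → V := ![x0, x1, x2, x3, x4, x5]
  have hinj : Function.Injective f := by
    intro i j
    fin_cases i <;> fin_cases j <;> intro h <;>
      first
        | rfl
        | exact absurd h (by assumption)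
        | exact absurd h.symm (by assumption)
  refine hP6.false ⟨⟨f, hinj⟩, ?_⟩
  intro i j
  fin_cases i <;> fin_cases j <;>
    first
      | exact iff_of_false (G.irrefl) (by rw [SimpleGraph.pathGraph_adj]; decide)
      | exact iff_of_true (by assumption) (by rw [SimpleGraph.pathGraph_adj]; decide)
      | exact iff_of_false (by assumption) (by rw [SimpleGraph.pathGraph_adj]; decide)

lemma banner_false (hB : IsInducedFree banner G)
    (x0 x1 x2 x3 x4 : V) (d13 : x1 ≠ x3)
    (a01 : G.Adj x0 x1) (a12 : G.Adj x1 x2) (a23 : G.Adj x2 x3)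
    (a30 : G.Adj x3 x0) (a04 : G.Adj x0 x4)
    (n02 : ¬G.Adj x0 x2) (n13 : ¬G.Adj x1 x3) (n14 : ¬G.Adj x1 x4)
    (n24 : ¬G.Adj x2 x4) (n34 : ¬G.Adj x3 x4) : False := by
  have d01 : x0 ≠ x1 := a01.ne
  have d12 : x1 ≠ x2 := a12.ne
  have d23 : x2 ≠ x3 := a23.ne
  have d30 : x3 ≠ x0 := a30.ne
  have d04 : x0 ≠ x4 := a04.ne
  have d02 : x0 ≠ x2 := by rintro rfl; exact n24 a04
  have d14 : x1 ≠ x4 := by rintro rfl; exact n24 a12.symm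
  have d24 : x2 ≠ x4 := by rintro rfl; exact n34 a23.symm
  have d34 : x3 ≠ x4 := by rintro rfl; exact n24 a23
  have d03 : x0 ≠ x3 := d30.symm
  have a10 := a01.symm; have a21 := a12.symm; have a32 := a23.symm
  have a03 := a30.symm; have a40 := a04.symm
  have n20 : ¬G.Adj x2 x0 := fun h => n02 h.symm
  have n31 : ¬G.Adj x3 x1 := fun h => n13 h.symm
  have n41 : ¬G.Adj x4 x1 := fun h => n14 h.symm
  have n42 : ¬G.Adj x4 x2 := fun h => n24 h.symm
  have n43 : ¬G.Adj x4 x3 := fun h => n34 h.symm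
  let f : Fin 5 → V := ![x0, x1, x2, x3, x4]
  have hinj : Function.Injective f := by
    intro i j
    fin_cases i <;> fin_cases j <;> intro h <;>
      first
        | rfl
        | exact absurd h (by assumption)
        | exact absurd h.symm (by assumption)
  refine hB.false ⟨⟨f, hinj⟩, ?_⟩
  intro i j
  fin_cases i <;> fin_cases j <;>
    first
      | exact iff_of_false (G.irrefl) (by simp [banner, SimpleGraph.fromEdgeSet_adj])
      | exact iff_of_true (by assumption) (by simp [banner, SimpleGraph.fromEdgeSet_adj])
      | exact iff_of_false (by assumption) (by simp [banner, SimpleGraph.fromEdgeSet_adj])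

end Helpers

set_option maxHeartbeats 2000000 in
private lemma path_case21_aux {V : Type*} [Fintype V] (G : SimpleGraph V)
    (hP6 : IsInducedFree (SimpleGraph.pathGraph 6) G)
    (hBanner : IsInducedFree banner G)
    (D : Set V) (hD : G.IsEfficientDominatingSet D)
    (v1 v2 v3 v4 v5 v6 : V)
    (h12 : G.edist v1 v2 ≤ 2) (h23 : G.edist v2 v3 ≤ 2) (h34 : G.edist v3 v4 ≤ 2)
    (h45 : G.edist v4 v5 ≤ 2) (h56 : G.edist v5 v6 ≤ 2)
    (h13 : 3 ≤ G.edist v1 v3) (h14 : 3 ≤ G.edist v1 v4) (h15 : 3 ≤ G.edist v1 v5)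
    (h16 : 3 ≤ G.edist v1 v6) (h24 : 3 ≤ G.edist v2 v4) (h25 : 3 ≤ G.edist v2 v5)
    (h26 : 3 ≤ G.edist v2 v6) (h35 : 3 ≤ G.edist v3 v5) (h36 : 3 ≤ G.edist v3 v6)
    (h46 : 3 ≤ G.edist v4 v6)
    (hdist12 : G.edist v1 v2 = 2) (hdist56 : G.edist v5 v6 = 2)
    (a e b d c : V)
    (hav1 : G.Adj a v1) (hav2 : G.Adj a v2) (hev5 : G.Adj e v5) (hev6 : G.Adj e v6)
    (hbv2 : G.Adj b v2) (hbv3 : G.Adj b v3) (hdv4 : G.Adj d v4) (hdv5 : G.Adj d v5)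
    (hcv3 : G.Adj c v3) (hcv4 : G.Adj c v4)
    (hab : G.Adj a b) (hbc : G.Adj b c) (hcd : G.Adj c d) (hde : G.Adj d e)
    (hac : G.Adj a c) (hce : G.Adj c e) (hbd : ¬ G.Adj b d)
    (v2' v5' : V) (hne : v2' ≠ v5') (hv2'D : v2' ∈ D) (hv5'D : v5' ∈ D)
    (hv2'v2 : G.Adj v2' v2) (hv5'v5 : G.Adj v5' v5)
    (hnadj : ¬ G.Adj v2' b) : False := by
  by_cases hpb : v2' = b
  · subst hpb
    by_cases hqd : v5' = d
    · subst hqd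
      have hA1 : ¬ G.Adj v1 v3 := fun hh => edist_false h13 hh
      have hA2 : ¬ G.Adj a v3 := fun hh => common_false h13 hav1 hh
      have hA3 : ¬ G.Adj v2' v1 := fun hh => common_false h13 hh hbv3
      have hA4 : ¬ G.Adj c v1 := fun hh => common_false h13 hh hcv3
      have hA5 : ¬ G.Adj v1 v4 := fun hh => edist_false h14 hh
      have hA6 : ¬ G.Adj a v4 := fun hh => common_false h14 hav1 hh
      have hA7 : ¬ G.Adj v5' v1 := fun hh => common_false h14 hh hdv4
      have hA8 : ¬ G.Adj v1 v5 := fun hh => edist_false h15 hh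
      have hA9 : ¬ G.Adj a v5 := fun hh => common_false h15 hav1 hh
      have hA10 : ¬ G.Adj e v1 := fun hh => common_false h15 hh hev5
      have hA11 : ¬ G.Adj v1 v6 := fun hh => edist_false h16 hh
      have hA12 : ¬ G.Adj a v6 := fun hh => common_false h16 hav1 hh
      have hA13 : ¬ G.Adj v2 v4 := fun hh => edist_false h24 hh
      have hA14 : ¬ G.Adj v2' v4 := fun hh => common_false h24 hbv2 hh
      have hA15 : ¬ G.Adj c v2 := fun hh => common_false h24 hh hcv4
      have hA16 : ¬ G.Adj v5' v2 := fun hh => common_false h24 hh hdv4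
      have hA17 : ¬ G.Adj v2 v5 := fun hh => edist_false h25 hh
      have hA18 : ¬ G.Adj v2' v5 := fun hh => common_false h25 hbv2 hh
      have hA19 : ¬ G.Adj e v2 := fun hh => common_false h25 hh hev5
      have hA20 : ¬ G.Adj v2 v6 := fun hh => edist_false h26 hh
      have hA21 : ¬ G.Adj v2' v6 := fun hh => common_false h26 hbv2 hh
      have hA22 : ¬ G.Adj v3 v5 := fun hh => edist_false h35 hh
      have hA23 : ¬ G.Adj c v5 := fun hh => common_false h35 hcv3 hh
      have hA24 : ¬ G.Adj v5' v3 := fun hh => common_false h35 hh hdv5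
      have hA25 : ¬ G.Adj e v3 := fun hh => common_false h35 hh hev5
      have hA26 : ¬ G.Adj v3 v6 := fun hh => edist_false h36 hh
      have hA27 : ¬ G.Adj c v6 := fun hh => common_false h36 hcv3 hh
      have hA28 : ¬ G.Adj v4 v6 := fun hh => edist_false h46 hh
      have hA29 : ¬ G.Adj v5' v6 := fun hh => common_false h46 hdv4 hh
      have hA30 : ¬ G.Adj e v4 := fun hh => common_false h46 hh hev6
      have hA31 : ¬ G.Adj v1 v2 := edist2_nadj hdist12
      have hA32 : ¬ G.Adj v5 v6 := edist2_nadj hdist56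
      have hA33 : v2 ∉ D := fun hh => hD.1 v2' hv2'D v2 hh hbv2
      have hA34 : v3 ∉ D := fun hh => hD.1 v2' hv2'D v3 hh hbv3
      have hA35 : a ∉ D := fun hh => hD.1 v2' hv2'D a hh hab.symm
      have hA36 : c ∉ D := fun hh => hD.1 v2' hv2'D c hh hbc
      have hA37 : v4 ∉ D := fun hh => hD.1 v5' hv5'D v4 hh hdv4
      have hA38 : v5 ∉ D := fun hh => hD.1 v5' hv5'D v5 hh hdv5
      have hA39 : e ∉ D := fun hh => hD.1 v5' hv5'D e hh hde
      have hA40 : ¬ G.Adj a v5' := fun hh => uniq_false hD hv2'D hv5'D (by rintro rfl; exact hA16 hbv2) hab hh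
      have hA41 : v1 ∉ D := fun hh => uniq_false hD hv2'D hh (by rintro rfl; exact hA31 hbv2) hab hav1
      exact uniq_false hD hv2'D hv5'D (by rintro rfl; exact hA16 hbv2) hbc.symm hcd
    · by_cases hqe : v5' = e
      · subst hqe
        have hA1 : ¬ G.Adj v1 v3 := fun hh => edist_false h13 hh
        have hA2 : ¬ G.Adj a v3 := fun hh => common_false h13 hav1 hh
        have hA3 : ¬ G.Adj v2' v1 := fun hh => common_false h13 hh hbv3
        have hA4 : ¬ G.Adj c v1 := fun hh => common_false h13 hh hcv3
        have hA5 : ¬ G.Adj v1 v4 := fun hh => edist_false h14 hh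
        have hA6 : ¬ G.Adj a v4 := fun hh => common_false h14 hav1 hh
        have hA7 : ¬ G.Adj d v1 := fun hh => common_false h14 hh hdv4
        have hA8 : ¬ G.Adj v1 v5 := fun hh => edist_false h15 hh
        have hA9 : ¬ G.Adj a v5 := fun hh => common_false h15 hav1 hh
        have hA10 : ¬ G.Adj v5' v1 := fun hh => common_false h15 hh hev5
        have hA11 : ¬ G.Adj v1 v6 := fun hh => edist_false h16 hh
        have hA12 : ¬ G.Adj a v6 := fun hh => common_false h16 hav1 hh
        have hA13 : ¬ G.Adj v2 v4 := fun hh => edist_false h24 hh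
        have hA14 : ¬ G.Adj v2' v4 := fun hh => common_false h24 hbv2 hh
        have hA15 : ¬ G.Adj c v2 := fun hh => common_false h24 hh hcv4
        have hA16 : ¬ G.Adj d v2 := fun hh => common_false h24 hh hdv4
        have hA17 : ¬ G.Adj v2 v5 := fun hh => edist_false h25 hh
        have hA18 : ¬ G.Adj v2' v5 := fun hh => common_false h25 hbv2 hh
        have hA19 : ¬ G.Adj v5' v2 := fun hh => common_false h25 hh hev5
        have hA20 : ¬ G.Adj v2 v6 := fun hh => edist_false h26 hh
        have hA21 : ¬ G.Adj v2' v6 := fun hh => common_false h26 hbv2 hh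
        have hA22 : ¬ G.Adj v3 v5 := fun hh => edist_false h35 hh
        have hA23 : ¬ G.Adj c v5 := fun hh => common_false h35 hcv3 hh
        have hA24 : ¬ G.Adj d v3 := fun hh => common_false h35 hh hdv5
        have hA25 : ¬ G.Adj v5' v3 := fun hh => common_false h35 hh hev5
        have hA26 : ¬ G.Adj v3 v6 := fun hh => edist_false h36 hh
        have hA27 : ¬ G.Adj c v6 := fun hh => common_false h36 hcv3 hh
        have hA28 : ¬ G.Adj v4 v6 := fun hh => edist_false h46 hh
        have hA29 : ¬ G.Adj d v6 := fun hh => common_false h46 hdv4 hh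
        have hA30 : ¬ G.Adj v5' v4 := fun hh => common_false h46 hh hev6
        have hA31 : ¬ G.Adj v1 v2 := edist2_nadj hdist12
        have hA32 : ¬ G.Adj v5 v6 := edist2_nadj hdist56
        have hA33 : ¬ G.Adj v2' v5' := hD.1 v2' hv2'D v5' hv5'D
        have hA34 : v2 ∉ D := fun hh => hD.1 v2' hv2'D v2 hh hbv2
        have hA35 : v3 ∉ D := fun hh => hD.1 v2' hv2'D v3 hh hbv3
        have hA36 : a ∉ D := fun hh => hD.1 v2' hv2'D a hh hab.symm
        have hA37 : c ∉ D := fun hh => hD.1 v2' hv2'D c hh hbc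
        have hA38 : v5 ∉ D := fun hh => hD.1 v5' hv5'D v5 hh hev5
        have hA39 : v6 ∉ D := fun hh => hD.1 v5' hv5'D v6 hh hev6
        have hA40 : d ∉ D := fun hh => hD.1 v5' hv5'D d hh hde.symm
        have hA41 : ¬ G.Adj a v5' := fun hh => uniq_false hD hv2'D hv5'D (by rintro rfl; exact hA19 hbv2) hab hh
        have hA42 : v1 ∉ D := fun hh => uniq_false hD hv2'D hh (by rintro rfl; exact hA31 hbv2) hab hav1
        exact uniq_false hD hv2'D hv5'D (by rintro rfl; exact hA19 hbv2) hbc.symm hce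
      · by_cases hqv4 : v5' = v4
        · subst hqv4
          have hA1 : ¬ G.Adj v1 v3 := fun hh => edist_false h13 hh
          have hA2 : ¬ G.Adj a v3 := fun hh => common_false h13 hav1 hh
          have hA3 : ¬ G.Adj v2' v1 := fun hh => common_false h13 hh hbv3
          have hA4 : ¬ G.Adj c v1 := fun hh => common_false h13 hh hcv3
          have hA5 : ¬ G.Adj v1 v5' := fun hh => edist_false h14 hh
          have hA6 : ¬ G.Adj v5 v1 := fun hh => common_false h14 hh hv5'v5.symm
          have hA7 : ¬ G.Adj a v5' := fun hh => common_false h14 hav1 hh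
          have hA8 : ¬ G.Adj d v1 := fun hh => common_false h14 hh hdv4
          have hA9 : ¬ G.Adj a v5 := fun hh => common_false h15 hav1 hh
          have hA10 : ¬ G.Adj e v1 := fun hh => common_false h15 hh hev5
          have hA11 : ¬ G.Adj v1 v6 := fun hh => edist_false h16 hh
          have hA12 : ¬ G.Adj a v6 := fun hh => common_false h16 hav1 hh
          have hA13 : ¬ G.Adj v2 v5' := fun hh => edist_false h24 hh
          have hA14 : ¬ G.Adj v5 v2 := fun hh => common_false h24 hh hv5'v5.symm
          have hA15 : ¬ G.Adj v2' v5' := fun hh => common_false h24 hbv2 hh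
          have hA16 : ¬ G.Adj c v2 := fun hh => common_false h24 hh hcv4
          have hA17 : ¬ G.Adj d v2 := fun hh => common_false h24 hh hdv4
          have hA18 : ¬ G.Adj v2' v5 := fun hh => common_false h25 hbv2 hh
          have hA19 : ¬ G.Adj e v2 := fun hh => common_false h25 hh hev5
          have hA20 : ¬ G.Adj v2 v6 := fun hh => edist_false h26 hh
          have hA21 : ¬ G.Adj v2' v6 := fun hh => common_false h26 hbv2 hh
          have hA22 : ¬ G.Adj v3 v5 := fun hh => edist_false h35 hh
          have hA23 : ¬ G.Adj v5' v3 := fun hh => common_false h35 hh hv5'v5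
          have hA24 : ¬ G.Adj c v5 := fun hh => common_false h35 hcv3 hh
          have hA25 : ¬ G.Adj d v3 := fun hh => common_false h35 hh hdv5
          have hA26 : ¬ G.Adj e v3 := fun hh => common_false h35 hh hev5
          have hA27 : ¬ G.Adj v3 v6 := fun hh => edist_false h36 hh
          have hA28 : ¬ G.Adj c v6 := fun hh => common_false h36 hcv3 hh
          have hA29 : ¬ G.Adj v5' v6 := fun hh => edist_false h46 hh
          have hA30 : ¬ G.Adj v5 v6 := fun hh => common_false h46 hv5'v5.symm hh
          have hA31 : ¬ G.Adj d v6 := fun hh => common_false h46 hdv4 hh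
          have hA32 : ¬ G.Adj e v5' := fun hh => common_false h46 hh hev6
          have hA33 : ¬ G.Adj v1 v2 := edist2_nadj hdist12
          have hA34 : v5 ∉ D := fun hh => hD.1 v5' hv5'D v5 hh hv5'v5
          have hA35 : c ∉ D := fun hh => hD.1 v5' hv5'D c hh hcv4.symm
          have hA36 : d ∉ D := fun hh => hD.1 v5' hv5'D d hh hdv4.symm
          have hA37 : v2 ∉ D := fun hh => hD.1 v2' hv2'D v2 hh hbv2
          have hA38 : v3 ∉ D := fun hh => hD.1 v2' hv2'D v3 hh hbv3
          have hA39 : a ∉ D := fun hh => hD.1 v2' hv2'D a hh hab.symm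
          have hA40 : e ∉ D := fun hh => uniq_false hD hv5'D hh (by rintro rfl; exact hA29 hev6) hv5'v5.symm hev5.symm
          have hA41 : v1 ∉ D := fun hh => uniq_false hD hv2'D hh (by rintro rfl; exact hA33 hbv2) hab hav1
          exact uniq_false hD hv5'D hv2'D (by rintro rfl; exact (fun hh => hA13 hh.symm) hbv2) hcv4 hbc.symm
        · by_cases hv1D : v1 ∈ D
          ·
            have hA1 : ¬ G.Adj v1 v3 := fun hh => edist_false h13 hh
            have hA2 : ¬ G.Adj a v3 := fun hh => common_false h13 hav1 hh
            have hA3 : ¬ G.Adj v2' v1 := fun hh => common_false h13 hh hbv3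
            have hA4 : ¬ G.Adj c v1 := fun hh => common_false h13 hh hcv3
            have hA5 : ¬ G.Adj v1 v4 := fun hh => edist_false h14 hh
            have hA6 : ¬ G.Adj a v4 := fun hh => common_false h14 hav1 hh
            have hA7 : ¬ G.Adj d v1 := fun hh => common_false h14 hh hdv4
            have hA8 : ¬ G.Adj v1 v5 := fun hh => edist_false h15 hh
            have hA9 : ¬ G.Adj a v5 := fun hh => common_false h15 hav1 hh
            have hA10 : ¬ G.Adj e v1 := fun hh => common_false h15 hh hev5
            have hA11 : ¬ G.Adj v5' v1 := fun hh => common_false h15 hh hv5'v5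
            have hA12 : ¬ G.Adj v1 v6 := fun hh => edist_false h16 hh
            have hA13 : ¬ G.Adj a v6 := fun hh => common_false h16 hav1 hh
            have hA14 : ¬ G.Adj v2 v4 := fun hh => edist_false h24 hh
            have hA15 : ¬ G.Adj v2' v4 := fun hh => common_false h24 hbv2 hh
            have hA16 : ¬ G.Adj c v2 := fun hh => common_false h24 hh hcv4
            have hA17 : ¬ G.Adj d v2 := fun hh => common_false h24 hh hdv4
            have hA18 : ¬ G.Adj v2 v5 := fun hh => edist_false h25 hh
            have hA19 : ¬ G.Adj v2' v5 := fun hh => common_false h25 hbv2 hh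
            have hA20 : ¬ G.Adj e v2 := fun hh => common_false h25 hh hev5
            have hA21 : ¬ G.Adj v5' v2 := fun hh => common_false h25 hh hv5'v5
            have hA22 : ¬ G.Adj v2 v6 := fun hh => edist_false h26 hh
            have hA23 : ¬ G.Adj v2' v6 := fun hh => common_false h26 hbv2 hh
            have hA24 : ¬ G.Adj v3 v5 := fun hh => edist_false h35 hh
            have hA25 : ¬ G.Adj c v5 := fun hh => common_false h35 hcv3 hh
            have hA26 : ¬ G.Adj d v3 := fun hh => common_false h35 hh hdv5
            have hA27 : ¬ G.Adj e v3 := fun hh => common_false h35 hh hev5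
            have hA28 : ¬ G.Adj v5' v3 := fun hh => common_false h35 hh hv5'v5
            have hA29 : ¬ G.Adj v3 v6 := fun hh => edist_false h36 hh
            have hA30 : ¬ G.Adj c v6 := fun hh => common_false h36 hcv3 hh
            have hA31 : ¬ G.Adj v4 v6 := fun hh => edist_false h46 hh
            have hA32 : ¬ G.Adj d v6 := fun hh => common_false h46 hdv4 hh
            have hA33 : ¬ G.Adj e v4 := fun hh => common_false h46 hh hev6
            have hA34 : ¬ G.Adj v1 v2 := edist2_nadj hdist12
            have hA35 : ¬ G.Adj v5 v6 := edist2_nadj hdist56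
            have hA36 : ¬ G.Adj v2' v5' := hD.1 v2' hv2'D v5' hv5'D
            have hA37 : a ∉ D := fun hh => hD.1 v1 hv1D a hh hav1.symm
            have hA38 : v2 ∉ D := fun hh => hD.1 v2' hv2'D v2 hh hbv2
            have hA39 : v3 ∉ D := fun hh => hD.1 v2' hv2'D v3 hh hbv3
            have hA40 : c ∉ D := fun hh => hD.1 v2' hv2'D c hh hbc
            have hA41 : v5 ∉ D := fun hh => hD.1 v5' hv5'D v5 hh hv5'v5
            have hA42 : d ∉ D := fun hh => uniq_false hD hv5'D hh hqd hv5'v5.symm hdv5.symm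
            have hA43 : e ∉ D := fun hh => uniq_false hD hv5'D hh hqe hv5'v5.symm hev5.symm
            exact uniq_false hD hv1D hv2'D (by rintro rfl; exact hA34 hbv2) hav1 hab
          · obtain ⟨x, ⟨hxD, hv1x⟩, -⟩ := hD.2 v1 hv1D
            by_cases hv6D : v6 ∈ D
            ·
              have hA1 : ¬ G.Adj v1 v3 := fun hh => edist_false h13 hh
              have hA2 : ¬ G.Adj a v3 := fun hh => common_false h13 hav1 hh
              have hA3 : ¬ G.Adj v2' v1 := fun hh => common_false h13 hh hbv3
              have hA4 : ¬ G.Adj c v1 := fun hh => common_false h13 hh hcv3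
              have hA5 : ¬ G.Adj x v3 := fun hh => common_false h13 hv1x.symm hh
              have hA6 : ¬ G.Adj v1 v4 := fun hh => edist_false h14 hh
              have hA7 : ¬ G.Adj a v4 := fun hh => common_false h14 hav1 hh
              have hA8 : ¬ G.Adj d v1 := fun hh => common_false h14 hh hdv4
              have hA9 : ¬ G.Adj x v4 := fun hh => common_false h14 hv1x.symm hh
              have hA10 : ¬ G.Adj v1 v5 := fun hh => edist_false h15 hh
              have hA11 : ¬ G.Adj a v5 := fun hh => common_false h15 hav1 hh
              have hA12 : ¬ G.Adj e v1 := fun hh => common_false h15 hh hev5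
              have hA13 : ¬ G.Adj v5' v1 := fun hh => common_false h15 hh hv5'v5
              have hA14 : ¬ G.Adj x v5 := fun hh => common_false h15 hv1x.symm hh
              have hA15 : ¬ G.Adj v1 v6 := fun hh => edist_false h16 hh
              have hA16 : ¬ G.Adj a v6 := fun hh => common_false h16 hav1 hh
              have hA17 : ¬ G.Adj x v6 := fun hh => common_false h16 hv1x.symm hh
              have hA18 : ¬ G.Adj v2 v4 := fun hh => edist_false h24 hh
              have hA19 : ¬ G.Adj v2' v4 := fun hh => common_false h24 hbv2 hh
              have hA20 : ¬ G.Adj c v2 := fun hh => common_false h24 hh hcv4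
              have hA21 : ¬ G.Adj d v2 := fun hh => common_false h24 hh hdv4
              have hA22 : ¬ G.Adj v2 v5 := fun hh => edist_false h25 hh
              have hA23 : ¬ G.Adj v2' v5 := fun hh => common_false h25 hbv2 hh
              have hA24 : ¬ G.Adj e v2 := fun hh => common_false h25 hh hev5
              have hA25 : ¬ G.Adj v5' v2 := fun hh => common_false h25 hh hv5'v5
              have hA26 : ¬ G.Adj v2 v6 := fun hh => edist_false h26 hh
              have hA27 : ¬ G.Adj v2' v6 := fun hh => common_false h26 hbv2 hh
              have hA28 : ¬ G.Adj v3 v5 := fun hh => edist_false h35 hh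
              have hA29 : ¬ G.Adj c v5 := fun hh => common_false h35 hcv3 hh
              have hA30 : ¬ G.Adj d v3 := fun hh => common_false h35 hh hdv5
              have hA31 : ¬ G.Adj e v3 := fun hh => common_false h35 hh hev5
              have hA32 : ¬ G.Adj v5' v3 := fun hh => common_false h35 hh hv5'v5
              have hA33 : ¬ G.Adj v3 v6 := fun hh => edist_false h36 hh
              have hA34 : ¬ G.Adj c v6 := fun hh => common_false h36 hcv3 hh
              have hA35 : ¬ G.Adj v4 v6 := fun hh => edist_false h46 hh
              have hA36 : ¬ G.Adj d v6 := fun hh => common_false h46 hdv4 hh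
              have hA37 : ¬ G.Adj e v4 := fun hh => common_false h46 hh hev6
              have hA38 : ¬ G.Adj v1 v2 := edist2_nadj hdist12
              have hA39 : ¬ G.Adj v5 v6 := edist2_nadj hdist56
              have hA40 : ¬ G.Adj v2' v5' := hD.1 v2' hv2'D v5' hv5'D
              have hA41 : ¬ G.Adj v2' x := hD.1 v2' hv2'D x hxD
              have hA42 : ¬ G.Adj v5' v6 := hD.1 v5' hv5'D v6 hv6D
              have hA43 : ¬ G.Adj v5' x := hD.1 v5' hv5'D x hxD
              have hA44 : e ∉ D := fun hh => hD.1 v6 hv6D e hh hev6.symm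
              have hA45 : v2 ∉ D := fun hh => hD.1 v2' hv2'D v2 hh hbv2
              have hA46 : v3 ∉ D := fun hh => hD.1 v2' hv2'D v3 hh hbv3
              have hA47 : a ∉ D := fun hh => hD.1 v2' hv2'D a hh hab.symm
              have hA48 : c ∉ D := fun hh => hD.1 v2' hv2'D c hh hbc
              have hA49 : v5 ∉ D := fun hh => hD.1 v5' hv5'D v5 hh hv5'v5
              have hA50 : v1 ∉ D := fun hh => hD.1 x hxD v1 hh hv1x.symm
              have hA51 : ¬ G.Adj v2 x := fun hh => uniq_false hD hv2'D hxD (by rintro rfl; exact hA3 hv1x.symm) hbv2.symm hh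
              have hA52 : d ∉ D := fun hh => uniq_false hD hv5'D hh hqd hv5'v5.symm hdv5.symm
              have hA53 : ¬ G.Adj a v5' := fun hh => uniq_false hD hv2'D hv5'D hne hab hh
              have hA54 : ¬ G.Adj a x := fun hh => uniq_false hD hv2'D hxD (by rintro rfl; exact hA3 hv1x.symm) hab hh
              have hA55 : ¬ G.Adj c v5' := fun hh => uniq_false hD hv2'D hv5'D hne hbc.symm hh
              have hA56 : ¬ G.Adj c x := fun hh => uniq_false hD hv2'D hxD (by rintro rfl; exact hA3 hv1x.symm) hbc.symm hh
              have hA57 : v4 ∉ D := fun hh => uniq_false hD hv2'D hh (by rintro rfl; exact (fun hh => hA18 hh.symm) hbv2) hbc.symm hcv4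
              have hA58 : ¬ G.Adj e v2' := fun hh => uniq_false hD hv6D hv2'D (by rintro rfl; exact (fun hh => hA26 hh.symm) hbv2) hev6 hh
              have hA59 : ¬ G.Adj e v5' := fun hh => uniq_false hD hv6D hv5'D (by rintro rfl; exact (fun hh => hA39 hh.symm) hv5'v5) hev6 hh
              have hA60 : ¬ G.Adj e x := fun hh => uniq_false hD hv6D hxD (by rintro rfl; exact (fun hh => hA15 hh.symm) hv1x.symm) hev6 hh
              exact p6_false hP6 v2 v2' c e v5 v5' hbv2.symm hbc hce hev5 hv5'v5.symm (fun hh => hA20 hh.symm) (fun hh => hA24 hh.symm) hA22 (fun hh => hA25 hh.symm) (fun hh => hA58 hh.symm) hA23 hA40 hA29 hA55 hA59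
            · by_cases hqv6 : G.Adj v5' v6
              ·
                have hA1 : ¬ G.Adj v1 v3 := fun hh => edist_false h13 hh
                have hA2 : ¬ G.Adj a v3 := fun hh => common_false h13 hav1 hh
                have hA3 : ¬ G.Adj v2' v1 := fun hh => common_false h13 hh hbv3
                have hA4 : ¬ G.Adj c v1 := fun hh => common_false h13 hh hcv3
                have hA5 : ¬ G.Adj x v3 := fun hh => common_false h13 hv1x.symm hh
                have hA6 : ¬ G.Adj v1 v4 := fun hh => edist_false h14 hh
                have hA7 : ¬ G.Adj a v4 := fun hh => common_false h14 hav1 hh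
                have hA8 : ¬ G.Adj d v1 := fun hh => common_false h14 hh hdv4
                have hA9 : ¬ G.Adj x v4 := fun hh => common_false h14 hv1x.symm hh
                have hA10 : ¬ G.Adj v1 v5 := fun hh => edist_false h15 hh
                have hA11 : ¬ G.Adj a v5 := fun hh => common_false h15 hav1 hh
                have hA12 : ¬ G.Adj e v1 := fun hh => common_false h15 hh hev5
                have hA13 : ¬ G.Adj v5' v1 := fun hh => common_false h15 hh hv5'v5
                have hA14 : ¬ G.Adj x v5 := fun hh => common_false h15 hv1x.symm hh
                have hA15 : ¬ G.Adj v1 v6 := fun hh => edist_false h16 hh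
                have hA16 : ¬ G.Adj a v6 := fun hh => common_false h16 hav1 hh
                have hA17 : ¬ G.Adj x v6 := fun hh => common_false h16 hv1x.symm hh
                have hA18 : ¬ G.Adj v2 v4 := fun hh => edist_false h24 hh
                have hA19 : ¬ G.Adj v2' v4 := fun hh => common_false h24 hbv2 hh
                have hA20 : ¬ G.Adj c v2 := fun hh => common_false h24 hh hcv4
                have hA21 : ¬ G.Adj d v2 := fun hh => common_false h24 hh hdv4
                have hA22 : ¬ G.Adj v2 v5 := fun hh => edist_false h25 hh
                have hA23 : ¬ G.Adj v2' v5 := fun hh => common_false h25 hbv2 hh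
                have hA24 : ¬ G.Adj e v2 := fun hh => common_false h25 hh hev5
                have hA25 : ¬ G.Adj v5' v2 := fun hh => common_false h25 hh hv5'v5
                have hA26 : ¬ G.Adj v2 v6 := fun hh => edist_false h26 hh
                have hA27 : ¬ G.Adj v2' v6 := fun hh => common_false h26 hbv2 hh
                have hA28 : ¬ G.Adj v3 v5 := fun hh => edist_false h35 hh
                have hA29 : ¬ G.Adj c v5 := fun hh => common_false h35 hcv3 hh
                have hA30 : ¬ G.Adj d v3 := fun hh => common_false h35 hh hdv5
                have hA31 : ¬ G.Adj e v3 := fun hh => common_false h35 hh hev5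
                have hA32 : ¬ G.Adj v5' v3 := fun hh => common_false h35 hh hv5'v5
                have hA33 : ¬ G.Adj v3 v6 := fun hh => edist_false h36 hh
                have hA34 : ¬ G.Adj c v6 := fun hh => common_false h36 hcv3 hh
                have hA35 : ¬ G.Adj v4 v6 := fun hh => edist_false h46 hh
                have hA36 : ¬ G.Adj d v6 := fun hh => common_false h46 hdv4 hh
                have hA37 : ¬ G.Adj e v4 := fun hh => common_false h46 hh hev6
                have hA38 : ¬ G.Adj v5' v4 := fun hh => common_false h46 hh hqv6
                have hA39 : ¬ G.Adj v1 v2 := edist2_nadj hdist12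
                have hA40 : ¬ G.Adj v5 v6 := edist2_nadj hdist56
                have hA41 : ¬ G.Adj v2' v5' := hD.1 v2' hv2'D v5' hv5'D
                have hA42 : ¬ G.Adj v2' x := hD.1 v2' hv2'D x hxD
                have hA43 : ¬ G.Adj v5' x := hD.1 v5' hv5'D x hxD
                have hA44 : v2 ∉ D := fun hh => hD.1 v2' hv2'D v2 hh hbv2
                have hA45 : v3 ∉ D := fun hh => hD.1 v2' hv2'D v3 hh hbv3
                have hA46 : a ∉ D := fun hh => hD.1 v2' hv2'D a hh hab.symm
                have hA47 : c ∉ D := fun hh => hD.1 v2' hv2'D c hh hbc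
                have hA48 : v5 ∉ D := fun hh => hD.1 v5' hv5'D v5 hh hv5'v5
                have hA49 : v1 ∉ D := fun hh => hD.1 x hxD v1 hh hv1x.symm
                have hA50 : ¬ G.Adj v2 x := fun hh => uniq_false hD hv2'D hxD (by rintro rfl; exact hA3 hv1x.symm) hbv2.symm hh
                have hA51 : d ∉ D := fun hh => uniq_false hD hv5'D hh hqd hv5'v5.symm hdv5.symm
                have hA52 : e ∉ D := fun hh => uniq_false hD hv5'D hh hqe hv5'v5.symm hev5.symm
                have hA53 : ¬ G.Adj a v5' := fun hh => uniq_false hD hv2'D hv5'D hne hab hh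
                have hA54 : ¬ G.Adj a x := fun hh => uniq_false hD hv2'D hxD (by rintro rfl; exact hA3 hv1x.symm) hab hh
                have hA55 : ¬ G.Adj c v5' := fun hh => uniq_false hD hv2'D hv5'D hne hbc.symm hh
                have hA56 : ¬ G.Adj c x := fun hh => uniq_false hD hv2'D hxD (by rintro rfl; exact hA3 hv1x.symm) hbc.symm hh
                have hA57 : v4 ∉ D := fun hh => uniq_false hD hv2'D hh (by rintro rfl; exact (fun hh => hA18 hh.symm) hbv2) hbc.symm hcv4
                by_cases hA58 : G.Adj v4 v5
                ·
                  have hA59 : ¬ G.Adj v4 v3 := fun hh => common_false h35 hh hA58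
                  exact p6_false hP6 v1 a c v4 v5 v5' hav1.symm hac hcv4 hA58 hv5'v5.symm (fun hh => hA4 hh.symm) hA6 hA10 (fun hh => hA13 hh.symm) hA7 hA11 hA53 hA29 hA55 (fun hh => hA38 hh.symm)
                ·
                  by_cases hA60 : G.Adj x d
                  ·
                    have hA61 : ¬ G.Adj d v5' := fun hh => uniq_false hD hxD hv5'D (by rintro rfl; exact hA13 hv1x.symm) hA60.symm hh
                    exact p6_false hP6 v1 x d v5 v5' v6 hv1x hA60 hdv5 hv5'v5.symm hqv6 (fun hh => hA8 hh.symm) hA10 (fun hh => hA13 hh.symm) hA15 hA14 (fun hh => hA43 hh.symm) hA17 hA61 hA36 hA40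
                  ·
                    by_cases hA62 : G.Adj d v5'
                    ·
                      exact p6_false hP6 v2 v2' c d v5' v6 hbv2.symm hbc hcd hA62 hqv6 (fun hh => hA20 hh.symm) (fun hh => hA21 hh.symm) (fun hh => hA25 hh.symm) hA26 hbd hA41 hA27 hA55 hA34 hA36
                    ·
                      exact p6_false hP6 v2 v2' c d v5 v5' hbv2.symm hbc hcd hdv5 hv5'v5.symm (fun hh => hA20 hh.symm) (fun hh => hA21 hh.symm) hA22 (fun hh => hA25 hh.symm) hbd hA23 hA41 hA29 hA55 hA62
              · obtain ⟨y, ⟨hyD, hv6y⟩, -⟩ := hD.2 v6 hv6D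
                have hA1 : ¬ G.Adj v1 v3 := fun hh => edist_false h13 hh
                have hA2 : ¬ G.Adj a v3 := fun hh => common_false h13 hav1 hh
                have hA3 : ¬ G.Adj v2' v1 := fun hh => common_false h13 hh hbv3
                have hA4 : ¬ G.Adj c v1 := fun hh => common_false h13 hh hcv3
                have hA5 : ¬ G.Adj x v3 := fun hh => common_false h13 hv1x.symm hh
                have hA6 : ¬ G.Adj v1 v4 := fun hh => edist_false h14 hh
                have hA7 : ¬ G.Adj a v4 := fun hh => common_false h14 hav1 hh
                have hA8 : ¬ G.Adj d v1 := fun hh => common_false h14 hh hdv4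
                have hA9 : ¬ G.Adj x v4 := fun hh => common_false h14 hv1x.symm hh
                have hA10 : ¬ G.Adj v1 v5 := fun hh => edist_false h15 hh
                have hA11 : ¬ G.Adj a v5 := fun hh => common_false h15 hav1 hh
                have hA12 : ¬ G.Adj e v1 := fun hh => common_false h15 hh hev5
                have hA13 : ¬ G.Adj v5' v1 := fun hh => common_false h15 hh hv5'v5
                have hA14 : ¬ G.Adj x v5 := fun hh => common_false h15 hv1x.symm hh
                have hA15 : ¬ G.Adj v1 v6 := fun hh => edist_false h16 hh
                have hA16 : ¬ G.Adj a v6 := fun hh => common_false h16 hav1 hh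
                have hA17 : ¬ G.Adj x v6 := fun hh => common_false h16 hv1x.symm hh
                have hA18 : ¬ G.Adj y v1 := fun hh => common_false h16 hh hv6y.symm
                have hA19 : ¬ G.Adj v2 v4 := fun hh => edist_false h24 hh
                have hA20 : ¬ G.Adj v2' v4 := fun hh => common_false h24 hbv2 hh
                have hA21 : ¬ G.Adj c v2 := fun hh => common_false h24 hh hcv4
                have hA22 : ¬ G.Adj d v2 := fun hh => common_false h24 hh hdv4
                have hA23 : ¬ G.Adj v2 v5 := fun hh => edist_false h25 hh
                have hA24 : ¬ G.Adj v2' v5 := fun hh => common_false h25 hbv2 hh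
                have hA25 : ¬ G.Adj e v2 := fun hh => common_false h25 hh hev5
                have hA26 : ¬ G.Adj v5' v2 := fun hh => common_false h25 hh hv5'v5
                have hA27 : ¬ G.Adj v2 v6 := fun hh => edist_false h26 hh
                have hA28 : ¬ G.Adj v2' v6 := fun hh => common_false h26 hbv2 hh
                have hA29 : ¬ G.Adj y v2 := fun hh => common_false h26 hh hv6y.symm
                have hA30 : ¬ G.Adj v3 v5 := fun hh => edist_false h35 hh
                have hA31 : ¬ G.Adj c v5 := fun hh => common_false h35 hcv3 hh
                have hA32 : ¬ G.Adj d v3 := fun hh => common_false h35 hh hdv5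
                have hA33 : ¬ G.Adj e v3 := fun hh => common_false h35 hh hev5
                have hA34 : ¬ G.Adj v5' v3 := fun hh => common_false h35 hh hv5'v5
                have hA35 : ¬ G.Adj v3 v6 := fun hh => edist_false h36 hh
                have hA36 : ¬ G.Adj c v6 := fun hh => common_false h36 hcv3 hh
                have hA37 : ¬ G.Adj y v3 := fun hh => common_false h36 hh hv6y.symm
                have hA38 : ¬ G.Adj v4 v6 := fun hh => edist_false h46 hh
                have hA39 : ¬ G.Adj d v6 := fun hh => common_false h46 hdv4 hh
                have hA40 : ¬ G.Adj e v4 := fun hh => common_false h46 hh hev6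
                have hA41 : ¬ G.Adj y v4 := fun hh => common_false h46 hh hv6y.symm
                have hA42 : ¬ G.Adj v1 v2 := edist2_nadj hdist12
                have hA43 : ¬ G.Adj v5 v6 := edist2_nadj hdist56
                have hA44 : ¬ G.Adj v2' v5' := hD.1 v2' hv2'D v5' hv5'D
                have hA45 : ¬ G.Adj v2' x := hD.1 v2' hv2'D x hxD
                have hA46 : ¬ G.Adj v2' y := hD.1 v2' hv2'D y hyD
                have hA47 : ¬ G.Adj v5' x := hD.1 v5' hv5'D x hxD
                have hA48 : ¬ G.Adj v5' y := hD.1 v5' hv5'D y hyD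
                have hA49 : ¬ G.Adj x y := hD.1 x hxD y hyD
                have hA50 : v2 ∉ D := fun hh => hD.1 v2' hv2'D v2 hh hbv2
                have hA51 : v3 ∉ D := fun hh => hD.1 v2' hv2'D v3 hh hbv3
                have hA52 : a ∉ D := fun hh => hD.1 v2' hv2'D a hh hab.symm
                have hA53 : c ∉ D := fun hh => hD.1 v2' hv2'D c hh hbc
                have hA54 : v5 ∉ D := fun hh => hD.1 v5' hv5'D v5 hh hv5'v5
                have hA55 : v1 ∉ D := fun hh => hD.1 x hxD v1 hh hv1x.symm
                have hA56 : ¬ G.Adj v2 x := fun hh => uniq_false hD hv2'D hxD (by rintro rfl; exact hA3 hv1x.symm) hbv2.symm hh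
                have hA57 : ¬ G.Adj v5 y := fun hh => uniq_false hD hv5'D hyD (by rintro rfl; exact hqv6 hv6y.symm) hv5'v5.symm hh
                have hA58 : d ∉ D := fun hh => uniq_false hD hv5'D hh hqd hv5'v5.symm hdv5.symm
                have hA59 : e ∉ D := fun hh => uniq_false hD hv5'D hh hqe hv5'v5.symm hev5.symm
                have hA60 : ¬ G.Adj a v5' := fun hh => uniq_false hD hv2'D hv5'D hne hab hh
                have hA61 : ¬ G.Adj a x := fun hh => uniq_false hD hv2'D hxD (by rintro rfl; exact hA3 hv1x.symm) hab hh
                have hA62 : ¬ G.Adj a y := fun hh => uniq_false hD hv2'D hyD (by rintro rfl; exact hA29 hbv2) hab hh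
                have hA63 : ¬ G.Adj c v5' := fun hh => uniq_false hD hv2'D hv5'D hne hbc.symm hh
                have hA64 : ¬ G.Adj c x := fun hh => uniq_false hD hv2'D hxD (by rintro rfl; exact hA3 hv1x.symm) hbc.symm hh
                have hA65 : ¬ G.Adj c y := fun hh => uniq_false hD hv2'D hyD (by rintro rfl; exact hA29 hbv2) hbc.symm hh
                have hA66 : v4 ∉ D := fun hh => uniq_false hD hv2'D hh (by rintro rfl; exact (fun hh => hA19 hh.symm) hbv2) hbc.symm hcv4
                by_cases hA67 : G.Adj x d
                ·
                  have hA68 : ¬ G.Adj d v5' := fun hh => uniq_false hD hxD hv5'D (by rintro rfl; exact hA13 hv1x.symm) hA67.symm hh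
                  have hA69 : ¬ G.Adj d y := fun hh => uniq_false hD hxD hyD (by rintro rfl; exact hA18 hv1x.symm) hA67.symm hh
                  exact p6_false hP6 v1 x d c v2' v2 hv1x hA67 hcd.symm hbc.symm hbv2 (fun hh => hA8 hh.symm) (fun hh => hA4 hh.symm) (fun hh => hA3 hh.symm) hA42 (fun hh => hA64 hh.symm) (fun hh => hA45 hh.symm) (fun hh => hA56 hh.symm) (fun hh => hbd hh.symm) hA22 hA21
                ·
                  by_cases hA70 : G.Adj d v5'
                  ·
                    have hA71 : ¬ G.Adj d y := fun hh => uniq_false hD hv5'D hyD (by rintro rfl; exact (fun hh => hA57 hh.symm) hv5'v5) hA70 hh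
                    by_cases hA72 : G.Adj v4 v3
                    ·
                      have hA73 : ¬ G.Adj v3 v2 := fun hh => common_false h24 hh hA72.symm
                      have hA74 : ¬ G.Adj v4 v5 := fun hh => common_false h35 hA72 hh
                      exact p6_false hP6 v2 v2' v3 v4 d v5 hbv2.symm hbv3 hA72.symm hdv4.symm hdv5 (fun hh => hA73 hh.symm) hA19 (fun hh => hA22 hh.symm) hA23 hA20 hbd hA24 (fun hh => hA32 hh.symm) hA30 hA74
                    ·
                      by_cases hA75 : G.Adj v5 v4
                      ·
                        exact p6_false hP6 v5 v4 c a v1 x hA75 hcv4.symm hac.symm hav1 hv1x (fun hh => hA31 hh.symm) (fun hh => hA11 hh.symm) (fun hh => hA10 hh.symm) (fun hh => hA14 hh.symm) (fun hh => hA7 hh.symm) (fun hh => hA6 hh.symm) (fun hh => hA9 hh.symm) hA4 hA64 hA61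
                      ·
                        by_cases hA76 : G.Adj v4 v5'
                        ·
                          exact p6_false hP6 v1 a c v4 v5' v5 hav1.symm hac hcv4 hA76 hv5'v5 (fun hh => hA4 hh.symm) hA6 (fun hh => hA13 hh.symm) hA10 hA7 hA60 hA11 hA63 hA31 (fun hh => hA75 hh.symm)
                        ·
                          by_cases hA77 : G.Adj d a
                          ·
                            by_cases hA78 : G.Adj v3 v2
                            ·
                              exact banner_false hBanner a c v3 v2 v1 (by rintro rfl; exact hA19 hcv4) hac hcv3 hA78 hav2.symm hav1 hA2 hA21 hA4 (fun hh => hA1 hh.symm) (fun hh => hA42 hh.symm)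
                            ·
                              by_cases hA79 : G.Adj a e
                              ·
                                by_cases hA80 : G.Adj e x
                                ·
                                  have hA81 : ¬ G.Adj e v2' := fun hh => uniq_false hD hxD hv2'D (by rintro rfl; exact hA3 hv1x.symm) hA80 hh
                                  have hA82 : ¬ G.Adj e v5' := fun hh => uniq_false hD hxD hv5'D (by rintro rfl; exact hA13 hv1x.symm) hA80 hh
                                  have hA83 : ¬ G.Adj e y := fun hh => uniq_false hD hxD hyD (by rintro rfl; exact hA18 hv1x.symm) hA80 hh
                                  exact p6_false hP6 v1 x e c v2' v2 hv1x hA80.symm hce.symm hbc.symm hbv2 (fun hh => hA12 hh.symm) (fun hh => hA4 hh.symm) (fun hh => hA3 hh.symm) hA42 (fun hh => hA64 hh.symm) (fun hh => hA45 hh.symm) (fun hh => hA56 hh.symm) hA81 hA25 hA21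
                                ·
                                  by_cases hA84 : G.Adj v5' e
                                  ·
                                    have hA85 : ¬ G.Adj e v2' := fun hh => uniq_false hD hv5'D hv2'D (Ne.symm hne) hA84.symm hh
                                    have hA86 : ¬ G.Adj e y := fun hh => uniq_false hD hv5'D hyD (by rintro rfl; exact (fun hh => hA57 hh.symm) hv5'v5) hA84.symm hh
                                    exact p6_false hP6 v2 v2' c e v6 y hbv2.symm hbc hce hev6 hv6y (fun hh => hA21 hh.symm) (fun hh => hA25 hh.symm) hA27 (fun hh => hA29 hh.symm) (fun hh => hA85 hh.symm) hA28 hA46 hA36 hA65 hA86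
                                  ·
                                    exact p6_false hP6 v5' v5 e a v1 x hv5'v5 hev5.symm hA79.symm hav1 hv1x hA84 (fun hh => hA60 hh.symm) hA13 hA47 (fun hh => hA11 hh.symm) (fun hh => hA10 hh.symm) (fun hh => hA14 hh.symm) hA12 hA80 hA61
                              ·
                                by_cases hA87 : G.Adj e v5'
                                ·
                                  have hA88 : ¬ G.Adj e v2' := fun hh => uniq_false hD hv5'D hv2'D (Ne.symm hne) hA87 hh
                                  have hA89 : ¬ G.Adj e x := fun hh => uniq_false hD hv5'D hxD (by rintro rfl; exact hA13 hv1x.symm) hA87 hh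
                                  have hA90 : ¬ G.Adj e y := fun hh => uniq_false hD hv5'D hyD (by rintro rfl; exact (fun hh => hA57 hh.symm) hv5'v5) hA87 hh
                                  exact p6_false hP6 v1 a c e v6 y hav1.symm hac hce hev6 hv6y (fun hh => hA4 hh.symm) (fun hh => hA12 hh.symm) hA15 (fun hh => hA18 hh.symm) hA79 hA16 hA62 hA36 hA65 hA90
                                ·
                                  exact p6_false hP6 v1 a c e v5 v5' hav1.symm hac hce hev5 hv5'v5.symm (fun hh => hA4 hh.symm) (fun hh => hA12 hh.symm) hA10 (fun hh => hA13 hh.symm) hA79 hA11 hA60 hA31 hA63 hA87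
                          ·
                            exact p6_false hP6 v5 d c a v1 x hdv5.symm hcd.symm hac.symm hav1 hv1x (fun hh => hA31 hh.symm) (fun hh => hA11 hh.symm) (fun hh => hA10 hh.symm) (fun hh => hA14 hh.symm) hA77 hA8 (fun hh => hA67 hh.symm) hA4 hA64 hA61
                  ·
                    exact p6_false hP6 v2 v2' c d v5 v5' hbv2.symm hbc hcd hdv5 hv5'v5.symm (fun hh => hA21 hh.symm) (fun hh => hA22 hh.symm) hA23 (fun hh => hA26 hh.symm) hbd hA24 hA44 hA31 hA63 hA70
  · by_cases hpv3 : v2' = v3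
    · exact hnadj (by rw [hpv3]; exact hbv3.symm)
    · by_cases hqd : v5' = d
      · subst hqd
        have hA1 : ¬ G.Adj v1 v3 := fun hh => edist_false h13 hh
        have hA2 : ¬ G.Adj a v3 := fun hh => common_false h13 hav1 hh
        have hA3 : ¬ G.Adj b v1 := fun hh => common_false h13 hh hbv3
        have hA4 : ¬ G.Adj c v1 := fun hh => common_false h13 hh hcv3
        have hA5 : ¬ G.Adj v1 v4 := fun hh => edist_false h14 hh
        have hA6 : ¬ G.Adj a v4 := fun hh => common_false h14 hav1 hh
        have hA7 : ¬ G.Adj v5' v1 := fun hh => common_false h14 hh hdv4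
        have hA8 : ¬ G.Adj v1 v5 := fun hh => edist_false h15 hh
        have hA9 : ¬ G.Adj a v5 := fun hh => common_false h15 hav1 hh
        have hA10 : ¬ G.Adj e v1 := fun hh => common_false h15 hh hev5
        have hA11 : ¬ G.Adj v1 v6 := fun hh => edist_false h16 hh
        have hA12 : ¬ G.Adj a v6 := fun hh => common_false h16 hav1 hh
        have hA13 : ¬ G.Adj v2 v4 := fun hh => edist_false h24 hh
        have hA14 : ¬ G.Adj b v4 := fun hh => common_false h24 hbv2 hh
        have hA15 : ¬ G.Adj c v2 := fun hh => common_false h24 hh hcv4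
        have hA16 : ¬ G.Adj v5' v2 := fun hh => common_false h24 hh hdv4
        have hA17 : ¬ G.Adj v2' v4 := fun hh => common_false h24 hv2'v2 hh
        have hA18 : ¬ G.Adj v2 v5 := fun hh => edist_false h25 hh
        have hA19 : ¬ G.Adj b v5 := fun hh => common_false h25 hbv2 hh
        have hA20 : ¬ G.Adj e v2 := fun hh => common_false h25 hh hev5
        have hA21 : ¬ G.Adj v2' v5 := fun hh => common_false h25 hv2'v2 hh
        have hA22 : ¬ G.Adj v2 v6 := fun hh => edist_false h26 hh
        have hA23 : ¬ G.Adj b v6 := fun hh => common_false h26 hbv2 hh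
        have hA24 : ¬ G.Adj v2' v6 := fun hh => common_false h26 hv2'v2 hh
        have hA25 : ¬ G.Adj v3 v5 := fun hh => edist_false h35 hh
        have hA26 : ¬ G.Adj c v5 := fun hh => common_false h35 hcv3 hh
        have hA27 : ¬ G.Adj v5' v3 := fun hh => common_false h35 hh hdv5
        have hA28 : ¬ G.Adj e v3 := fun hh => common_false h35 hh hev5
        have hA29 : ¬ G.Adj v3 v6 := fun hh => edist_false h36 hh
        have hA30 : ¬ G.Adj c v6 := fun hh => common_false h36 hcv3 hh
        have hA31 : ¬ G.Adj v4 v6 := fun hh => edist_false h46 hh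
        have hA32 : ¬ G.Adj v5' v6 := fun hh => common_false h46 hdv4 hh
        have hA33 : ¬ G.Adj e v4 := fun hh => common_false h46 hh hev6
        have hA34 : ¬ G.Adj v1 v2 := edist2_nadj hdist12
        have hA35 : ¬ G.Adj v5 v6 := edist2_nadj hdist56
        have hA36 : ¬ G.Adj v5' v2' := hD.1 v5' hv5'D v2' hv2'D
        have hA37 : v4 ∉ D := fun hh => hD.1 v5' hv5'D v4 hh hdv4
        have hA38 : v5 ∉ D := fun hh => hD.1 v5' hv5'D v5 hh hdv5
        have hA39 : c ∉ D := fun hh => hD.1 v5' hv5'D c hh hcd.symm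
        have hA40 : e ∉ D := fun hh => hD.1 v5' hv5'D e hh hde
        have hA41 : v2 ∉ D := fun hh => hD.1 v2' hv2'D v2 hh hv2'v2
        have hA42 : a ∉ D := fun hh => uniq_false hD hv2'D hh (by rintro rfl; exact hnadj hab) hv2'v2.symm hav2.symm
        have hA43 : b ∉ D := fun hh => uniq_false hD hv2'D hh hpb hv2'v2.symm hbv2.symm
        have hA44 : ¬ G.Adj c v2' := fun hh => uniq_false hD hv5'D hv2'D (by rintro rfl; exact hA16 hv2'v2) hcd hh
        have hA45 : v3 ∉ D := fun hh => uniq_false hD hv5'D hh (by rintro rfl; exact hA25 hdv5) hcd hcv3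
        have hA46 : ¬ G.Adj e v2' := fun hh => uniq_false hD hv5'D hv2'D (by rintro rfl; exact hA16 hv2'v2) hde.symm hh
        have hA47 : v6 ∉ D := fun hh => uniq_false hD hv5'D hh (by rintro rfl; exact (fun hh => hA31 hh.symm) hdv4) hde.symm hev6
        exact p6_false hP6 v5 v5' c b v2 v2' hdv5.symm hcd.symm hbc.symm hbv2 hv2'v2.symm (fun hh => hA26 hh.symm) (fun hh => hA19 hh.symm) (fun hh => hA18 hh.symm) (fun hh => hA21 hh.symm) (fun hh => hbd hh.symm) hA16 hA36 hA15 hA44 (fun hh => hnadj hh.symm)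
      · by_cases hqe : v5' = e
        · subst hqe
          have hA1 : ¬ G.Adj v1 v3 := fun hh => edist_false h13 hh
          have hA2 : ¬ G.Adj a v3 := fun hh => common_false h13 hav1 hh
          have hA3 : ¬ G.Adj b v1 := fun hh => common_false h13 hh hbv3
          have hA4 : ¬ G.Adj c v1 := fun hh => common_false h13 hh hcv3
          have hA5 : ¬ G.Adj v1 v4 := fun hh => edist_false h14 hh
          have hA6 : ¬ G.Adj a v4 := fun hh => common_false h14 hav1 hh
          have hA7 : ¬ G.Adj d v1 := fun hh => common_false h14 hh hdv4
          have hA8 : ¬ G.Adj v1 v5 := fun hh => edist_false h15 hh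
          have hA9 : ¬ G.Adj a v5 := fun hh => common_false h15 hav1 hh
          have hA10 : ¬ G.Adj v5' v1 := fun hh => common_false h15 hh hev5
          have hA11 : ¬ G.Adj v1 v6 := fun hh => edist_false h16 hh
          have hA12 : ¬ G.Adj a v6 := fun hh => common_false h16 hav1 hh
          have hA13 : ¬ G.Adj v2 v4 := fun hh => edist_false h24 hh
          have hA14 : ¬ G.Adj b v4 := fun hh => common_false h24 hbv2 hh
          have hA15 : ¬ G.Adj c v2 := fun hh => common_false h24 hh hcv4
          have hA16 : ¬ G.Adj d v2 := fun hh => common_false h24 hh hdv4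
          have hA17 : ¬ G.Adj v2' v4 := fun hh => common_false h24 hv2'v2 hh
          have hA18 : ¬ G.Adj v2 v5 := fun hh => edist_false h25 hh
          have hA19 : ¬ G.Adj b v5 := fun hh => common_false h25 hbv2 hh
          have hA20 : ¬ G.Adj v5' v2 := fun hh => common_false h25 hh hev5
          have hA21 : ¬ G.Adj v2' v5 := fun hh => common_false h25 hv2'v2 hh
          have hA22 : ¬ G.Adj v2 v6 := fun hh => edist_false h26 hh
          have hA23 : ¬ G.Adj b v6 := fun hh => common_false h26 hbv2 hh
          have hA24 : ¬ G.Adj v2' v6 := fun hh => common_false h26 hv2'v2 hh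
          have hA25 : ¬ G.Adj v3 v5 := fun hh => edist_false h35 hh
          have hA26 : ¬ G.Adj c v5 := fun hh => common_false h35 hcv3 hh
          have hA27 : ¬ G.Adj d v3 := fun hh => common_false h35 hh hdv5
          have hA28 : ¬ G.Adj v5' v3 := fun hh => common_false h35 hh hev5
          have hA29 : ¬ G.Adj v3 v6 := fun hh => edist_false h36 hh
          have hA30 : ¬ G.Adj c v6 := fun hh => common_false h36 hcv3 hh
          have hA31 : ¬ G.Adj v4 v6 := fun hh => edist_false h46 hh
          have hA32 : ¬ G.Adj d v6 := fun hh => common_false h46 hdv4 hh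
          have hA33 : ¬ G.Adj v5' v4 := fun hh => common_false h46 hh hev6
          have hA34 : ¬ G.Adj v1 v2 := edist2_nadj hdist12
          have hA35 : ¬ G.Adj v5 v6 := edist2_nadj hdist56
          have hA36 : ¬ G.Adj v5' v2' := hD.1 v5' hv5'D v2' hv2'D
          have hA37 : v5 ∉ D := fun hh => hD.1 v5' hv5'D v5 hh hev5
          have hA38 : v6 ∉ D := fun hh => hD.1 v5' hv5'D v6 hh hev6
          have hA39 : c ∉ D := fun hh => hD.1 v5' hv5'D c hh hce.symm
          have hA40 : d ∉ D := fun hh => hD.1 v5' hv5'D d hh hde.symm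
          have hA41 : v2 ∉ D := fun hh => hD.1 v2' hv2'D v2 hh hv2'v2
          have hA42 : a ∉ D := fun hh => uniq_false hD hv2'D hh (by rintro rfl; exact hnadj hab) hv2'v2.symm hav2.symm
          have hA43 : b ∉ D := fun hh => uniq_false hD hv2'D hh hpb hv2'v2.symm hbv2.symm
          have hA44 : ¬ G.Adj c v2' := fun hh => uniq_false hD hv5'D hv2'D (by rintro rfl; exact hA20 hv2'v2) hce hh
          have hA45 : v3 ∉ D := fun hh => uniq_false hD hv5'D hh (by rintro rfl; exact hA25 hev5) hce hcv3
          have hA46 : v4 ∉ D := fun hh => uniq_false hD hv5'D hh (by rintro rfl; exact hA31 hev6) hce hcv4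
          have hA47 : ¬ G.Adj d v2' := fun hh => uniq_false hD hv5'D hv2'D (by rintro rfl; exact hA20 hv2'v2) hde hh
          exact p6_false hP6 v5 d c b v2 v2' hdv5.symm hcd.symm hbc.symm hbv2 hv2'v2.symm (fun hh => hA26 hh.symm) (fun hh => hA19 hh.symm) (fun hh => hA18 hh.symm) (fun hh => hA21 hh.symm) (fun hh => hbd hh.symm) hA16 hA47 hA15 hA44 (fun hh => hnadj hh.symm)
        · by_cases hqv4 : v5' = v4
          · subst hqv4
            have hA1 : ¬ G.Adj v1 v3 := fun hh => edist_false h13 hh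
            have hA2 : ¬ G.Adj a v3 := fun hh => common_false h13 hav1 hh
            have hA3 : ¬ G.Adj b v1 := fun hh => common_false h13 hh hbv3
            have hA4 : ¬ G.Adj c v1 := fun hh => common_false h13 hh hcv3
            have hA5 : ¬ G.Adj v1 v5' := fun hh => edist_false h14 hh
            have hA6 : ¬ G.Adj v5 v1 := fun hh => common_false h14 hh hv5'v5.symm
            have hA7 : ¬ G.Adj a v5' := fun hh => common_false h14 hav1 hh
            have hA8 : ¬ G.Adj d v1 := fun hh => common_false h14 hh hdv4
            have hA9 : ¬ G.Adj a v5 := fun hh => common_false h15 hav1 hh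
            have hA10 : ¬ G.Adj e v1 := fun hh => common_false h15 hh hev5
            have hA11 : ¬ G.Adj v1 v6 := fun hh => edist_false h16 hh
            have hA12 : ¬ G.Adj a v6 := fun hh => common_false h16 hav1 hh
            have hA13 : ¬ G.Adj v2 v5' := fun hh => edist_false h24 hh
            have hA14 : ¬ G.Adj v5 v2 := fun hh => common_false h24 hh hv5'v5.symm
            have hA15 : ¬ G.Adj b v5' := fun hh => common_false h24 hbv2 hh
            have hA16 : ¬ G.Adj c v2 := fun hh => common_false h24 hh hcv4
            have hA17 : ¬ G.Adj d v2 := fun hh => common_false h24 hh hdv4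
            have hA18 : ¬ G.Adj v2' v5' := fun hh => common_false h24 hv2'v2 hh
            have hA19 : ¬ G.Adj b v5 := fun hh => common_false h25 hbv2 hh
            have hA20 : ¬ G.Adj e v2 := fun hh => common_false h25 hh hev5
            have hA21 : ¬ G.Adj v2' v5 := fun hh => common_false h25 hv2'v2 hh
            have hA22 : ¬ G.Adj v2 v6 := fun hh => edist_false h26 hh
            have hA23 : ¬ G.Adj b v6 := fun hh => common_false h26 hbv2 hh
            have hA24 : ¬ G.Adj v2' v6 := fun hh => common_false h26 hv2'v2 hh
            have hA25 : ¬ G.Adj v3 v5 := fun hh => edist_false h35 hh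
            have hA26 : ¬ G.Adj v5' v3 := fun hh => common_false h35 hh hv5'v5
            have hA27 : ¬ G.Adj c v5 := fun hh => common_false h35 hcv3 hh
            have hA28 : ¬ G.Adj d v3 := fun hh => common_false h35 hh hdv5
            have hA29 : ¬ G.Adj e v3 := fun hh => common_false h35 hh hev5
            have hA30 : ¬ G.Adj v3 v6 := fun hh => edist_false h36 hh
            have hA31 : ¬ G.Adj c v6 := fun hh => common_false h36 hcv3 hh
            have hA32 : ¬ G.Adj v5' v6 := fun hh => edist_false h46 hh
            have hA33 : ¬ G.Adj v5 v6 := fun hh => common_false h46 hv5'v5.symm hh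
            have hA34 : ¬ G.Adj d v6 := fun hh => common_false h46 hdv4 hh
            have hA35 : ¬ G.Adj e v5' := fun hh => common_false h46 hh hev6
            have hA36 : ¬ G.Adj v1 v2 := edist2_nadj hdist12
            have hA37 : v5 ∉ D := fun hh => hD.1 v5' hv5'D v5 hh hv5'v5
            have hA38 : c ∉ D := fun hh => hD.1 v5' hv5'D c hh hcv4.symm
            have hA39 : d ∉ D := fun hh => hD.1 v5' hv5'D d hh hdv4.symm
            have hA40 : v2 ∉ D := fun hh => hD.1 v2' hv2'D v2 hh hv2'v2
            have hA41 : a ∉ D := fun hh => uniq_false hD hv2'D hh (by rintro rfl; exact hnadj hab) hv2'v2.symm hav2.symm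
            have hA42 : b ∉ D := fun hh => uniq_false hD hv2'D hh hpb hv2'v2.symm hbv2.symm
            have hA43 : e ∉ D := fun hh => uniq_false hD hv5'D hh (by rintro rfl; exact hA32 hev6) hv5'v5.symm hev5.symm
            have hA44 : ¬ G.Adj c v2' := fun hh => uniq_false hD hv5'D hv2'D (by rintro rfl; exact (fun hh => hA13 hh.symm) hv2'v2) hcv4 hh
            have hA45 : v3 ∉ D := fun hh => uniq_false hD hv5'D hh (by rintro rfl; exact hA25 hv5'v5) hcv4 hcv3
            have hA46 : ¬ G.Adj d v2' := fun hh => uniq_false hD hv5'D hv2'D (by rintro rfl; exact (fun hh => hA13 hh.symm) hv2'v2) hdv4 hh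
            exact p6_false hP6 v5 v5' c b v2 v2' hv5'v5.symm hcv4.symm hbc.symm hbv2 hv2'v2.symm (fun hh => hA27 hh.symm) (fun hh => hA19 hh.symm) hA14 (fun hh => hA21 hh.symm) (fun hh => hA15 hh.symm) (fun hh => hA13 hh.symm) (fun hh => hA18 hh.symm) hA16 hA44 (fun hh => hnadj hh.symm)
          ·
            have hA1 : ¬ G.Adj v1 v3 := fun hh => edist_false h13 hh
            have hA2 : ¬ G.Adj a v3 := fun hh => common_false h13 hav1 hh
            have hA3 : ¬ G.Adj b v1 := fun hh => common_false h13 hh hbv3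
            have hA4 : ¬ G.Adj c v1 := fun hh => common_false h13 hh hcv3
            have hA5 : ¬ G.Adj v1 v4 := fun hh => edist_false h14 hh
            have hA6 : ¬ G.Adj a v4 := fun hh => common_false h14 hav1 hh
            have hA7 : ¬ G.Adj d v1 := fun hh => common_false h14 hh hdv4
            have hA8 : ¬ G.Adj v1 v5 := fun hh => edist_false h15 hh
            have hA9 : ¬ G.Adj a v5 := fun hh => common_false h15 hav1 hh
            have hA10 : ¬ G.Adj e v1 := fun hh => common_false h15 hh hev5
            have hA11 : ¬ G.Adj v5' v1 := fun hh => common_false h15 hh hv5'v5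
            have hA12 : ¬ G.Adj v1 v6 := fun hh => edist_false h16 hh
            have hA13 : ¬ G.Adj a v6 := fun hh => common_false h16 hav1 hh
            have hA14 : ¬ G.Adj v2 v4 := fun hh => edist_false h24 hh
            have hA15 : ¬ G.Adj b v4 := fun hh => common_false h24 hbv2 hh
            have hA16 : ¬ G.Adj c v2 := fun hh => common_false h24 hh hcv4
            have hA17 : ¬ G.Adj d v2 := fun hh => common_false h24 hh hdv4
            have hA18 : ¬ G.Adj v2' v4 := fun hh => common_false h24 hv2'v2 hh
            have hA19 : ¬ G.Adj v2 v5 := fun hh => edist_false h25 hh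
            have hA20 : ¬ G.Adj b v5 := fun hh => common_false h25 hbv2 hh
            have hA21 : ¬ G.Adj e v2 := fun hh => common_false h25 hh hev5
            have hA22 : ¬ G.Adj v2' v5 := fun hh => common_false h25 hv2'v2 hh
            have hA23 : ¬ G.Adj v5' v2 := fun hh => common_false h25 hh hv5'v5
            have hA24 : ¬ G.Adj v2 v6 := fun hh => edist_false h26 hh
            have hA25 : ¬ G.Adj b v6 := fun hh => common_false h26 hbv2 hh
            have hA26 : ¬ G.Adj v2' v6 := fun hh => common_false h26 hv2'v2 hh
            have hA27 : ¬ G.Adj v3 v5 := fun hh => edist_false h35 hh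
            have hA28 : ¬ G.Adj c v5 := fun hh => common_false h35 hcv3 hh
            have hA29 : ¬ G.Adj d v3 := fun hh => common_false h35 hh hdv5
            have hA30 : ¬ G.Adj e v3 := fun hh => common_false h35 hh hev5
            have hA31 : ¬ G.Adj v5' v3 := fun hh => common_false h35 hh hv5'v5
            have hA32 : ¬ G.Adj v3 v6 := fun hh => edist_false h36 hh
            have hA33 : ¬ G.Adj c v6 := fun hh => common_false h36 hcv3 hh
            have hA34 : ¬ G.Adj v4 v6 := fun hh => edist_false h46 hh
            have hA35 : ¬ G.Adj d v6 := fun hh => common_false h46 hdv4 hh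
            have hA36 : ¬ G.Adj e v4 := fun hh => common_false h46 hh hev6
            have hA37 : ¬ G.Adj v1 v2 := edist2_nadj hdist12
            have hA38 : ¬ G.Adj v5 v6 := edist2_nadj hdist56
            have hA39 : ¬ G.Adj v2' v5' := hD.1 v2' hv2'D v5' hv5'D
            have hA40 : v2 ∉ D := fun hh => hD.1 v2' hv2'D v2 hh hv2'v2
            have hA41 : v5 ∉ D := fun hh => hD.1 v5' hv5'D v5 hh hv5'v5
            have hA42 : a ∉ D := fun hh => uniq_false hD hv2'D hh (by rintro rfl; exact hnadj hab) hv2'v2.symm hav2.symm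
            have hA43 : b ∉ D := fun hh => uniq_false hD hv2'D hh hpb hv2'v2.symm hbv2.symm
            have hA44 : d ∉ D := fun hh => uniq_false hD hv5'D hh hqd hv5'v5.symm hdv5.symm
            have hA45 : e ∉ D := fun hh => uniq_false hD hv5'D hh hqe hv5'v5.symm hev5.symm
            by_cases hA46 : G.Adj v3 v2
            ·
              have hA47 : ¬ G.Adj v3 v4 := fun hh => common_false h24 hA46 hh
              have hA48 : v3 ∉ D := fun hh => uniq_false hD hv2'D hh hpv3 hv2'v2.symm hA46.symm
              exact banner_false hBanner a c v3 v2 v1 (by rintro rfl; exact hA14 hcv4) hac hcv3 hA46 hav2.symm hav1 hA2 hA16 hA4 (fun hh => hA1 hh.symm) (fun hh => hA37 hh.symm)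
            ·
              by_cases hA49 : G.Adj v2' c
              ·
                have hA50 : c ∉ D := fun hh => hD.1 v2' hv2'D c hh hA49
                have hA51 : ¬ G.Adj c v5' := fun hh => uniq_false hD hv2'D hv5'D hne hA49.symm hh
                have hA52 : v3 ∉ D := fun hh => uniq_false hD hv2'D hh hpv3 hA49.symm hcv3
                have hA53 : v4 ∉ D := fun hh => uniq_false hD hv2'D hh (by rintro rfl; exact (fun hh => hA14 hh.symm) hv2'v2) hA49.symm hcv4
                exact banner_false hBanner c b v2 v2' v4 (Ne.symm hpb) hbc.symm hbv2 hv2'v2.symm hA49 hcv4 hA16 (fun hh => hnadj hh.symm) hA15 hA14 hA18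
              ·
                by_cases hA54 : G.Adj v1 v2'
                ·
                  have hA55 : ¬ G.Adj v2' v3 := fun hh => common_false h13 hA54.symm hh
                  have hA56 : v1 ∉ D := fun hh => hD.1 v2' hv2'D v1 hh hA54.symm
                  exact p6_false hP6 v1 v2' v2 b c v4 hA54 hv2'v2 hbv2.symm hbc hcv4 hA37 (fun hh => hA3 hh.symm) (fun hh => hA4 hh.symm) hA5 hnadj hA49 hA18 (fun hh => hA16 hh.symm) hA14 hA15
                ·
                  by_cases hA57 : G.Adj v5 v4
                  ·
                    have hA58 : ¬ G.Adj v4 v3 := fun hh => common_false h35 hh hA57.symm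
                    have hA59 : v4 ∉ D := fun hh => uniq_false hD hv5'D hh hqv4 hv5'v5.symm hA57
                    exact p6_false hP6 v5 v4 c b v2 v2' hA57 hcv4.symm hbc.symm hbv2 hv2'v2.symm (fun hh => hA28 hh.symm) (fun hh => hA20 hh.symm) (fun hh => hA19 hh.symm) (fun hh => hA22 hh.symm) (fun hh => hA15 hh.symm) (fun hh => hA14 hh.symm) (fun hh => hA18 hh.symm) hA16 (fun hh => hA49 hh.symm) (fun hh => hnadj hh.symm)
                  ·
                    by_cases hA60 : G.Adj v3 v4
                    ·
                      exact p6_false hP6 v2 b v3 v4 d v5 hbv2.symm hbv3 hA60 hdv4.symm hdv5 (fun hh => hA46 hh.symm) hA14 (fun hh => hA17 hh.symm) hA19 hA15 hbd hA20 (fun hh => hA29 hh.symm) hA27 (fun hh => hA57 hh.symm)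
                    ·
                      by_cases hA61 : G.Adj d v2'
                      ·
                        have hA62 : ¬ G.Adj d v5' := fun hh => uniq_false hD hv2'D hv5'D hne hA61 hh
                        have hA63 : v4 ∉ D := fun hh => uniq_false hD hv2'D hh (by rintro rfl; exact (fun hh => hA14 hh.symm) hv2'v2) hA61 hdv4
                        have hA64 : c ∉ D := fun hh => uniq_false hD hv2'D hh (by rintro rfl; exact hA16 hv2'v2) hA61 hcd.symm
                        by_cases hA65 : G.Adj v5' v6
                        ·
                          have hA66 : ¬ G.Adj v5' v4 := fun hh => common_false h46 hh hA65
                          have hA67 : v6 ∉ D := fun hh => hD.1 v5' hv5'D v6 hh hA65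
                          exact p6_false hP6 v2 v2' d v5 v5' v6 hv2'v2.symm hA61.symm hdv5 hv5'v5.symm hA65 (fun hh => hA17 hh.symm) hA19 (fun hh => hA23 hh.symm) hA24 hA22 hA39 hA26 hA62 hA35 hA38
                        ·
                          by_cases hA68 : G.Adj v3 v2'
                          ·
                            have hA69 : v3 ∉ D := fun hh => hD.1 v2' hv2'D v3 hh hA68.symm
                            exact banner_false hBanner d c v3 v2' v5 (by rintro rfl; exact hA16 hv2'v2) hcd.symm hcv3 hA68 hA61.symm hdv5 hA29 (fun hh => hA49 hh.symm) hA28 hA27 hA22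
                          ·
                            exact p6_false hP6 v3 b v2 v2' d v4 hbv3.symm hbv2 hv2'v2.symm hA61.symm hdv4 hA46 hA68 (fun hh => hA29 hh.symm) hA60 (fun hh => hnadj hh.symm) hbd hA15 (fun hh => hA17 hh.symm) hA14 hA18
                      ·
                        exact p6_false hP6 v5 d c b v2 v2' hdv5.symm hcd.symm hbc.symm hbv2 hv2'v2.symm (fun hh => hA28 hh.symm) (fun hh => hA20 hh.symm) (fun hh => hA19 hh.symm) (fun hh => hA22 hh.symm) (fun hh => hbd hh.symm) hA17 hA61 hA16 (fun hh => hA49 hh.symm) (fun hh => hnadj hh.symm)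

theorem path_case21_v2pb_v5pd {V : Type*} [Fintype V] (G : SimpleGraph V)
    (hP6 : IsInducedFree (SimpleGraph.pathGraph 6) G)
    (hBanner : IsInducedFree banner G)
    (D : Set V) (hD : G.IsEfficientDominatingSet D)
    (v1 v2 v3 v4 v5 v6 : V)
    (h12 : G.edist v1 v2 ≤ 2) (h23 : G.edist v2 v3 ≤ 2) (h34 : G.edist v3 v4 ≤ 2)
    (h45 : G.edist v4 v5 ≤ 2) (h56 : G.edist v5 v6 ≤ 2)
    (h13 : 3 ≤ G.edist v1 v3) (h14 : 3 ≤ G.edist v1 v4) (h15 : 3 ≤ G.edist v1 v5)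
    (h16 : 3 ≤ G.edist v1 v6) (h24 : 3 ≤ G.edist v2 v4) (h25 : 3 ≤ G.edist v2 v5)
    (h26 : 3 ≤ G.edist v2 v6) (h35 : 3 ≤ G.edist v3 v5) (h36 : 3 ≤ G.edist v3 v6)
    (h46 : 3 ≤ G.edist v4 v6)
    (hdist12 : G.edist v1 v2 = 2) (hdist56 : G.edist v5 v6 = 2)
    (a e b d c : V)
    (hav1 : G.Adj a v1) (hav2 : G.Adj a v2) (hev5 : G.Adj e v5) (hev6 : G.Adj e v6)
    (hbv2 : G.Adj b v2) (hbv3 : G.Adj b v3) (hdv4 : G.Adj d v4) (hdv5 : G.Adj d v5)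
    (hcv3 : G.Adj c v3) (hcv4 : G.Adj c v4)
    (hab : G.Adj a b) (hbc : G.Adj b c) (hcd : G.Adj c d) (hde : G.Adj d e)
    (hac : G.Adj a c) (hce : G.Adj c e) (hbd : ¬ G.Adj b d)
    (v2' v5' : V) (hne : v2' ≠ v5') (hv2'D : v2' ∈ D) (hv5'D : v5' ∈ D)
    (hv2'v2 : G.Adj v2' v2) (hv5'v5 : G.Adj v5' v5)
    : G.Adj v2' b ∧ G.Adj v5' d := by
  constructor
  · by_contra hn
    exact path_case21_aux G hP6 hBanner D hD v1 v2 v3 v4 v5 v6 h12 h23 h34 h45 h56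
      h13 h14 h15 h16 h24 h25 h26 h35 h36 h46 hdist12 hdist56 a e b d c
      hav1 hav2 hev5 hev6 hbv2 hbv3 hdv4 hdv5 hcv3 hcv4 hab hbc hcd hde hac hce hbd
      v2' v5' hne hv2'D hv5'D hv2'v2 hv5'v5 hn
  · by_contra hn
    exact path_case21_aux G hP6 hBanner D hD v6 v5 v4 v3 v2 v1
      (by rw [SimpleGraph.edist_comm]; exact h56) (by rw [SimpleGraph.edist_comm]; exact h45)
      (by rw [SimpleGraph.edist_comm]; exact h34) (by rw [SimpleGraph.edist_comm]; exact h23)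
      (by rw [SimpleGraph.edist_comm]; exact h12)
      (by rw [SimpleGraph.edist_comm]; exact h46) (by rw [SimpleGraph.edist_comm]; exact h36)
      (by rw [SimpleGraph.edist_comm]; exact h26) (by rw [SimpleGraph.edist_comm]; exact h16)
      (by rw [SimpleGraph.edist_comm]; exact h35) (by rw [SimpleGraph.edist_comm]; exact h25)
      (by rw [SimpleGraph.edist_comm]; exact h15) (by rw [SimpleGraph.edist_comm]; exact h24)
      (by rw [SimpleGraph.edist_comm]; exact h14) (by rw [SimpleGraph.edist_comm]; exact h13)
      (by rw [SimpleGraph.edist_comm]; exact hdist56) (by rw [SimpleGraph.edist_comm]; exact hdist12)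
      e a d b c
      hev6 hev5 hav2 hav1 hdv5 hdv4 hbv3 hbv2 hcv4 hcv3
      hde.symm hcd.symm hbc.symm hab.symm hce.symm hac.symm (fun h => hbd h.symm)
      v5' v2' hne.symm hv5'D hv2'D hv5'v5 hv2'v2 hn
end

section
/- Under the Case 2 configuration of the path-in-square setting, if additionally ab, bc, cd, de, bd, ad are edges of G, then neither a nor e belongs to D. -/
set_option maxHeartbeats 1600000 in
/-- If `G` contains six vertices forming an induced path, then `G` is not `P6`-free. -/
lemma no_p6_s12 {V : Type*} {G : SimpleGraph V}
    (hP6 : IsInducedFree (SimpleGraph.pathGraph 6) G)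
    {w0 w1 w2 w3 w4 w5 : V}
    (a01 : G.Adj w0 w1) (a12 : G.Adj w1 w2) (a23 : G.Adj w2 w3)
    (a34 : G.Adj w3 w4) (a45 : G.Adj w4 w5)
    (n02 : w0 ≠ w2 ∧ ¬G.Adj w0 w2) (n03 : w0 ≠ w3 ∧ ¬G.Adj w0 w3)
    (n04 : w0 ≠ w4 ∧ ¬G.Adj w0 w4) (n05 : w0 ≠ w5 ∧ ¬G.Adj w0 w5)
    (n13 : w1 ≠ w3 ∧ ¬G.Adj w1 w3) (n14 : w1 ≠ w4 ∧ ¬G.Adj w1 w4)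
    (n15 : w1 ≠ w5 ∧ ¬G.Adj w1 w5) (n24 : w2 ≠ w4 ∧ ¬G.Adj w2 w4)
    (n25 : w2 ≠ w5 ∧ ¬G.Adj w2 w5) (n35 : w3 ≠ w5 ∧ ¬G.Adj w3 w5) : False := by
  obtain ⟨e02, q02⟩ := n02; obtain ⟨e03, q03⟩ := n03; obtain ⟨e04, q04⟩ := n04
  obtain ⟨e05, q05⟩ := n05; obtain ⟨e13, q13⟩ := n13; obtain ⟨e14, q14⟩ := n14
  obtain ⟨e15, q15⟩ := n15; obtain ⟨e24, q24⟩ := n24; obtain ⟨e25, q25⟩ := n25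
  obtain ⟨e35, q35⟩ := n35
  apply hP6.false
  refine ⟨⟨![w0,w1,w2,w3,w4,w5], ?_⟩, ?_⟩
  · intro i j hij
    fin_cases i <;> fin_cases j <;>
      first
      | rfl
      | exact absurd hij (by
          first
          | exact a01.ne | exact a12.ne | exact a23.ne | exact a34.ne | exact a45.ne
          | exact a01.ne' | exact a12.ne' | exact a23.ne' | exact a34.ne' | exact a45.ne'
          | exact e02 | exact e03 | exact e04 | exact e05 | exact e13
          | exact e14 | exact e15 | exact e24 | exact e25 | exact e35
          | exact e02.symm | exact e03.symm | exact e04.symm | exact e05.symm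
          | exact e13.symm | exact e14.symm | exact e15.symm | exact e24.symm
          | exact e25.symm | exact e35.symm)
  · intro i j
    fin_cases i <;> fin_cases j <;>
      first
      | exact iff_of_true a01 (by rw [SimpleGraph.pathGraph_adj]; decide)
      | exact iff_of_true a12 (by rw [SimpleGraph.pathGraph_adj]; decide)
      | exact iff_of_true a23 (by rw [SimpleGraph.pathGraph_adj]; decide)
      | exact iff_of_true a34 (by rw [SimpleGraph.pathGraph_adj]; decide)
      | exact iff_of_true a45 (by rw [SimpleGraph.pathGraph_adj]; decide)
      | exact iff_of_true a01.symm (by rw [SimpleGraph.pathGraph_adj]; decide)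
      | exact iff_of_true a12.symm (by rw [SimpleGraph.pathGraph_adj]; decide)
      | exact iff_of_true a23.symm (by rw [SimpleGraph.pathGraph_adj]; decide)
      | exact iff_of_true a34.symm (by rw [SimpleGraph.pathGraph_adj]; decide)
      | exact iff_of_true a45.symm (by rw [SimpleGraph.pathGraph_adj]; decide)
      | exact iff_of_false (G.loopless.irrefl _) (by rw [SimpleGraph.pathGraph_adj]; decide)
      | exact iff_of_false q02 (by rw [SimpleGraph.pathGraph_adj]; decide)
      | exact iff_of_false q03 (by rw [SimpleGraph.pathGraph_adj]; decide)
      | exact iff_of_false q04 (by rw [SimpleGraph.pathGraph_adj]; decide)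
      | exact iff_of_false q05 (by rw [SimpleGraph.pathGraph_adj]; decide)
      | exact iff_of_false q13 (by rw [SimpleGraph.pathGraph_adj]; decide)
      | exact iff_of_false q14 (by rw [SimpleGraph.pathGraph_adj]; decide)
      | exact iff_of_false q15 (by rw [SimpleGraph.pathGraph_adj]; decide)
      | exact iff_of_false q24 (by rw [SimpleGraph.pathGraph_adj]; decide)
      | exact iff_of_false q25 (by rw [SimpleGraph.pathGraph_adj]; decide)
      | exact iff_of_false q35 (by rw [SimpleGraph.pathGraph_adj]; decide)
      | exact iff_of_false (fun h => q02 h.symm) (by rw [SimpleGraph.pathGraph_adj]; decide)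
      | exact iff_of_false (fun h => q03 h.symm) (by rw [SimpleGraph.pathGraph_adj]; decide)
      | exact iff_of_false (fun h => q04 h.symm) (by rw [SimpleGraph.pathGraph_adj]; decide)
      | exact iff_of_false (fun h => q05 h.symm) (by rw [SimpleGraph.pathGraph_adj]; decide)
      | exact iff_of_false (fun h => q13 h.symm) (by rw [SimpleGraph.pathGraph_adj]; decide)
      | exact iff_of_false (fun h => q14 h.symm) (by rw [SimpleGraph.pathGraph_adj]; decide)
      | exact iff_of_false (fun h => q15 h.symm) (by rw [SimpleGraph.pathGraph_adj]; decide)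
      | exact iff_of_false (fun h => q24 h.symm) (by rw [SimpleGraph.pathGraph_adj]; decide)
      | exact iff_of_false (fun h => q25 h.symm) (by rw [SimpleGraph.pathGraph_adj]; decide)
      | exact iff_of_false (fun h => q35 h.symm) (by rw [SimpleGraph.pathGraph_adj]; decide)

theorem path_case22_a_e_notin_D {V : Type*} [Fintype V] (G : SimpleGraph V)
    (hP6 : IsInducedFree (SimpleGraph.pathGraph 6) G)
    (hBanner : IsInducedFree banner G)
    (D : Set V) (hD : G.IsEfficientDominatingSet D)
    (v1 v2 v3 v4 v5 v6 : V)
    (h12 : G.edist v1 v2 ≤ 2) (h23 : G.edist v2 v3 ≤ 2) (h34 : G.edist v3 v4 ≤ 2)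
    (h45 : G.edist v4 v5 ≤ 2) (h56 : G.edist v5 v6 ≤ 2)
    (h13 : 3 ≤ G.edist v1 v3) (h14 : 3 ≤ G.edist v1 v4) (h15 : 3 ≤ G.edist v1 v5)
    (h16 : 3 ≤ G.edist v1 v6) (h24 : 3 ≤ G.edist v2 v4) (h25 : 3 ≤ G.edist v2 v5)
    (h26 : 3 ≤ G.edist v2 v6) (h35 : 3 ≤ G.edist v3 v5) (h36 : 3 ≤ G.edist v3 v6)
    (h46 : 3 ≤ G.edist v4 v6)
    (hdist12 : G.edist v1 v2 = 2) (hdist56 : G.edist v5 v6 = 2)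
    (a e b d c : V)
    (hav1 : G.Adj a v1) (hav2 : G.Adj a v2) (hev5 : G.Adj e v5) (hev6 : G.Adj e v6)
    (hbv2 : G.Adj b v2) (hbv3 : G.Adj b v3) (hdv4 : G.Adj d v4) (hdv5 : G.Adj d v5)
    (hcv3 : G.Adj c v3) (hcv4 : G.Adj c v4)
    (hab : G.Adj a b) (hbc : G.Adj b c) (hcd : G.Adj c d) (hde : G.Adj d e)
    (hbd : G.Adj b d) (had : G.Adj a d)
    : a ∉ D ∧ e ∉ D := by
  classical
  obtain ⟨hind, huniq⟩ := hD
  have far : ∀ {p q : V}, 3 ≤ G.edist p q → G.edist p q ≤ 2 → False := by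
    intro p q h h'
    have h3 : (3 : ℕ∞) ≤ 2 := le_trans h h'
    norm_num at h3
  have adj1 : ∀ {p q : V}, G.Adj p q → G.edist p q ≤ 2 := by
    intro p q h
    rw [(SimpleGraph.edist_eq_one_iff_adj).mpr h]
    norm_num
  have adj2 : ∀ {p q r : V}, G.Adj p q → G.Adj q r → G.edist p r ≤ 2 := by
    intro p q r h h'
    calc G.edist p r ≤ G.edist p q + G.edist q r := SimpleGraph.edist_triangle
      _ ≤ 1 + 1 := add_le_add ((SimpleGraph.edist_eq_one_iff_adj).mpr h).le
            ((SimpleGraph.edist_eq_one_iff_adj).mpr h').le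
      _ = 2 := by norm_num
  have farEq : ∀ {p q : V}, 3 ≤ G.edist p q → p ≠ q := by
    intro p q h h'
    subst h'
    rw [SimpleGraph.edist_self] at h
    norm_num at h
  have farNadj : ∀ {p q : V}, 3 ≤ G.edist p q → ¬ G.Adj p q := fun h h' => far h (adj1 h')
  have nadj12 : ¬ G.Adj v1 v2 := by
    intro h
    rw [(SimpleGraph.edist_eq_one_iff_adj).mpr h] at hdist12
    norm_num at hdist12
  -- Part 1 : a ∉ D
  have haD : a ∉ D := by
    intro haD
    have hbD : b ∉ D := fun h => hind a haD b h hab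
    have hdD : d ∉ D := fun h => hind a haD d h had
    have bU : ∀ z, z ∈ D → G.Adj b z → z = a := fun z hz hadj =>
      (huniq b hbD).unique ⟨hz, hadj⟩ ⟨haD, hab.symm⟩
    have dU : ∀ z, z ∈ D → G.Adj d z → z = a := fun z hz hadj =>
      (huniq d hdD).unique ⟨hz, hadj⟩ ⟨haD, had.symm⟩
    have hv3D : v3 ∉ D := by
      intro h
      have h3a := bU v3 h hbv3
      rw [h3a] at h13
      exact far h13 (adj1 hav1.symm)
    have hv5D : v5 ∉ D := by
      intro h
      have h5a := dU v5 h hdv5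
      rw [h5a] at h15
      exact far h15 (adj1 hav1.symm)
    obtain ⟨x, ⟨hxD, hxadj⟩, -⟩ := huniq v3 hv3D
    obtain ⟨y, ⟨hyD, hyadj⟩, -⟩ := huniq v5 hv5D
    have hxa : x ≠ a := by
      intro h; rw [h] at hxadj
      exact far h13 (adj2 hav1.symm hxadj.symm)
    have hya : y ≠ a := by
      intro h; rw [h] at hyadj
      exact far h15 (adj2 hav1.symm hyadj.symm)
    -- induced P6 : x - v3 - b - d - v5 - y
    exact no_p6_s12 hP6 hxadj.symm hbv3.symm hbd hdv5 hyadj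
      ⟨by rintro rfl; exact hbD hxD, fun h => hxa (bU x hxD h.symm)⟩
      ⟨by rintro rfl; exact hdD hxD, fun h => hxa (dU x hxD h.symm)⟩
      ⟨by rintro rfl; exact far h35 (adj1 hxadj), fun h => far h35 (adj2 hxadj h)⟩
      ⟨by rintro rfl; exact far h35 (adj2 hxadj hyadj.symm), hind x hxD y hyD⟩
      ⟨by rintro rfl; exact far h35 (adj1 hdv5), fun h => far h35 (adj2 h hdv5)⟩
      ⟨farEq h35, farNadj h35⟩
      ⟨by rintro rfl; exact far h35 (adj1 hyadj.symm), fun h => far h35 (adj2 h hyadj.symm)⟩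
      ⟨by rintro rfl; exact far h25 (adj1 hbv2.symm), fun h => far h25 (adj2 hbv2.symm h)⟩
      ⟨by rintro rfl; exact hbD hyD, fun h => hya (bU y hyD h)⟩
      ⟨by rintro rfl; exact hdD hyD, fun h => hya (dU y hyD h)⟩
  refine ⟨haD, ?_⟩
  -- Part 2 : e ∉ D
  intro heD
  have hdD : d ∉ D := fun h => hind d h e heD hde
  have dU : ∀ z, z ∈ D → G.Adj d z → z = e := fun z hz hadj =>
    (huniq d hdD).unique ⟨hz, hadj⟩ ⟨heD, hde⟩
  have hv6D : v6 ∉ D := fun h => hind e heD v6 h hev6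
  have v6U : ∀ z, z ∈ D → G.Adj v6 z → z = e := fun z hz hadj =>
    (huniq v6 hv6D).unique ⟨hz, hadj⟩ ⟨heD, hev6.symm⟩
  have hv1' : ∀ z, G.Adj z v1 → z ≠ e := by
    intro z hz h; rw [h] at hz
    exact far h16 (adj2 hz.symm hev6)
  have hv2' : ∀ z, G.Adj z v2 → z ≠ e := by
    intro z hz h; rw [h] at hz
    exact far h26 (adj2 hz.symm hev6)
  have hv4' : ∀ z, G.Adj z v4 → z ≠ e := by
    intro z hz h; rw [h] at hz
    exact far h46 (adj2 hz.symm hev6)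
  have hv4D : v4 ∉ D := by
    intro h
    have h4e := dU v4 h hdv4
    rw [h4e] at h46
    exact far h46 (adj1 hev6)
  have hbD : b ∉ D := fun h => hv2' b hbv2 (dU b h hbd.symm)
  have nBE : b ≠ e := hv2' b hbv2
  have nAE : a ≠ e := hv1' a hav1
  have nV2E : v2 ≠ e := by rintro rfl; exact far h26 (adj1 hev6)
  have pDV6 : d ≠ v6 ∧ ¬G.Adj d v6 :=
    ⟨by rintro rfl; exact far h46 (adj1 hdv4.symm), fun h => far h46 (adj2 hdv4.symm h)⟩
  have pV2D : v2 ≠ d ∧ ¬G.Adj v2 d :=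
    ⟨by rintro rfl; exact far h25 (adj1 hdv5), fun h => far h25 (adj2 h hdv5)⟩
  have pV2E : v2 ≠ e ∧ ¬G.Adj v2 e := ⟨nV2E, fun h => far h26 (adj2 h hev6)⟩
  have pV2V6 : v2 ≠ v6 ∧ ¬G.Adj v2 v6 := ⟨farEq h26, farNadj h26⟩
  have pBV6 : b ≠ v6 ∧ ¬G.Adj b v6 :=
    ⟨by rintro rfl; exact far h36 (adj1 hbv3.symm), fun h => far h36 (adj2 hbv3.symm h)⟩
  have pAV6 : a ≠ v6 ∧ ¬G.Adj a v6 :=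
    ⟨by rintro rfl; exact far h16 (adj1 hav1.symm), fun h => far h16 (adj2 hav1.symm h)⟩
  have pV1D : v1 ≠ d ∧ ¬G.Adj v1 d :=
    ⟨by rintro rfl; exact far h14 (adj1 hdv4), fun h => far h14 (adj2 h hdv4)⟩
  have pV1E : v1 ≠ e ∧ ¬G.Adj v1 e :=
    ⟨by rintro rfl; exact far h16 (adj1 hev6), fun h => far h16 (adj2 h hev6)⟩
  have pV1V6 : v1 ≠ v6 ∧ ¬G.Adj v1 v6 := ⟨farEq h16, farNadj h16⟩
  by_cases hae : G.Adj a e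
  · -- Case I : a adjacent to e; induced P6 : x4 - v4 - d - a - v2 - x2
    have aU : ∀ z, z ∈ D → G.Adj a z → z = e := fun z hz hadj =>
      (huniq a haD).unique ⟨hz, hadj⟩ ⟨heD, hae⟩
    have hv2D : v2 ∉ D := fun h => nV2E (aU v2 h hav2)
    obtain ⟨x4, ⟨hx4D, hx4adj⟩, -⟩ := huniq v4 hv4D
    obtain ⟨x2, ⟨hx2D, hx2adj⟩, -⟩ := huniq v2 hv2D
    have nx4e : x4 ≠ e := hv4' x4 hx4adj.symm
    have nx2e : x2 ≠ e := hv2' x2 hx2adj.symm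
    exact no_p6_s12 hP6 hx4adj.symm hdv4.symm had.symm hav2 hx2adj
      ⟨by rintro rfl; exact hdD hx4D, fun h => nx4e (dU x4 hx4D h.symm)⟩
      ⟨by rintro rfl; exact haD hx4D, fun h => nx4e (aU x4 hx4D h.symm)⟩
      ⟨by rintro rfl; exact far h24 (adj1 hx4adj.symm), fun h => far h24 (adj2 h.symm hx4adj.symm)⟩
      ⟨by rintro rfl; exact far h24 (adj2 hx2adj hx4adj.symm), hind x4 hx4D x2 hx2D⟩
      ⟨by rintro rfl; exact far h14 (adj1 hav1.symm), fun h => far h14 (adj2 hav1.symm h.symm)⟩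
      ⟨(farEq h24).symm, fun h => farNadj h24 h.symm⟩
      ⟨by rintro rfl; exact far h24 (adj1 hx2adj), fun h => far h24 (adj2 hx2adj h.symm)⟩
      ⟨pV2D.1.symm, fun h => pV2D.2 h.symm⟩
      ⟨by rintro rfl; exact hdD hx2D, fun h => nx2e (dU x2 hx2D h)⟩
      ⟨by rintro rfl; exact haD hx2D, fun h => nx2e (aU x2 hx2D h)⟩
  by_cases hbe : G.Adj b e
  · -- Case II : b adjacent to e; induced P6 : x4 - v4 - d - b - v2 - x2
    have bU : ∀ z, z ∈ D → G.Adj b z → z = e := fun z hz hadj =>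
      (huniq b hbD).unique ⟨hz, hadj⟩ ⟨heD, hbe⟩
    have hv2D : v2 ∉ D := fun h => nV2E (bU v2 h hbv2)
    obtain ⟨x4, ⟨hx4D, hx4adj⟩, -⟩ := huniq v4 hv4D
    obtain ⟨x2, ⟨hx2D, hx2adj⟩, -⟩ := huniq v2 hv2D
    have nx4e : x4 ≠ e := hv4' x4 hx4adj.symm
    have nx2e : x2 ≠ e := hv2' x2 hx2adj.symm
    exact no_p6_s12 hP6 hx4adj.symm hdv4.symm hbd.symm hbv2 hx2adj
      ⟨by rintro rfl; exact hdD hx4D, fun h => nx4e (dU x4 hx4D h.symm)⟩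
      ⟨by rintro rfl; exact hbD hx4D, fun h => nx4e (bU x4 hx4D h.symm)⟩
      ⟨by rintro rfl; exact far h24 (adj1 hx4adj.symm), fun h => far h24 (adj2 h.symm hx4adj.symm)⟩
      ⟨by rintro rfl; exact far h24 (adj2 hx2adj hx4adj.symm), hind x4 hx4D x2 hx2D⟩
      ⟨by rintro rfl; exact far h24 (adj1 hbv2.symm), fun h => far h24 (adj2 hbv2.symm h.symm)⟩
      ⟨(farEq h24).symm, fun h => farNadj h24 h.symm⟩
      ⟨by rintro rfl; exact far h24 (adj1 hx2adj), fun h => far h24 (adj2 hx2adj h.symm)⟩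
      ⟨pV2D.1.symm, fun h => pV2D.2 h.symm⟩
      ⟨by rintro rfl; exact hdD hx2D, fun h => nx2e (dU x2 hx2D h)⟩
      ⟨by rintro rfl; exact hbD hx2D, fun h => nx2e (bU x2 hx2D h)⟩
  -- Case III : a and b are both non-adjacent to e
  by_cases hv2D : v2 ∈ D
  · -- III-1 : v2 ∈ D; induced P6 : y1 - v1 - a - d - e - v6
    have aU2 : ∀ z, z ∈ D → G.Adj a z → z = v2 := fun z hz hadj =>
      (huniq a haD).unique ⟨hz, hadj⟩ ⟨hv2D, hav2⟩
    have ne12 : v1 ≠ v2 := by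
      intro h; rw [h, SimpleGraph.edist_self] at hdist12; norm_num at hdist12
    have hv1D : v1 ∉ D := fun h => ne12 (aU2 v1 h hav1)
    obtain ⟨y1, ⟨hy1D, hy1adj⟩, -⟩ := huniq v1 hv1D
    exact no_p6_s12 hP6 hy1adj.symm hav1.symm had hde hev6
      ⟨by rintro rfl; exact haD hy1D, fun h => by
          have h2 := aU2 y1 hy1D h.symm
          rw [h2] at hy1adj
          exact nadj12 hy1adj⟩
      ⟨by rintro rfl; exact hdD hy1D, fun h => hv1' y1 hy1adj.symm (dU y1 hy1D h.symm)⟩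
      ⟨hv1' y1 hy1adj.symm, hind y1 hy1D e heD⟩
      ⟨by rintro rfl; exact far h16 (adj1 hy1adj), fun h => hv1' y1 hy1adj.symm (v6U y1 hy1D h.symm)⟩
      pV1D pV1E pV1V6 ⟨nAE, hae⟩ pAV6 pDV6
  · -- III-2 : v2 ∉ D
    obtain ⟨x2, ⟨hx2D, hx2adj⟩, -⟩ := huniq v2 hv2D
    have nx2e : x2 ≠ e := hv2' x2 hx2adj.symm
    by_cases hx2b : G.Adj x2 b
    · by_cases hx2a : G.Adj x2 a
      · -- III-2b-alpha : x2 adjacent to both a and b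
        have aU : ∀ z, z ∈ D → G.Adj a z → z = x2 := fun z hz hadj =>
          (huniq a haD).unique ⟨hz, hadj⟩ ⟨hx2D, hx2a.symm⟩
        have hv1D : v1 ∉ D := by
          intro h
          have h1 := aU v1 h hav1
          rw [← h1] at hx2adj
          exact nadj12 hx2adj.symm
        obtain ⟨y1, ⟨hy1D, hy1adj⟩, -⟩ := huniq v1 hv1D
        by_cases hy1a : G.Adj y1 a
        · -- induced P6 : v6 - e - d - b - x2 - v1
          have hy1x2 : y1 = x2 := aU y1 hy1D hy1a.symm
          have hx2v1 : G.Adj x2 v1 := by rw [← hy1x2]; exact hy1adj.symm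
          exact no_p6_s12 hP6 hev6.symm hde.symm hbd.symm hx2b.symm hx2v1
            ⟨pDV6.1.symm, fun h => pDV6.2 h.symm⟩
            ⟨pBV6.1.symm, fun h => pBV6.2 h.symm⟩
            ⟨by rintro rfl; exact far h26 (adj1 hx2adj), fun h => nx2e (v6U x2 hx2D h)⟩
            ⟨pV1V6.1.symm, fun h => pV1V6.2 h.symm⟩
            ⟨nBE.symm, fun h => hbe h.symm⟩
            ⟨nx2e.symm, hind e heD x2 hx2D⟩
            ⟨pV1E.1.symm, fun h => pV1E.2 h.symm⟩
            ⟨by rintro rfl; exact hdD hx2D, fun h => nx2e (dU x2 hx2D h)⟩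
            ⟨pV1D.1.symm, fun h => pV1D.2 h.symm⟩
            ⟨by rintro rfl; exact far h13 (adj1 hbv3), fun h => far h13 (adj2 h.symm hbv3)⟩
        · -- induced P6 : y1 - v1 - a - d - e - v6
          exact no_p6_s12 hP6 hy1adj.symm hav1.symm had hde hev6
            ⟨by rintro rfl; exact haD hy1D, hy1a⟩
            ⟨by rintro rfl; exact hdD hy1D, fun h => hv1' y1 hy1adj.symm (dU y1 hy1D h.symm)⟩
            ⟨hv1' y1 hy1adj.symm, hind y1 hy1D e heD⟩
            ⟨by rintro rfl; exact far h16 (adj1 hy1adj),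
              fun h => hv1' y1 hy1adj.symm (v6U y1 hy1D h.symm)⟩
            pV1D pV1E pV1V6 ⟨nAE, hae⟩ pAV6 pDV6
      · -- III-2b-beta : induced P6 : x2 - v2 - a - d - e - v6
        exact no_p6_s12 hP6 hx2adj.symm hav2.symm had hde hev6
          ⟨by rintro rfl; exact haD hx2D, hx2a⟩
          ⟨by rintro rfl; exact hdD hx2D, fun h => nx2e (dU x2 hx2D h.symm)⟩
          ⟨nx2e, hind x2 hx2D e heD⟩
          ⟨by rintro rfl; exact far h26 (adj1 hx2adj), fun h => nx2e (v6U x2 hx2D h.symm)⟩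
          pV2D pV2E pV2V6 ⟨nAE, hae⟩ pAV6 pDV6
    · -- III-2a : induced P6 : x2 - v2 - b - d - e - v6
      exact no_p6_s12 hP6 hx2adj.symm hbv2.symm hbd hde hev6
        ⟨by rintro rfl; exact hbD hx2D, hx2b⟩
        ⟨by rintro rfl; exact hdD hx2D, fun h => nx2e (dU x2 hx2D h.symm)⟩
        ⟨nx2e, hind x2 hx2D e heD⟩
        ⟨by rintro rfl; exact far h26 (adj1 hx2adj), fun h => nx2e (v6U x2 hx2D h.symm)⟩
        pV2D pV2E pV2V6 ⟨nBE, hbe⟩ pBV6 pDV6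
end
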